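/- arXiv:1602.02381 — 13 statements merged into one kernel-verified Lean document; each statement's English description precedes it below -/
import Mathlib

section
/- Let σ ≥ 1 and let a, b be real numbers. If Q : ℝ → ℂ is a C² solution of the blow-up profile equation Q''(ξ) − Q(ξ) + i a ( Q(ξ)/(2σ) + ξ Q'(ξ) ) − i b Q'(ξ) + i |Q(ξ)|^{2σ} Q'(ξ) = 0, then Q satisfies the pointwise identity d/dξ ( |Q'(ξ)|² − |Q(ξ)|² ) + (a/σ) Im( conj(Q(ξ)) Q'(ξ) ) = 0 for all ξ ∈ ℝ (this identity is obtained by multiplying the equation by conj(Q') and taking real parts). -/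
lemma abs_sq_hasDerivAt {f : ℝ → ℂ} {f' : ℂ} {x : ℝ} (h : HasDerivAt f f' x) :
    HasDerivAt (fun y => ‖f y‖ ^ 2)
      (2 * ((starRingEnd ℂ) (f x) * f').re) x := by
  have hmul : HasDerivAt (fun y => (starRingEnd ℂ) (f y) * f y)
      ((starRingEnd ℂ) f' * f x + (starRingEnd ℂ) (f x) * f') x := h.star.mul h
  have hre : HasDerivAt (fun y => ((starRingEnd ℂ) (f y) * f y).re)
      (((starRingEnd ℂ) f' * f x + (starRingEnd ℂ) (f x) * f').re) x :=
    (Complex.reCLM.hasFDerivAt.comp_hasDerivAt x hmul)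
  have hfun : (fun y => ‖f y‖ ^ 2)
      = fun y => ((starRingEnd ℂ) (f y) * f y).re := by
    funext y
    simp only [Complex.sq_norm, Complex.normSq_apply, Complex.mul_re,
      Complex.conj_re, Complex.conj_im]
    ring
  have hval : ((starRingEnd ℂ) f' * f x + (starRingEnd ℂ) (f x) * f').re
      = 2 * ((starRingEnd ℂ) (f x) * f').re := by
    simp only [Complex.add_re, Complex.mul_re, Complex.conj_re, Complex.conj_im]
    ring
  rw [hfun, ← hval]
  exact hre

/-- **Pointwise identity for the blow-up profile.**
If `Q` is a `C²` solution of the blow-up profile equation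
`Q'' − Q + i a (Q/(2σ) + ξ Q') − i b Q' + i |Q|^{2σ} Q' = 0` with `σ ≥ 1`, then
`d/dξ (|Q'|² − |Q|²) + (a/σ) Im(conj(Q) Q') = 0` pointwise. -/
theorem blowup_profile_pointwise_identity (σ a b : ℝ) (hσ : 1 ≤ σ)
    (Q : ℝ → ℂ) (hQ : ContDiff ℝ 2 Q)
    (heq : ∀ ξ : ℝ,
      deriv (deriv Q) ξ - Q ξ
        + Complex.I * (a : ℂ) * (Q ξ / (2 * σ) + (ξ : ℂ) * deriv Q ξ)
        - Complex.I * (b : ℂ) * deriv Q ξ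
        + Complex.I * ((‖Q ξ‖ ^ (2 * σ) : ℝ) : ℂ) * deriv Q ξ = 0) :
    ∀ ξ : ℝ,
      deriv (fun y => ‖deriv Q y‖ ^ 2 - ‖Q y‖ ^ 2) ξ
        + (a / σ) * ((starRingEnd ℂ) (Q ξ) * deriv Q ξ).im = 0 := by
  intro ξ
  have hσ0 : σ ≠ 0 := by linarith
  have hQ1 : Differentiable ℝ Q := hQ.differentiable (by norm_num)
  have hQ' : ContDiff ℝ 1 (deriv Q) := by
    have := (contDiff_succ_iff_deriv (n := 1)).1 (by exact_mod_cast hQ)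
    exact this.2.2
  have hQ'diff : Differentiable ℝ (deriv Q) := hQ'.differentiable one_ne_zero
  have h1 : HasDerivAt Q (deriv Q ξ) ξ := (hQ1 ξ).hasDerivAt
  have h2 : HasDerivAt (deriv Q) (deriv (deriv Q) ξ) ξ := (hQ'diff ξ).hasDerivAt
  have hD : HasDerivAt (fun y => ‖deriv Q y‖ ^ 2 - ‖Q y‖ ^ 2)
      (2 * ((starRingEnd ℂ) (deriv Q ξ) * deriv (deriv Q) ξ).re
        - 2 * ((starRingEnd ℂ) (Q ξ) * deriv Q ξ).re) ξ :=
    (abs_sq_hasDerivAt h2).sub (abs_sq_hasDerivAt h1)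
  rw [hD.deriv]
  set z := Q ξ
  set w := deriv Q ξ
  set r : ℝ := ‖Q ξ‖ ^ (2 * σ)
  have hu : deriv (deriv Q) ξ
      = z - Complex.I * (a : ℂ) * (z / (2 * σ) + (ξ : ℂ) * w)
        + Complex.I * (b : ℂ) * w - Complex.I * (r : ℂ) * w := by
    linear_combination heq ξ
  rw [hu]
  have hz : z / (2 * (σ:ℂ)) = (((1/(2*σ)) : ℝ) : ℂ) * z := by
    have : (σ:ℂ) ≠ 0 := by exact_mod_cast hσ0
    push_cast
    field_simp
  rw [hz]
  simp only [Complex.sub_re, Complex.add_re, Complex.mul_re, Complex.mul_im,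
    Complex.add_im, Complex.sub_im, Complex.div_re, Complex.div_im, Complex.normSq_apply,
    Complex.I_re, Complex.I_im, Complex.ofReal_re, Complex.ofReal_im,
    Complex.conj_re, Complex.conj_im]
  field_simp
  ring
end

section
/- Let σ ≥ 1 and a, b ∈ ℝ, and let Q : ℝ → ℂ be a bounded C² solution of the blow-up profile equation Q''(ξ) − Q(ξ) + i a ( Q(ξ)/(2σ) + ξ Q'(ξ) ) − i b Q'(ξ) + i |Q(ξ)|^{2σ} Q'(ξ) = 0, such that Q' ∈ L²(ℝ), the functions ξ ↦ ξ |Q'(ξ)|², ξ ↦ conj(Q(ξ)) Q''(ξ), and ξ ↦ |Q(ξ)|^{2σ} Re( Q''(ξ) conj(Q'(ξ)) ) are integrable, and Q(ξ) → 0, Q'(ξ) → 0, ξ |Q'(ξ)|² → 0 as ξ → ±∞. Then (a(σ+1)/(2σ)) ∫_ℝ |Q'(ξ)|² dξ = ∫_ℝ |Q(ξ)|^{2σ} Re( Q''(ξ) conj(Q'(ξ)) ) dξ. -/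
open MeasureTheory Filter

lemma blowup_aux (σ a b ξ p : ℝ) (hσ : 1 ≤ σ) (q q1 q2 : ℂ)
    (h : q2 - q + Complex.I * (a:ℂ) * (q / (2*σ) + (ξ:ℂ)*q1) - Complex.I*(b:ℂ)*q1
        + Complex.I*(p:ℂ)*q1 = 0) :
    (q1 * (starRingEnd ℂ) q1 + q * (starRingEnd ℂ) q2).im
      - (a/(2*σ)) * (q1 * (starRingEnd ℂ) q1 + q * (starRingEnd ℂ) q2).re
      - (a/2) * ((q1 * (starRingEnd ℂ) q1).re
          + ξ * (q2 * (starRingEnd ℂ) q1 + q1 * (starRingEnd ℂ) q2).re)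
      + (b/2) * (q2 * (starRingEnd ℂ) q1 + q1 * (starRingEnd ℂ) q2).re
    = p * (q2 * (starRingEnd ℂ) q1).re - (a*(σ+1)/(2*σ)) * (q1 * (starRingEnd ℂ) q1).re := by
  have hσ0 : (σ:ℝ) ≠ 0 := by linarith
  have hdiv : q / (2*(σ:ℂ)) = (((1/(2*σ) : ℝ)) : ℂ) * q := by
    push_cast; field_simp
  have hq2 : q2 = q - Complex.I*(a:ℂ)*((((1/(2*σ):ℝ)):ℂ)*q + (ξ:ℂ)*q1)
      + Complex.I*(b:ℂ)*q1 - Complex.I*(p:ℂ)*q1 := by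
    rw [← hdiv]; linear_combination h
  rw [hq2]
  simp only [Complex.mul_re, Complex.mul_im, Complex.add_re, Complex.add_im, Complex.sub_re,
    Complex.sub_im, Complex.I_re, Complex.I_im, Complex.ofReal_re, Complex.ofReal_im,
    Complex.conj_re, Complex.conj_im]
  field_simp
  ring

/-- **An integral identity for the blow-up profile.**
For a bounded `C²` solution `Q` of the blow-up profile equation with `σ ≥ 1`, `Q' ∈ L²`,
suitable integrability, and decay `Q, Q', ξ|Q'|² → 0` at `±∞`, one has
`(a(σ+1)/(2σ)) ∫ |Q'|² = ∫ |Q|^{2σ} Re(Q'' conj(Q'))`. -/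
theorem blowup_profile_integral_identity (σ a b : ℝ) (hσ : 1 ≤ σ)
    (Q : ℝ → ℂ) (hQ : ContDiff ℝ 2 Q)
    (hbdd : ∃ C : ℝ, ∀ ξ : ℝ, ‖Q ξ‖ ≤ C)
    (heq : ∀ ξ : ℝ,
      deriv (deriv Q) ξ - Q ξ
        + Complex.I * (a : ℂ) * (Q ξ / (2 * σ) + (ξ : ℂ) * deriv Q ξ)
        - Complex.I * (b : ℂ) * deriv Q ξ
        + Complex.I * (((‖Q ξ‖) ^ (2 * σ) : ℝ) : ℂ) * deriv Q ξ = 0)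
    (hQ'L2 : MemLp (deriv Q) 2 volume)
    (hint1 : Integrable (fun ξ : ℝ => ξ * (‖deriv Q ξ‖) ^ 2))
    (hint2 : Integrable (fun ξ : ℝ => (starRingEnd ℂ) (Q ξ) * deriv (deriv Q) ξ))
    (hint3 : Integrable (fun ξ : ℝ =>
      (‖Q ξ‖) ^ (2 * σ) * (deriv (deriv Q) ξ * (starRingEnd ℂ) (deriv Q ξ)).re))
    (hQ_top : Tendsto Q atTop (nhds 0)) (hQ_bot : Tendsto Q atBot (nhds 0))
    (hQ'_top : Tendsto (deriv Q) atTop (nhds 0)) (hQ'_bot : Tendsto (deriv Q) atBot (nhds 0))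
    (hxQ'_top : Tendsto (fun ξ : ℝ => ξ * (‖deriv Q ξ‖) ^ 2) atTop (nhds 0))
    (hxQ'_bot : Tendsto (fun ξ : ℝ => ξ * (‖deriv Q ξ‖) ^ 2) atBot (nhds 0)) :
    (a * (σ + 1) / (2 * σ)) * (∫ ξ : ℝ, (‖deriv Q ξ‖) ^ 2)
      = ∫ ξ : ℝ, (‖Q ξ‖) ^ (2 * σ) *
          (deriv (deriv Q) ξ * (starRingEnd ℂ) (deriv Q ξ)).re := by
  -- notation
  set c : ℝ := a * (σ + 1) / (2 * σ) with hc
  -- differentiability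
  have hQd : Differentiable ℝ Q := hQ.differentiable (by norm_num)
  have hQ'c : ContDiff ℝ 1 (deriv Q) := by
    have h2 : ContDiff ℝ (1 + 1 : ℕ) Q := by norm_num; exact hQ
    exact (contDiff_succ_iff_deriv.mp (by exact_mod_cast h2)).2.2
  have hQ'd : Differentiable ℝ (deriv Q) := hQ'c.differentiable one_ne_zero
  -- the auxiliary function g
  set g : ℝ → ℝ := fun x =>
    (Q x * (starRingEnd ℂ) (deriv Q x)).im
      - (a/(2*σ)) * (Q x * (starRingEnd ℂ) (deriv Q x)).re
      - (a/2) * (x * (deriv Q x * (starRingEnd ℂ) (deriv Q x)).re)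
      + (b/2) * (deriv Q x * (starRingEnd ℂ) (deriv Q x)).re with hgdef
  set g' : ℝ → ℝ := fun x =>
    (‖Q x‖) ^ (2 * σ) * (deriv (deriv Q) x * (starRingEnd ℂ) (deriv Q x)).re
      - c * (‖deriv Q x‖) ^ 2 with hg'def
  have habs : ∀ z : ℂ, (z * (starRingEnd ℂ) z).re = ‖z‖ ^ 2 := by
    intro z; rw [Complex.mul_conj]; simp [Complex.sq_norm]
  -- g has derivative g'
  have hg : ∀ x : ℝ, HasDerivAt g (g' x) x := by
    intro x
    have d1 : HasDerivAt Q (deriv Q x) x := (hQd x).hasDerivAt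
    have d2 : HasDerivAt (deriv Q) (deriv (deriv Q) x) x := (hQ'd x).hasDerivAt
    have d2c : HasDerivAt (fun y => (starRingEnd ℂ) (deriv Q y))
        ((starRingEnd ℂ) (deriv (deriv Q) x)) x := d2.star
    have m1 : HasDerivAt (fun y => Q y * (starRingEnd ℂ) (deriv Q y))
        (deriv Q x * (starRingEnd ℂ) (deriv Q x)
          + Q x * (starRingEnd ℂ) (deriv (deriv Q) x)) x := d1.mul d2c
    have m2 : HasDerivAt (fun y => deriv Q y * (starRingEnd ℂ) (deriv Q y))
        (deriv (deriv Q) x * (starRingEnd ℂ) (deriv Q x)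
          + deriv Q x * (starRingEnd ℂ) (deriv (deriv Q) x)) x := d2.mul d2c
    have m1im := Complex.imCLM.hasFDerivAt.comp_hasDerivAt x m1
    have m1re := Complex.reCLM.hasFDerivAt.comp_hasDerivAt x m1
    have m2re := Complex.reCLM.hasFDerivAt.comp_hasDerivAt x m2
    have mx : HasDerivAt (fun y : ℝ => y * (deriv Q y * (starRingEnd ℂ) (deriv Q y)).re)
        ((deriv Q x * (starRingEnd ℂ) (deriv Q x)).re
          + x * (deriv (deriv Q) x * (starRingEnd ℂ) (deriv Q x)
              + deriv Q x * (starRingEnd ℂ) (deriv (deriv Q) x)).re) x := by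
      simpa [one_mul, Function.comp_def, Pi.mul_def] using (hasDerivAt_id x).mul m2re
    have hder : HasDerivAt g
        ((deriv Q x * (starRingEnd ℂ) (deriv Q x)
            + Q x * (starRingEnd ℂ) (deriv (deriv Q) x)).im
          - (a/(2*σ)) * (deriv Q x * (starRingEnd ℂ) (deriv Q x)
            + Q x * (starRingEnd ℂ) (deriv (deriv Q) x)).re
          - (a/2) * ((deriv Q x * (starRingEnd ℂ) (deriv Q x)).re
            + x * (deriv (deriv Q) x * (starRingEnd ℂ) (deriv Q x)
                + deriv Q x * (starRingEnd ℂ) (deriv (deriv Q) x)).re)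
          + (b/2) * (deriv (deriv Q) x * (starRingEnd ℂ) (deriv Q x)
              + deriv Q x * (starRingEnd ℂ) (deriv (deriv Q) x)).re) x := by
      exact ((m1im.sub (m1re.const_mul (a/(2*σ)))).sub (mx.const_mul (a/2))).add
        (m2re.const_mul (b/2))
    have key := blowup_aux σ a b x ((‖Q x‖) ^ (2 * σ)) hσ
      (Q x) (deriv Q x) (deriv (deriv Q) x) (heq x)
    rw [hg'def]
    simp only
    rw [← habs (deriv Q x), ← key]
    exact hder
  -- integrability of |Q'|^2
  have Iv : Integrable (fun x : ℝ => (‖deriv Q x‖) ^ 2) := by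
    have := (memLp_two_iff_integrable_sq_norm hQ'L2.aestronglyMeasurable).mp hQ'L2
    simpa using this
  have Ig' : Integrable g' := by
    rw [hg'def]
    exact hint3.sub (Iv.const_mul c)
  -- limits of g at ±∞
  have habs2_top : Tendsto (fun x : ℝ => (‖deriv Q x‖) ^ 2) atTop (nhds 0) := by
    have : Tendsto (fun z : ℂ => ‖z‖ ^ 2) (nhds 0) (nhds 0) := by
      have : Continuous fun z : ℂ => ‖z‖ ^ 2 := by continuity
      simpa using this.tendsto 0
    exact this.comp hQ'_top
  have habs2_bot : Tendsto (fun x : ℝ => (‖deriv Q x‖) ^ 2) atBot (nhds 0) := by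
    have : Tendsto (fun z : ℂ => ‖z‖ ^ 2) (nhds 0) (nhds 0) := by
      have : Continuous fun z : ℂ => ‖z‖ ^ 2 := by continuity
      simpa using this.tendsto 0
    exact this.comp hQ'_bot
  have hprod_top : Tendsto (fun x : ℝ => Q x * (starRingEnd ℂ) (deriv Q x)) atTop (nhds 0) := by
    have hconj : Tendsto (fun x : ℝ => (starRingEnd ℂ) (deriv Q x)) atTop (nhds 0) := by
      have : Continuous (starRingEnd ℂ) := Complex.continuous_conj
      simpa [Function.comp_def] using (this.tendsto 0).comp hQ'_top
    simpa using hQ_top.mul hconj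
  have hprod_bot : Tendsto (fun x : ℝ => Q x * (starRingEnd ℂ) (deriv Q x)) atBot (nhds 0) := by
    have hconj : Tendsto (fun x : ℝ => (starRingEnd ℂ) (deriv Q x)) atBot (nhds 0) := by
      have : Continuous (starRingEnd ℂ) := Complex.continuous_conj
      simpa [Function.comp_def] using (this.tendsto 0).comp hQ'_bot
    simpa using hQ_bot.mul hconj
  have hg_top : Tendsto g atTop (nhds 0) := by
    have h1 : Tendsto (fun x : ℝ => (Q x * (starRingEnd ℂ) (deriv Q x)).im) atTop (nhds 0) :=
      (Complex.continuous_im.tendsto' 0 0 rfl).comp hprod_top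
    have h2 : Tendsto (fun x : ℝ => (Q x * (starRingEnd ℂ) (deriv Q x)).re) atTop (nhds 0) :=
      (Complex.continuous_re.tendsto' 0 0 rfl).comp hprod_top
    have h3 : Tendsto (fun x : ℝ => x * (deriv Q x * (starRingEnd ℂ) (deriv Q x)).re)
        atTop (nhds 0) := by
      have : (fun x : ℝ => x * (deriv Q x * (starRingEnd ℂ) (deriv Q x)).re)
          = fun x : ℝ => x * (‖deriv Q x‖) ^ 2 := by
        funext x; rw [habs]
      rw [this]; exact hxQ'_top
    have h4 : Tendsto (fun x : ℝ => (deriv Q x * (starRingEnd ℂ) (deriv Q x)).re)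
        atTop (nhds 0) := by
      have : (fun x : ℝ => (deriv Q x * (starRingEnd ℂ) (deriv Q x)).re)
          = fun x : ℝ => (‖deriv Q x‖) ^ 2 := by
        funext x; rw [habs]
      rw [this]; exact habs2_top
    have hlim := ((h1.sub (h2.const_mul (a/(2*σ)))).sub (h3.const_mul (a/2))).add
      (h4.const_mul (b/2))
    simp only [mul_zero, sub_zero, add_zero, zero_sub, neg_zero] at hlim
    exact hlim
  have hg_bot : Tendsto g atBot (nhds 0) := by
    have h1 : Tendsto (fun x : ℝ => (Q x * (starRingEnd ℂ) (deriv Q x)).im) atBot (nhds 0) :=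
      (Complex.continuous_im.tendsto' 0 0 rfl).comp hprod_bot
    have h2 : Tendsto (fun x : ℝ => (Q x * (starRingEnd ℂ) (deriv Q x)).re) atBot (nhds 0) :=
      (Complex.continuous_re.tendsto' 0 0 rfl).comp hprod_bot
    have h3 : Tendsto (fun x : ℝ => x * (deriv Q x * (starRingEnd ℂ) (deriv Q x)).re)
        atBot (nhds 0) := by
      have : (fun x : ℝ => x * (deriv Q x * (starRingEnd ℂ) (deriv Q x)).re)
          = fun x : ℝ => x * (‖deriv Q x‖) ^ 2 := by
        funext x; rw [habs]
      rw [this]; exact hxQ'_bot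
    have h4 : Tendsto (fun x : ℝ => (deriv Q x * (starRingEnd ℂ) (deriv Q x)).re)
        atBot (nhds 0) := by
      have : (fun x : ℝ => (deriv Q x * (starRingEnd ℂ) (deriv Q x)).re)
          = fun x : ℝ => (‖deriv Q x‖) ^ 2 := by
        funext x; rw [habs]
      rw [this]; exact habs2_bot
    have hlim := ((h1.sub (h2.const_mul (a/(2*σ)))).sub (h3.const_mul (a/2))).add
      (h4.const_mul (b/2))
    simp only [mul_zero, sub_zero, add_zero, zero_sub, neg_zero] at hlim
    exact hlim
  -- fundamental theorem of calculus on both halves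
  have hIoi : ∫ x in Set.Ioi (0:ℝ), g' x = 0 - g 0 :=
    integral_Ioi_of_hasDerivAt_of_tendsto' (fun x _ => hg x) Ig'.integrableOn hg_top
  have hIic : ∫ x in Set.Iic (0:ℝ), g' x = g 0 - 0 :=
    integral_Iic_of_hasDerivAt_of_tendsto' (fun x _ => hg x) Ig'.integrableOn hg_bot
  have htot : ∫ x : ℝ, g' x = 0 := by
    rw [← intervalIntegral.integral_Iic_add_Ioi Ig'.integrableOn Ig'.integrableOn, hIoi, hIic]; ring
  rw [hg'def] at htot
  rw [integral_sub hint3 (Iv.const_mul c), integral_const_mul] at htot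
  linarith
end

section
/- Let σ ≥ 1, a > 0, b ∈ ℝ, and let Q : ℝ → ℂ be a bounded C² solution of the blow-up profile equation Q''(ξ) − Q(ξ) + i a ( Q(ξ)/(2σ) + ξ Q'(ξ) ) − i b Q'(ξ) + i |Q(ξ)|^{2σ} Q'(ξ) = 0, such that Q' ∈ L²(ℝ), Q ∈ L^{4σ+2}(ℝ), the functions ξ ↦ ξ |Q'(ξ)|², ξ ↦ conj(Q(ξ)) Q''(ξ), and ξ ↦ |Q(ξ)|^{2σ} Re( Q''(ξ) conj(Q'(ξ)) ) are integrable, and Q(ξ) → 0, Q'(ξ) → 0, ξ |Q'(ξ)|² → 0 as ξ → ±∞. Then the energy of Q vanishes: ∫_ℝ ( |Q'(ξ)|² + (1/(σ+1)) |Q(ξ)|^{2σ} Im( conj(Q(ξ)) Q'(ξ) ) ) dξ = 0. -/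
open MeasureTheory Filter

/-- FTC on the whole line: integral of an integrable derivative of a function
vanishing at both ends is zero. -/
lemma ftc_zero {E : Type*} [NormedAddCommGroup E] [NormedSpace ℝ E] [CompleteSpace E]
    {f f' : ℝ → E} (h : ∀ x, HasDerivAt f (f' x) x) (hi : Integrable f')
    (hb : Tendsto f atBot (nhds 0)) (ht : Tendsto f atTop (nhds 0)) :
    ∫ x, f' x = 0 := by
  simpa using MeasureTheory.integral_of_hasDerivAt_of_tendsto h hi hb ht

/-- Derivative of `normSq ∘ f` for `f : ℝ → ℂ`. -/
lemma hasDerivAt_normSq_comp {f : ℝ → ℂ} {f' : ℂ} {x : ℝ} (hf : HasDerivAt f f' x) :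
    HasDerivAt (fun t => Complex.normSq (f t))
      (2 * ((starRingEnd ℂ) (f x) * f').re) x := by
  have hre : HasDerivAt (fun t => (f t).re) f'.re x :=
    Complex.reCLM.hasFDerivAt.comp_hasDerivAt x hf
  have him : HasDerivAt (fun t => (f t).im) f'.im x :=
    Complex.imCLM.hasFDerivAt.comp_hasDerivAt x hf
  have h := (hre.mul hre).add (him.mul him)
  have hfun : (fun t => Complex.normSq (f t))
      = fun t => (f t).re * (f t).re + (f t).im * (f t).im := by
    funext t; exact Complex.normSq_apply _
  have hval : f'.re * (f x).re + (f x).re * f'.re + (f'.im * (f x).im + (f x).im * f'.im)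
      = 2 * ((starRingEnd ℂ) (f x) * f').re := by
    simp [Complex.mul_re]
    ring
  rw [hfun, ← hval]
  exact h

/-- Derivative of the real part of a product `conj f * g`. -/
lemma hasDerivAt_conj_mul_re {f g : ℝ → ℂ} {f' g' : ℂ} {x : ℝ}
    (hf : HasDerivAt f f' x) (hg : HasDerivAt g g' x) :
    HasDerivAt (fun t => ((starRingEnd ℂ) (f t) * g t).re)
      (((starRingEnd ℂ) f' * g x).re + ((starRingEnd ℂ) (f x) * g').re) x := by
  have hc : HasDerivAt (fun t => (starRingEnd ℂ) (f t)) ((starRingEnd ℂ) f') x := by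
    simp only [starRingEnd_apply]
    exact hf.star
  have h := (hc.mul hg)
  exact Complex.reCLM.hasFDerivAt.comp_hasDerivAt x h

/-- Derivative of the imaginary part of a product `conj f * g`. -/
lemma hasDerivAt_conj_mul_im {f g : ℝ → ℂ} {f' g' : ℂ} {x : ℝ}
    (hf : HasDerivAt f f' x) (hg : HasDerivAt g g' x) :
    HasDerivAt (fun t => ((starRingEnd ℂ) (f t) * g t).im)
      (((starRingEnd ℂ) f' * g x).im + ((starRingEnd ℂ) (f x) * g').im) x := by
  have hc : HasDerivAt (fun t => (starRingEnd ℂ) (f t)) ((starRingEnd ℂ) f') x := by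
    simp only [starRingEnd_apply]
    exact hf.star
  have h := (hc.mul hg)
  exact Complex.imCLM.hasFDerivAt.comp_hasDerivAt x h

/-- **Zero energy of the blow-up profile.**
For a bounded `C²` solution `Q` of the blow-up profile equation with `σ ≥ 1`, `a > 0`,
`Q' ∈ L²`, `Q ∈ L^{4σ+2}`, suitable integrability, and decay at `±∞`, the energy vanishes:
`∫ (|Q'|² + (1/(σ+1)) |Q|^{2σ} Im(conj(Q) Q')) = 0`. -/
theorem blowup_profile_zero_energy (σ a b : ℝ) (hσ : 1 ≤ σ) (ha : 0 < a)
    (Q : ℝ → ℂ) (hQ : ContDiff ℝ 2 Q)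
    (hbdd : ∃ C : ℝ, ∀ ξ : ℝ, ‖Q ξ‖ ≤ C)
    (heq : ∀ ξ : ℝ,
      deriv (deriv Q) ξ - Q ξ
        + Complex.I * (a : ℂ) * (Q ξ / (2 * σ) + (ξ : ℂ) * deriv Q ξ)
        - Complex.I * (b : ℂ) * deriv Q ξ
        + Complex.I * (((‖Q ξ‖) ^ (2 * σ) : ℝ) : ℂ) * deriv Q ξ = 0)
    (hQ'L2 : MemLp (deriv Q) 2 volume)
    (hQLp : MemLp Q (ENNReal.ofReal (4 * σ + 2)) volume)
    (hint1 : Integrable (fun ξ : ℝ => ξ * (‖deriv Q ξ‖) ^ 2))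
    (hint2 : Integrable (fun ξ : ℝ => (starRingEnd ℂ) (Q ξ) * deriv (deriv Q) ξ))
    (hint3 : Integrable (fun ξ : ℝ =>
      (‖Q ξ‖) ^ (2 * σ) * (deriv (deriv Q) ξ * (starRingEnd ℂ) (deriv Q ξ)).re))
    (hQ_top : Tendsto Q atTop (nhds 0)) (hQ_bot : Tendsto Q atBot (nhds 0))
    (hQ'_top : Tendsto (deriv Q) atTop (nhds 0)) (hQ'_bot : Tendsto (deriv Q) atBot (nhds 0))
    (hxQ'_top : Tendsto (fun ξ : ℝ => ξ * (‖deriv Q ξ‖) ^ 2) atTop (nhds 0))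
    (hxQ'_bot : Tendsto (fun ξ : ℝ => ξ * (‖deriv Q ξ‖) ^ 2) atBot (nhds 0)) :
    ∫ ξ : ℝ, ((‖deriv Q ξ‖) ^ 2
      + (1 / (σ + 1)) * (‖Q ξ‖) ^ (2 * σ) *
          ((starRingEnd ℂ) (Q ξ) * deriv Q ξ).im) = 0 := by
  have hσ0 : (0:ℝ) < σ := by linarith
  set p : ℝ → ℂ := deriv Q with hp
  set r : ℝ → ℂ := deriv (deriv Q) with hr
  set c0 : ℝ := 1 / (2 * σ) with hc0
  -- differentiability structure
  have h2 : ContDiff ℝ ((1 : ℕ) + 1) Q := by exact_mod_cast hQ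
  obtain ⟨hQd, -, hQ'cd⟩ := contDiff_succ_iff_deriv.mp h2
  have hd1 : ∀ ξ, HasDerivAt Q (p ξ) ξ := fun ξ => (hQd ξ).hasDerivAt
  have hd2 : ∀ ξ, HasDerivAt p (r ξ) ξ :=
    fun ξ => ((hQ'cd.differentiable (by norm_num)) ξ).hasDerivAt
  have hcQ : Continuous Q := hQ.continuous
  have hcp : Continuous p := hQ'cd.continuous
  have hcr : Continuous r := (contDiff_one_iff_deriv.mp hQ'cd).2
  have hcn : Continuous (fun ξ => ‖Q ξ‖ ^ (2*σ)) :=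
    (continuous_norm.comp hcQ).rpow_const (fun x => Or.inr (by positivity))
  -- solve the ODE for r
  have key : ∀ ξ : ℝ, r ξ = Q ξ - Complex.I*(a:ℂ)*((c0:ℝ):ℂ)*Q ξ - Complex.I*(a:ℂ)*(ξ:ℂ)*p ξ
      + Complex.I*(b:ℂ)*p ξ - Complex.I*((‖Q ξ‖ ^ (2*σ) : ℝ):ℂ)*p ξ := by
    intro ξ
    have h := heq ξ
    have hdiv : Q ξ / (2 * (σ:ℂ)) - ((c0:ℝ):ℂ) * Q ξ = 0 := by
      rw [hc0]
      push_cast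
      ring
    linear_combination h - Complex.I*(a:ℂ)*hdiv
  -- components of r
  have hr_re : ∀ ξ : ℝ, (r ξ).re = (Q ξ).re + a*c0*(Q ξ).im + a*ξ*(p ξ).im - b*(p ξ).im
      + (‖Q ξ‖ ^ (2*σ))*(p ξ).im := by
    intro ξ
    rw [key ξ]
    simp only [Complex.add_re, Complex.add_im, Complex.sub_re, Complex.sub_im,
      Complex.mul_re, Complex.mul_im, Complex.I_re, Complex.I_im,
      Complex.ofReal_re, Complex.ofReal_im]
    ring
  have hr_im : ∀ ξ : ℝ, (r ξ).im = (Q ξ).im - a*c0*(Q ξ).re - a*ξ*(p ξ).re + b*(p ξ).re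
      - (‖Q ξ‖ ^ (2*σ))*(p ξ).re := by
    intro ξ
    rw [key ξ]
    simp only [Complex.add_re, Complex.add_im, Complex.sub_re, Complex.sub_im,
      Complex.mul_re, Complex.mul_im, Complex.I_re, Complex.I_im,
      Complex.ofReal_re, Complex.ofReal_im]
    ring
  -- pointwise identities
  have P1 : ∀ ξ : ℝ, ((starRingEnd ℂ) (Q ξ) * p ξ).re
      = ((starRingEnd ℂ) (p ξ) * r ξ).re + a*c0*((starRingEnd ℂ) (Q ξ) * p ξ).im := by
    intro ξ
    simp only [Complex.mul_re, Complex.mul_im, Complex.conj_re, Complex.conj_im]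
    rw [hr_re ξ, hr_im ξ]
    ring
  have P2 : ∀ ξ : ℝ, ((starRingEnd ℂ) (Q ξ) * r ξ).im
      + a*c0*((starRingEnd ℂ) (Q ξ) * r ξ).re
      + (a*ξ-b)*((starRingEnd ℂ) (p ξ) * r ξ).re
      + (‖Q ξ‖ ^ (2*σ)) * ((starRingEnd ℂ) (p ξ) * r ξ).re = 0 := by
    intro ξ
    simp only [Complex.mul_re, Complex.mul_im, Complex.conj_re, Complex.conj_im]
    rw [hr_re ξ, hr_im ξ]
    ring
  -- integrability facts
  have J1int : Integrable (fun ξ : ℝ => ‖p ξ‖ ^ 2) := by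
    have h := hQ'L2.integrable_norm_rpow (by norm_num) (by norm_num)
    have he : ((2 : ENNReal)).toReal = ((2:ℕ):ℝ) := by norm_num
    simpa [he, Real.rpow_natCast] using h
  have hQ4 : Integrable (fun ξ : ℝ => ‖Q ξ‖ ^ (4*σ+2)) := by
    have h1 : ENNReal.ofReal (4*σ+2) ≠ 0 :=
      ne_of_gt (ENNReal.ofReal_pos.mpr (by linarith))
    have h := hQLp.integrable_norm_rpow h1 ENNReal.ofReal_ne_top
    simpa [ENNReal.toReal_ofReal (by linarith : (0:ℝ) ≤ 4*σ+2),
      ] using h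
  have hNIm : Integrable
      (fun ξ : ℝ => ‖Q ξ‖ ^ (2*σ) * ((starRingEnd ℂ) (Q ξ) * p ξ).im) := by
    have hmeas : Continuous
        (fun ξ : ℝ => ‖Q ξ‖ ^ (2*σ) * ((starRingEnd ℂ) (Q ξ) * p ξ).im) :=
      hcn.mul (Complex.continuous_im.comp ((Complex.continuous_conj.comp hcQ).mul hcp))
    refine Integrable.mono' ((hQ4.add J1int).const_mul (1/2))
      hmeas.aestronglyMeasurable (Eventually.of_forall fun ξ => ?_)
    have h1 : |((starRingEnd ℂ) (Q ξ) * p ξ).im| ≤ ‖Q ξ‖ * ‖p ξ‖ := by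
      calc |((starRingEnd ℂ) (Q ξ) * p ξ).im| ≤ ‖(starRingEnd ℂ) (Q ξ) * p ξ‖ :=
            Complex.abs_im_le_norm _
        _ = ‖Q ξ‖ * ‖p ξ‖ := by
            rw [norm_mul, Complex.norm_conj]
    have hq0 : (0:ℝ) ≤ ‖Q ξ‖ := norm_nonneg _
    have hn0 : (0:ℝ) ≤ ‖Q ξ‖ ^ (2*σ) := Real.rpow_nonneg hq0 _
    have h2 : ‖Q ξ‖ ^ (2*σ) * ‖Q ξ‖
        = ‖Q ξ‖ ^ (2*σ+1) := by
      rw [Real.rpow_add' hq0 (by linarith)]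
      rw [Real.rpow_one]
    have h3 : (‖Q ξ‖ ^ (2*σ+1))^2 = ‖Q ξ‖ ^ (4*σ+2) := by
      rw [← Real.rpow_natCast (‖Q ξ‖ ^ (2*σ+1)) 2, ← Real.rpow_mul hq0]
      congr 1
      push_cast
      ring
    have h4 : ‖‖Q ξ‖ ^ (2*σ) * ((starRingEnd ℂ) (Q ξ) * p ξ).im‖
        = ‖Q ξ‖ ^ (2*σ) * |((starRingEnd ℂ) (Q ξ) * p ξ).im| := by
      rw [Real.norm_eq_abs, abs_mul, abs_of_nonneg hn0]
    rw [h4]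
    have h5 : ‖Q ξ‖ ^ (2*σ) * |((starRingEnd ℂ) (Q ξ) * p ξ).im|
        ≤ ‖Q ξ‖ ^ (2*σ+1) * ‖p ξ‖ := by
      calc ‖Q ξ‖ ^ (2*σ) * |((starRingEnd ℂ) (Q ξ) * p ξ).im|
          ≤ ‖Q ξ‖ ^ (2*σ) * (‖Q ξ‖ * ‖p ξ‖) :=
            mul_le_mul_of_nonneg_left h1 hn0
      _ = ‖Q ξ‖ ^ (2*σ+1) * ‖p ξ‖ := by rw [← h2]; ring
    refine h5.trans ?_
    simp only [Pi.add_apply]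
    have := sq_nonneg (‖Q ξ‖ ^ (2*σ+1) - ‖p ξ‖)
    nlinarith [h3]
  have intN : Integrable
      (fun ξ : ℝ => ‖Q ξ‖ ^ (2*σ) * ((starRingEnd ℂ) (p ξ) * r ξ).re) := by
    have hfe : (fun ξ : ℝ => ‖Q ξ‖ ^ (2*σ) * ((starRingEnd ℂ) (p ξ) * r ξ).re)
        = (fun ξ : ℝ => ‖Q ξ‖ ^ (2*σ) * (r ξ * (starRingEnd ℂ) (p ξ)).re) := by
      funext ξ; rw [mul_comm (r ξ)]
    rw [hfe]
    exact hint3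
  have int_re_qr : Integrable (fun ξ : ℝ => ((starRingEnd ℂ) (Q ξ) * r ξ).re) := by
    simpa using hint2.re
  have int_im_qr : Integrable (fun ξ : ℝ => ((starRingEnd ℂ) (Q ξ) * r ξ).im) := by
    simpa using hint2.im
  have int_xpr : Integrable (fun ξ : ℝ => (a*ξ-b)*((starRingEnd ℂ) (p ξ) * r ξ).re) := by
    have hfe : (fun ξ : ℝ => (a*ξ-b)*((starRingEnd ℂ) (p ξ) * r ξ).re)
        = (fun ξ : ℝ => -((starRingEnd ℂ) (Q ξ) * r ξ).im
            - a*c0*((starRingEnd ℂ) (Q ξ) * r ξ).re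
            - ‖Q ξ‖ ^ (2*σ) * ((starRingEnd ℂ) (p ξ) * r ξ).re) := by
      funext ξ
      have := P2 ξ
      linarith
    rw [hfe]
    exact (int_im_qr.neg.sub (int_re_qr.const_mul (a*c0))).sub intN
  -- limits
  have habs2_top : Tendsto (fun ξ : ℝ => ‖p ξ‖ ^ 2) atTop (nhds 0) := by
    have := (hQ'_top.norm).pow 2
    simpa [] using this
  have habs2_bot : Tendsto (fun ξ : ℝ => ‖p ξ‖ ^ 2) atBot (nhds 0) := by
    have := (hQ'_bot.norm).pow 2
    simpa [] using this
  have hqp_top : Tendsto (fun ξ : ℝ => (starRingEnd ℂ) (Q ξ) * p ξ) atTop (nhds 0) := by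
    have h1 := (hQ_top.star).mul hQ'_top
    simp only [star_zero, zero_mul] at h1
    simpa only [starRingEnd_apply] using h1
  have hqp_bot : Tendsto (fun ξ : ℝ => (starRingEnd ℂ) (Q ξ) * p ξ) atBot (nhds 0) := by
    have h1 := (hQ_bot.star).mul hQ'_bot
    simp only [star_zero, zero_mul] at h1
    simpa only [starRingEnd_apply] using h1
  -- FTC 1 (imaginary part): ∫ Im(conj Q * Q'') = 0
  have E1 : ∫ ξ : ℝ, ((starRingEnd ℂ) (Q ξ) * r ξ).im = 0 := by
    refine ftc_zero (f := fun ξ => ((starRingEnd ℂ) (Q ξ) * p ξ).im) (fun ξ => ?_) int_im_qr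
      ?_ ?_
    · have h := hasDerivAt_conj_mul_im (hd1 ξ) (hd2 ξ)
      have hval : ((starRingEnd ℂ) (p ξ) * p ξ).im + ((starRingEnd ℂ) (Q ξ) * r ξ).im
          = ((starRingEnd ℂ) (Q ξ) * r ξ).im := by
        simp [Complex.mul_im]
        ring
      rw [hval] at h
      exact h
    · exact (Complex.continuous_im.tendsto 0).comp hqp_bot
    · exact (Complex.continuous_im.tendsto 0).comp hqp_top
  -- FTC 2 (real part): ∫ (|Q'|² + Re(conj Q * Q'')) = 0
  have E2 : ∫ ξ : ℝ, (‖p ξ‖ ^ 2 + ((starRingEnd ℂ) (Q ξ) * r ξ).re) = 0 := by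
    refine ftc_zero (f := fun ξ => ((starRingEnd ℂ) (Q ξ) * p ξ).re) (fun ξ => ?_)
      (J1int.add int_re_qr) ?_ ?_
    · have h := hasDerivAt_conj_mul_re (hd1 ξ) (hd2 ξ)
      have hval : ((starRingEnd ℂ) (p ξ) * p ξ).re + ((starRingEnd ℂ) (Q ξ) * r ξ).re
          = ‖p ξ‖ ^ 2 + ((starRingEnd ℂ) (Q ξ) * r ξ).re := by
        rw [Complex.sq_norm]
        simp [Complex.mul_re, Complex.normSq_apply]
      rw [hval] at h
      exact h
    · exact (Complex.continuous_re.tendsto 0).comp hqp_bot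
    · exact (Complex.continuous_re.tendsto 0).comp hqp_top
  have E2' : ∫ ξ : ℝ, ((starRingEnd ℂ) (Q ξ) * r ξ).re
      = -∫ ξ : ℝ, ‖p ξ‖ ^ 2 := by
    have := integral_add J1int int_re_qr
    rw [E2] at this
    linarith
  -- FTC 3 (weighted): ∫ (aξ - b) Re(conj Q' * Q'') = -(a/2) ∫ |Q'|²
  have E3 : ∫ ξ : ℝ, (a*ξ-b)*((starRingEnd ℂ) (p ξ) * r ξ).re
      = -(a/2) * ∫ ξ : ℝ, ‖p ξ‖ ^ 2 := by
    have hftc : ∫ ξ : ℝ, (a/2 * ‖p ξ‖ ^ 2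
        + (a*ξ-b)*((starRingEnd ℂ) (p ξ) * r ξ).re) = 0 := by
      refine ftc_zero (f := fun ξ => (a*ξ-b)/2 * Complex.normSq (p ξ)) (fun ξ => ?_)
        ((J1int.const_mul (a/2)).add int_xpr) ?_ ?_
      · have h1 : HasDerivAt (fun ξ : ℝ => (a*ξ-b)/2) (a/2) ξ := by
          simpa using (((hasDerivAt_id ξ).const_mul a).sub_const b).div_const 2
        have h2 := hasDerivAt_normSq_comp (hd2 ξ)
        have h := h1.mul h2
        have hval : a/2 * Complex.normSq (p ξ)
            + (a*ξ-b)/2 * (2 * ((starRingEnd ℂ) (p ξ) * r ξ).re)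
            = a/2 * ‖p ξ‖ ^ 2 + (a*ξ-b)*((starRingEnd ℂ) (p ξ) * r ξ).re := by
          rw [Complex.sq_norm]
          ring
        rw [hval] at h
        exact h
      · have h := (hxQ'_bot.const_mul (a/2)).sub (habs2_bot.const_mul (b/2))
        have hfe : (fun ξ : ℝ => (a*ξ-b)/2 * Complex.normSq (p ξ))
            = (fun ξ : ℝ => a/2 * (ξ * ‖p ξ‖ ^ 2) - b/2 * ‖p ξ‖ ^ 2) := by
          funext ξ; rw [← Complex.sq_norm]; ring
        rw [hfe]
        simpa using h
      · have h := (hxQ'_top.const_mul (a/2)).sub (habs2_top.const_mul (b/2))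
        have hfe : (fun ξ : ℝ => (a*ξ-b)/2 * Complex.normSq (p ξ))
            = (fun ξ : ℝ => a/2 * (ξ * ‖p ξ‖ ^ 2) - b/2 * ‖p ξ‖ ^ 2) := by
          funext ξ; rw [← Complex.sq_norm]; ring
        rw [hfe]
        simpa using h
    have hsplit := integral_add (J1int.const_mul (a/2)) int_xpr
    rw [hftc] at hsplit
    rw [integral_const_mul] at hsplit
    linarith
  -- combine: ∫ |Q|^{2σ} Re(conj Q' * Q'') = (a c0 + a/2) ∫ |Q'|²
  have intB : Integrable (fun ξ : ℝ => a*c0*((starRingEnd ℂ) (Q ξ) * r ξ).re) :=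
    int_re_qr.const_mul (a*c0)
  have intAB : Integrable (fun ξ : ℝ => ((starRingEnd ℂ) (Q ξ) * r ξ).im
      + a*c0*((starRingEnd ℂ) (Q ξ) * r ξ).re) := int_im_qr.add intB
  have intABC : Integrable (fun ξ : ℝ => ((starRingEnd ℂ) (Q ξ) * r ξ).im
      + a*c0*((starRingEnd ℂ) (Q ξ) * r ξ).re
      + (a*ξ-b)*((starRingEnd ℂ) (p ξ) * r ξ).re) := intAB.add int_xpr
  have J3eq : ∫ ξ : ℝ, ‖Q ξ‖ ^ (2*σ) * ((starRingEnd ℂ) (p ξ) * r ξ).re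
      = (a*c0 + a/2) * ∫ ξ : ℝ, ‖p ξ‖ ^ 2 := by
    have hsum : ∫ ξ : ℝ, (((starRingEnd ℂ) (Q ξ) * r ξ).im
        + a*c0*((starRingEnd ℂ) (Q ξ) * r ξ).re
        + (a*ξ-b)*((starRingEnd ℂ) (p ξ) * r ξ).re
        + ‖Q ξ‖ ^ (2*σ) * ((starRingEnd ℂ) (p ξ) * r ξ).re) = 0 := by
      have hfe : (fun ξ : ℝ => ((starRingEnd ℂ) (Q ξ) * r ξ).im
          + a*c0*((starRingEnd ℂ) (Q ξ) * r ξ).re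
          + (a*ξ-b)*((starRingEnd ℂ) (p ξ) * r ξ).re
          + ‖Q ξ‖ ^ (2*σ) * ((starRingEnd ℂ) (p ξ) * r ξ).re)
          = (fun _ : ℝ => (0:ℝ)) := funext fun ξ => P2 ξ
      rw [hfe, integral_zero]
    rw [integral_add intABC intN, integral_add intAB int_xpr, integral_add int_im_qr intB,
      integral_const_mul, E1, E2', E3] at hsum
    linarith
  -- FTC 4: ∫ |Q|^{2σ} Re(conj Q * Q') = 0
  have intNqp : Integrable
      (fun ξ : ℝ => ‖Q ξ‖ ^ (2*σ) * ((starRingEnd ℂ) (Q ξ) * p ξ).re) := by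
    have hfe : (fun ξ : ℝ => ‖Q ξ‖ ^ (2*σ) * ((starRingEnd ℂ) (Q ξ) * p ξ).re)
        = (fun ξ : ℝ => ‖Q ξ‖ ^ (2*σ) * ((starRingEnd ℂ) (p ξ) * r ξ).re
            + a*c0 * (‖Q ξ‖ ^ (2*σ) * ((starRingEnd ℂ) (Q ξ) * p ξ).im)) := by
      funext ξ
      rw [P1 ξ]
      ring
    rw [hfe]
    exact intN.add (hNIm.const_mul (a*c0))
  have E4 : ∫ ξ : ℝ, ‖Q ξ‖ ^ (2*σ) * ((starRingEnd ℂ) (Q ξ) * p ξ).re = 0 := by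
    refine ftc_zero (f := fun ξ => 1/(2*σ+2) * Complex.normSq (Q ξ) ^ (σ+1)) (fun ξ => ?_)
      intNqp ?_ ?_
    · have h1 := hasDerivAt_normSq_comp (hd1 ξ)
      have h2 : HasDerivAt (fun y : ℝ => y ^ (σ+1))
          ((σ+1) * Complex.normSq (Q ξ) ^ σ) (Complex.normSq (Q ξ)) := by
        have h := Real.hasDerivAt_rpow_const (x := Complex.normSq (Q ξ)) (p := σ+1)
          (Or.inr (by linarith))
        simpa using h
      have h3 := (h2.comp ξ h1).const_mul (1/(2*σ+2))
      have hns : Complex.normSq (Q ξ) ^ σ = ‖Q ξ‖ ^ (2*σ) := by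
        rw [← Complex.sq_norm, ← Real.rpow_natCast (‖Q ξ‖) 2,
          ← Real.rpow_mul (norm_nonneg _)]
        norm_num
      have hne : (2*σ+2) ≠ 0 := by linarith
      have hval : 1/(2*σ+2) * ((σ+1) * Complex.normSq (Q ξ) ^ σ
            * (2 * ((starRingEnd ℂ) (Q ξ) * p ξ).re))
          = ‖Q ξ‖ ^ (2*σ) * ((starRingEnd ℂ) (Q ξ) * p ξ).re := by
        rw [hns]
        field_simp
      rw [hval] at h3
      exact h3
    · have h0 : Tendsto (fun ξ : ℝ => Complex.normSq (Q ξ)) atBot (nhds 0) := by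
        have := (Complex.continuous_normSq.tendsto 0).comp hQ_bot
        simpa [Function.comp_def] using this
      have h1 := h0.rpow_const (p := σ+1) (Or.inr (by linarith))
      rw [Real.zero_rpow (by linarith : σ+1 ≠ 0)] at h1
      have := h1.const_mul (1/(2*σ+2))
      simpa using this
    · have h0 : Tendsto (fun ξ : ℝ => Complex.normSq (Q ξ)) atTop (nhds 0) := by
        have := (Complex.continuous_normSq.tendsto 0).comp hQ_top
        simpa [Function.comp_def] using this
      have h1 := h0.rpow_const (p := σ+1) (Or.inr (by linarith))
      rw [Real.zero_rpow (by linarith : σ+1 ≠ 0)] at h1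
      have := h1.const_mul (1/(2*σ+2))
      simpa using this
  -- ∫ |Q|^{2σ} Im(conj Q * Q') = -(σ+1) ∫ |Q'|²
  have J2eq : ∫ ξ : ℝ, ‖Q ξ‖ ^ (2*σ) * ((starRingEnd ℂ) (Q ξ) * p ξ).im
      = -(σ+1) * ∫ ξ : ℝ, ‖p ξ‖ ^ 2 := by
    have hfe : (fun ξ : ℝ => ‖Q ξ‖ ^ (2*σ) * ((starRingEnd ℂ) (Q ξ) * p ξ).re)
        = (fun ξ : ℝ => ‖Q ξ‖ ^ (2*σ) * ((starRingEnd ℂ) (p ξ) * r ξ).re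
            + a*c0 * (‖Q ξ‖ ^ (2*σ) * ((starRingEnd ℂ) (Q ξ) * p ξ).im)) := by
      funext ξ
      rw [P1 ξ]
      ring
    have h := E4
    rw [hfe] at h
    rw [integral_add intN (hNIm.const_mul (a*c0)), integral_const_mul, J3eq] at h
    -- h : (a*c0 + a/2) * J1 + a*c0 * J2 = 0
    have hac0 : a * c0 = a / (2*σ) := by rw [hc0]; ring
    have hac0_ne : a * c0 > 0 := by rw [hac0]; positivity
    have h2σ : (2*σ) ≠ 0 := by linarith
    -- solve for J2
    have : a*c0 * (∫ ξ : ℝ, ‖Q ξ‖ ^ (2*σ) * ((starRingEnd ℂ) (Q ξ) * p ξ).im)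
        = -(a*c0 + a/2) * ∫ ξ : ℝ, ‖p ξ‖ ^ 2 := by linarith
    have hgoal : a*c0 * (∫ ξ : ℝ, ‖Q ξ‖ ^ (2*σ) * ((starRingEnd ℂ) (Q ξ) * p ξ).im)
        = a*c0 * (-(σ+1) * ∫ ξ : ℝ, ‖p ξ‖ ^ 2) := by
      rw [this, hac0]
      field_simp
      ring
    exact mul_left_cancel₀ (ne_of_gt hac0_ne) hgoal
  -- conclusion
  have hfe : (fun ξ : ℝ => (‖p ξ‖) ^ 2
      + (1 / (σ + 1)) * (‖Q ξ‖) ^ (2 * σ) * ((starRingEnd ℂ) (Q ξ) * p ξ).im)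
      = (fun ξ : ℝ => (‖p ξ‖) ^ 2
        + (1 / (σ + 1)) * ((‖Q ξ‖) ^ (2 * σ) * ((starRingEnd ℂ) (Q ξ) * p ξ).im)) := by
    funext ξ
    ring
  rw [hfe, integral_add J1int (hNIm.const_mul (1/(σ+1))), integral_const_mul, J2eq]
  have hσ1 : σ + 1 ≠ 0 := by linarith
  field_simp
  ring
end

section
/- Let σ ≥ 1, a > 0, b ∈ ℝ, and let Q : ℝ → ℂ be a bounded C² solution of the blow-up profile equation Q''(ξ) − Q(ξ) + i a ( Q(ξ)/(2σ) + ξ Q'(ξ) ) − i b Q'(ξ) + i |Q(ξ)|^{2σ} Q'(ξ) = 0, such that the function ξ ↦ Im( conj(Q(ξ)) Q'(ξ) ) is integrable on ℝ and Q(ξ) → 0 and Q'(ξ) → 0 as ξ → ±∞. Then the momentum of Q vanishes: Im ∫_ℝ conj(Q(ξ)) Q'(ξ) dξ = 0. -/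
open MeasureTheory Filter

lemma blowup_key_alg (σ a b c ξ : ℝ) (hσ : σ ≠ 0) (z w u : ℂ)
    (h : u - z + Complex.I*(a:ℂ)*(z/(2*σ) + (ξ:ℂ)*w) - Complex.I*(b:ℂ)*w + Complex.I*(c:ℂ)*w = 0) :
    ((starRingEnd ℂ) w * z + (starRingEnd ℂ) z * w).re
      - ((starRingEnd ℂ) u * w + (starRingEnd ℂ) w * u).re
      = (a/σ) * ((starRingEnd ℂ) z * w).im := by
  have hu : u = z - Complex.I*(a:ℂ)*(z/(2*σ) + (ξ:ℂ)*w) + Complex.I*(b:ℂ)*w - Complex.I*(c:ℂ)*w := by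
    linear_combination h
  subst hu
  simp only [map_sub, map_add, map_mul, Complex.conj_I, Complex.conj_ofReal,
    Complex.mul_re, Complex.mul_im, Complex.sub_re, Complex.sub_im, Complex.add_re, Complex.add_im,
    Complex.I_re, Complex.I_im, Complex.ofReal_re, Complex.ofReal_im, Complex.div_re, Complex.div_im,
    Complex.normSq_apply, Complex.conj_re, Complex.conj_im,
    Complex.neg_re, Complex.neg_im, Complex.re_ofNat, Complex.im_ofNat]
  field_simp
  ring

/-- **Zero momentum of the blow-up profile.**
For a bounded `C²` solution `Q` of the blow-up profile equation with `σ ≥ 1`, `a > 0`,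
such that `Im(conj(Q) Q')` is integrable and `Q, Q' → 0` at `±∞`, the momentum vanishes:
`Im ∫ conj(Q) Q' = 0`. -/
theorem blowup_profile_zero_momentum (σ a b : ℝ) (hσ : 1 ≤ σ) (ha : 0 < a)
    (Q : ℝ → ℂ) (hQ : ContDiff ℝ 2 Q)
    (hbdd : ∃ C : ℝ, ∀ ξ : ℝ, ‖Q ξ‖ ≤ C)
    (heq : ∀ ξ : ℝ,
      deriv (deriv Q) ξ - Q ξ
        + Complex.I * (a : ℂ) * (Q ξ / (2 * σ) + (ξ : ℂ) * deriv Q ξ)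
        - Complex.I * (b : ℂ) * deriv Q ξ
        + Complex.I * (((‖Q ξ‖) ^ (2 * σ) : ℝ) : ℂ) * deriv Q ξ = 0)
    (hint : Integrable (fun ξ : ℝ => ((starRingEnd ℂ) (Q ξ) * deriv Q ξ).im))
    (hQ_top : Tendsto Q atTop (nhds 0)) (hQ_bot : Tendsto Q atBot (nhds 0))
    (hQ'_top : Tendsto (deriv Q) atTop (nhds 0)) (hQ'_bot : Tendsto (deriv Q) atBot (nhds 0)) :
    ∫ ξ : ℝ, ((starRingEnd ℂ) (Q ξ) * deriv Q ξ).im = 0 := by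
  have hσ0 : σ ≠ 0 := by linarith
  have ha0 : a ≠ 0 := ne_of_gt ha
  -- differentiability
  have hQd : Differentiable ℝ Q := hQ.differentiable (by norm_num)
  have hQ'd : Differentiable ℝ (deriv Q) := by
    have h2 : ContDiff ℝ ((1 : WithTop ℕ∞)+1) Q := by
      have : ((1 : WithTop ℕ∞)+1) = 2 := by norm_num
      rw [this]; exact hQ
    exact (contDiff_succ_iff_deriv.mp h2).2.2.differentiable one_ne_zero
  set g : ℝ → ℝ := fun ξ => ((starRingEnd ℂ) (Q ξ) * deriv Q ξ).im with hg
  set F : ℝ → ℝ := fun ξ =>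
    (σ / a) * ((starRingEnd ℂ) (Q ξ) * Q ξ - (starRingEnd ℂ) (deriv Q ξ) * deriv Q ξ).re with hF
  -- F' = g
  have hFd : ∀ ξ : ℝ, HasDerivAt F (g ξ) ξ := by
    intro ξ
    have hd1 : HasDerivAt Q (deriv Q ξ) ξ := (hQd ξ).hasDerivAt
    have hd2 : HasDerivAt (deriv Q) (deriv (deriv Q) ξ) ξ := (hQ'd ξ).hasDerivAt
    have hG : HasDerivAt
        (fun t => (starRingEnd ℂ) (Q t) * Q t - (starRingEnd ℂ) (deriv Q t) * deriv Q t)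
        (((starRingEnd ℂ) (deriv Q ξ) * Q ξ + (starRingEnd ℂ) (Q ξ) * deriv Q ξ)
          - ((starRingEnd ℂ) (deriv (deriv Q) ξ) * deriv Q ξ
            + (starRingEnd ℂ) (deriv Q ξ) * deriv (deriv Q) ξ)) ξ := by
      have h1 := (hd1.star.mul hd1).sub (hd2.star.mul hd2)
      exact h1
    have hFd' : HasDerivAt F ((σ / a) *
        (((starRingEnd ℂ) (deriv Q ξ) * Q ξ + (starRingEnd ℂ) (Q ξ) * deriv Q ξ)
          - ((starRingEnd ℂ) (deriv (deriv Q) ξ) * deriv Q ξ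
            + (starRingEnd ℂ) (deriv Q ξ) * deriv (deriv Q) ξ)).re) ξ := by
      exact (Complex.reCLM.hasFDerivAt.comp_hasDerivAt ξ hG).const_mul (σ / a)
    convert hFd' using 1
    have key := blowup_key_alg σ a b ((‖Q ξ‖) ^ (2 * σ)) ξ hσ0 (Q ξ) (deriv Q ξ)
        (deriv (deriv Q) ξ) (heq ξ)
    simp only [hg, Complex.sub_re]
    rw [key]
    field_simp
  -- limits of F at ±∞
  have hF_top : Tendsto F atTop (nhds 0) := by
    have h1 : Tendsto (fun ξ => ((starRingEnd ℂ) (Q ξ) * Q ξ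
        - (starRingEnd ℂ) (deriv Q ξ) * deriv Q ξ)) atTop (nhds 0) := by
      have := ((hQ_top.star.mul hQ_top).sub (hQ'_top.star.mul hQ'_top))
      simpa [Complex.star_def] using this
    have h2 : Tendsto (fun ξ => ((starRingEnd ℂ) (Q ξ) * Q ξ
        - (starRingEnd ℂ) (deriv Q ξ) * deriv Q ξ).re) atTop (nhds 0) := by
      exact (Complex.continuous_re.tendsto 0).comp h1
    have h3 := h2.const_mul (σ / a)
    rw [hF]
    simpa [mul_comm] using h3
  have hF_bot : Tendsto F atBot (nhds 0) := by
    have h1 : Tendsto (fun ξ => ((starRingEnd ℂ) (Q ξ) * Q ξ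
        - (starRingEnd ℂ) (deriv Q ξ) * deriv Q ξ)) atBot (nhds 0) := by
      have := ((hQ_bot.star.mul hQ_bot).sub (hQ'_bot.star.mul hQ'_bot))
      simpa [Complex.star_def] using this
    have h2 : Tendsto (fun ξ => ((starRingEnd ℂ) (Q ξ) * Q ξ
        - (starRingEnd ℂ) (deriv Q ξ) * deriv Q ξ).re) atBot (nhds 0) := by
      exact (Complex.continuous_re.tendsto 0).comp h1
    have h3 := h2.const_mul (σ / a)
    rw [hF]
    simpa [mul_comm] using h3
  have hcont : Continuous F :=
    continuous_iff_continuousAt.mpr fun x => (hFd x).differentiableAt.continuousAt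
  have h1 : ∫ x in Set.Ioi (0:ℝ), g x = 0 - F 0 :=
    integral_Ioi_of_hasDerivAt_of_tendsto (hcont.continuousWithinAt)
      (fun x _ => hFd x) hint.integrableOn hF_top
  have h2 : ∫ x in Set.Iic (0:ℝ), g x = F 0 - 0 :=
    integral_Iic_of_hasDerivAt_of_tendsto (hcont.continuousWithinAt)
      (fun x _ => hFd x) hint.integrableOn hF_bot
  have h3 : (∫ x in Set.Iic (0:ℝ), g x) + ∫ x in Set.Ioi (0:ℝ), g x = ∫ x, g x :=
    intervalIntegral.integral_Iic_add_Ioi hint.integrableOn hint.integrableOn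
  have h4 : ∫ x, g x = 0 := by rw [← h3, h1, h2]; ring
  exact h4
end

section
/- Let σ > 1, a > 0, and b ∈ ℝ. If Q : ℝ → ℂ is a C² solution of the blow-up profile equation Q''(ξ) − Q(ξ) + i a ( Q(ξ)/(2σ) + ξ Q'(ξ) ) − i b Q'(ξ) + i |Q(ξ)|^{2σ} Q'(ξ) = 0 such that Q ∈ H¹(ℝ) and Q ∈ L^{2σ+2}(ℝ), then Q is identically zero. -/
open MeasureTheory
open scoped ENNReal

lemma blowup_keyA (a : ℝ) (ha : 0 < a) (g h u : ℝ → ℝ) (hmono : Monotone g)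
    (hgu : ∀ ξ, g ξ = h ξ + a / 2 * ξ * u ξ) (hu0 : ∀ ξ, 0 ≤ u ξ)
    (hhcont : Continuous h)
    (huint : Integrable u) (hhint : Integrable h) : ∀ ξ, g ξ ≤ 0 := by
  intro ξ₀
  by_contra hc
  push_neg at hc
  set ε := g ξ₀ with hε
  set ξ₁ : ℝ := max ξ₀ 1 with hξ₁
  have hξ₁pos : (0:ℝ) < ξ₁ := lt_of_lt_of_le one_pos (le_max_right _ _)
  have hgξ₁ : ε ≤ g ξ₁ := hmono (le_max_left _ _)
  set M := ∫ x, u x with hM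
  set H := ∫ x, |h x| with hH
  have hM0 : 0 ≤ M := integral_nonneg hu0
  have hH0 : 0 ≤ H := integral_nonneg (fun x => abs_nonneg _)
  set K : ℝ := (a / 2 * M + H) / ε + 1 with hK
  have hKpos : 0 < K := by positivity
  set T : ℝ := ξ₁ * Real.exp K with hT
  have hξ₁T : ξ₁ ≤ T := by
    rw [hT]
    nlinarith [Real.add_one_le_exp K, hξ₁pos]
  have hbound : ∀ x ∈ Set.Icc ξ₁ T, 2 / a * (ε / x - |h x|) ≤ u x := by
    intro x hx
    have hx1 : (1:ℝ) ≤ x := le_trans (le_max_right _ _) hx.1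
    have hxpos : (0:ℝ) < x := lt_of_lt_of_le one_pos hx1
    have hgx : ε ≤ g x := le_trans hgξ₁ (hmono hx.1)
    have h1 : ε - h x ≤ a / 2 * x * u x := by
      have := hgu x; linarith
    have hax : h x / x ≤ |h x| := by
      rw [div_le_iff₀ hxpos]
      nlinarith [le_abs_self (h x), abs_nonneg (h x)]
    have h2 : ε / x - |h x| ≤ (ε - h x) / x := by
      rw [sub_div]; linarith
    have h3 : (ε - h x) / x ≤ a / 2 * u x := by
      rw [div_le_iff₀ hxpos]
      nlinarith
    calc 2 / a * (ε / x - |h x|) ≤ 2 / a * ((ε - h x) / x) := by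
          apply mul_le_mul_of_nonneg_left h2 (by positivity)
      _ ≤ 2 / a * (a / 2 * u x) := mul_le_mul_of_nonneg_left h3 (by positivity)
      _ = u x := by field_simp
  have hIu : IntervalIntegrable u volume ξ₁ T := huint.intervalIntegrable
  have hIl : IntervalIntegrable (fun x => 2 / a * (ε / x - |h x|)) volume ξ₁ T := by
    apply ContinuousOn.intervalIntegrable
    apply ContinuousOn.mul continuousOn_const
    apply ContinuousOn.sub
    · apply ContinuousOn.div continuousOn_const continuousOn_id
      intro x hx
      have hge : ξ₁ ≤ x := by
        rcases Set.mem_uIcc.mp hx with hm | hm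
        · exact hm.1
        · linarith [hm.1, hm.2, hξ₁T]
      exact ne_of_gt (lt_of_lt_of_le hξ₁pos hge)
    · exact (hhcont.abs).continuousOn
  have hmono_int : (∫ x in ξ₁..T, 2 / a * (ε / x - |h x|)) ≤ ∫ x in ξ₁..T, u x :=
    intervalIntegral.integral_mono_on hξ₁T hIl hIu hbound
  have h0mem : (0:ℝ) ∉ Set.uIcc ξ₁ T := by
    intro hmem
    rcases Set.mem_uIcc.mp hmem with hm | hm
    · linarith [hm.1]
    · linarith [hm.1, hm.2]
  have hTdiv : T / ξ₁ = Real.exp K := by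
    rw [hT, mul_comm, mul_div_assoc, div_self (ne_of_gt hξ₁pos), mul_one]
  have hlog : (∫ x in ξ₁..T, 1 / x) = K := by
    rw [integral_one_div h0mem, hTdiv, Real.log_exp]
  -- left side computation
  have hIinv : IntervalIntegrable (fun x => 1 / x) volume ξ₁ T := by
    apply ContinuousOn.intervalIntegrable
    apply ContinuousOn.div continuousOn_const continuousOn_id
    intro x hx
    have hge : ξ₁ ≤ x := by
      rcases Set.mem_uIcc.mp hx with hm | hm
      · exact hm.1
      · linarith [hm.1, hm.2, hξ₁T]
    exact ne_of_gt (lt_of_lt_of_le hξ₁pos hge)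
  have hIabs : IntervalIntegrable (fun x => |h x|) volume ξ₁ T :=
    hhint.abs.intervalIntegrable
  have hsplit : (∫ x in ξ₁..T, 2 / a * (ε / x - |h x|))
      = 2 / a * (ε * (∫ x in ξ₁..T, 1 / x) - ∫ x in ξ₁..T, |h x|) := by
    rw [intervalIntegral.integral_const_mul]
    congr 1
    have hrw : (∫ x in ξ₁..T, (ε / x - |h x|)) = ∫ x in ξ₁..T, (ε * (1 / x) - |h x|) := by
      congr 1; funext x; ring
    rw [hrw, intervalIntegral.integral_sub (hIinv.const_mul ε) hIabs,
      intervalIntegral.integral_const_mul]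
  have habs_le : (∫ x in ξ₁..T, |h x|) ≤ H := by
    rw [intervalIntegral.integral_of_le hξ₁T]
    exact setIntegral_le_integral hhint.abs (Filter.Eventually.of_forall fun x => abs_nonneg _)
  have hu_le : (∫ x in ξ₁..T, u x) ≤ M := by
    rw [intervalIntegral.integral_of_le hξ₁T]
    exact setIntegral_le_integral huint (Filter.Eventually.of_forall fun x => hu0 _)
  have hfinal : 2 / a * (ε * K - H) ≤ M := by
    calc 2 / a * (ε * K - H) ≤ 2 / a * (ε * (∫ x in ξ₁..T, 1 / x) - ∫ x in ξ₁..T, |h x|) := by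
          rw [hlog]
          apply mul_le_mul_of_nonneg_left (by linarith) (by positivity)
      _ = ∫ x in ξ₁..T, 2 / a * (ε / x - |h x|) := hsplit.symm
      _ ≤ ∫ x in ξ₁..T, u x := hmono_int
      _ ≤ M := hu_le
  have hεK : ε * K = a / 2 * M + H + ε := by
    rw [hK]
    field_simp
  rw [hεK] at hfinal
  have hcomp : 2 / a * (a / 2 * M + H + ε - H) = M + 2 / a * ε := by
    field_simp
    ring
  rw [hcomp] at hfinal
  have : 0 < 2 / a * ε := by positivity
  linarith

lemma blowup_keyB (σ a b ξ : ℝ) (hσ : 1 < σ) (q q' q'' : ℂ)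
    (heq : q'' - q + Complex.I * (a:ℂ) * (q / (2 * σ) + (ξ:ℂ) * q')
        - Complex.I * (b:ℂ) * q'
        + Complex.I * (((‖q‖) ^ (2 * σ) : ℝ) : ℂ) * q' = 0) :
    (q'' * (starRingEnd ℂ) q).im
      + a / 2 * (1 * Complex.normSq q + ξ * (2 * (q' * (starRingEnd ℂ) q).re))
      - b / 2 * (2 * (q' * (starRingEnd ℂ) q).re)
      + 1 / (2 * σ + 2) * ((σ + 1) * (Complex.normSq q) ^ σ * (2 * (q' * (starRingEnd ℂ) q).re))
      = (a / 2 - a / (2 * σ)) * Complex.normSq q := by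
  have hσ0 : (σ:ℝ) ≠ 0 := by positivity
  have hσ1 : (2 * σ + 2 : ℝ) ≠ 0 := by positivity
  have hA : (‖q‖) ^ (2 * σ) = (Complex.normSq q) ^ σ := by
    rw [Complex.norm_def, Real.sqrt_eq_rpow, ← Real.rpow_mul (Complex.normSq_nonneg q)]
    congr 1
    ring
  rw [hA] at heq
  have hq'' : q'' = q - Complex.I * (a:ℂ) * (q / (2 * σ) + (ξ:ℂ) * q')
      + Complex.I * (b:ℂ) * q' - Complex.I * (((Complex.normSq q) ^ σ : ℝ) : ℂ) * q' := by
    linear_combination heq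
  rw [hq'']
  set A := (Complex.normSq q) ^ σ with hAdef
  have h2σ : ((2:ℂ) * (σ:ℂ)) = ((2*σ:ℝ):ℂ) := by push_cast; ring
  rw [h2σ]
  simp only [Complex.mul_im, Complex.mul_re, Complex.add_im, Complex.add_re, Complex.sub_im,
    Complex.sub_re, Complex.I_re, Complex.I_im, Complex.ofReal_re, Complex.ofReal_im,
    Complex.conj_re, Complex.conj_im, Complex.normSq_apply,
    Complex.div_ofReal_re, Complex.div_ofReal_im]
  field_simp
  ring


/-- **Nonexistence of `H¹ ∩ L^{2σ+2}` blow-up profiles.**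
For `σ > 1` and `a > 0`, any `C²` solution `Q` of the blow-up profile equation with
`Q ∈ H¹(ℝ)` (i.e. `Q ∈ L²` and `Q' ∈ L²`) and `Q ∈ L^{2σ+2}(ℝ)` is identically zero. -/
theorem blowup_profile_trivial (σ a b : ℝ) (hσ : 1 < σ) (ha : 0 < a)
    (Q : ℝ → ℂ) (hQ : ContDiff ℝ 2 Q)
    (heq : ∀ ξ : ℝ,
      deriv (deriv Q) ξ - Q ξ
        + Complex.I * (a : ℂ) * (Q ξ / (2 * σ) + (ξ : ℂ) * deriv Q ξ)
        - Complex.I * (b : ℂ) * deriv Q ξ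
        + Complex.I * (((‖Q ξ‖) ^ (2 * σ) : ℝ) : ℂ) * deriv Q ξ = 0)
    (hQL2 : MemLp Q 2 volume)
    (hQ'L2 : MemLp (deriv Q) 2 volume)
    (hQLp : MemLp Q (ENNReal.ofReal (2 * σ + 2)) volume) :
    ∀ ξ : ℝ, Q ξ = 0 := by
  -- basic regularity
  have hQdiff : Differentiable ℝ Q := hQ.differentiable (by norm_num)
  have hQ'cd : ContDiff ℝ 1 (deriv Q) := by
    rw [show (2 : WithTop ℕ∞) = 1 + 1 by norm_num] at hQ
    exact (contDiff_succ_iff_deriv.mp hQ).2.2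
  have hQ'diff : Differentiable ℝ (deriv Q) := hQ'cd.differentiable (by norm_num)
  have hQcont : Continuous Q := hQdiff.continuous
  have hQ'cont : Continuous (deriv Q) := hQ'diff.continuous
  -- the key functions
  set u : ℝ → ℝ := fun ξ => Complex.normSq (Q ξ) with hu_def
  set R : ℝ → ℝ := fun ξ => (deriv Q ξ * (starRingEnd ℂ) (Q ξ)).re with hR_def
  set v : ℝ → ℝ := fun ξ => (deriv Q ξ * (starRingEnd ℂ) (Q ξ)).im with hv_def
  set h : ℝ → ℝ := fun ξ => v ξ - b / 2 * u ξ + 1 / (2 * σ + 2) * (u ξ) ^ (σ + 1)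
    with hh_def
  set g : ℝ → ℝ := fun ξ => h ξ + a / 2 * ξ * u ξ with hg_def
  set c : ℝ := a / 2 - a / (2 * σ) with hc_def
  have hcpos : 0 < c := by
    rw [hc_def]
    rw [sub_pos, div_lt_div_iff₀ (by positivity) (by norm_num)]
    nlinarith
  -- pointwise derivatives
  have hure : ∀ ξ, HasDerivAt (fun t => (Q t).re) ((deriv Q ξ).re) ξ := fun ξ =>
    (Complex.reCLM.hasFDerivAt.comp_hasDerivAt ξ (hQdiff ξ).hasDerivAt)
  have huim : ∀ ξ, HasDerivAt (fun t => (Q t).im) ((deriv Q ξ).im) ξ := fun ξ =>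
    (Complex.imCLM.hasFDerivAt.comp_hasDerivAt ξ (hQdiff ξ).hasDerivAt)
  have hu're : ∀ ξ, HasDerivAt (fun t => (deriv Q t).re) ((deriv (deriv Q) ξ).re) ξ := fun ξ =>
    (Complex.reCLM.hasFDerivAt.comp_hasDerivAt ξ (hQ'diff ξ).hasDerivAt)
  have hu'im : ∀ ξ, HasDerivAt (fun t => (deriv Q t).im) ((deriv (deriv Q) ξ).im) ξ := fun ξ =>
    (Complex.imCLM.hasFDerivAt.comp_hasDerivAt ξ (hQ'diff ξ).hasDerivAt)
  have hu_deriv : ∀ ξ, HasDerivAt u (2 * R ξ) ξ := by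
    intro ξ
    have : HasDerivAt (fun t => (Q t).re * (Q t).re + (Q t).im * (Q t).im)
        ((deriv Q ξ).re * (Q ξ).re + (Q ξ).re * (deriv Q ξ).re
          + ((deriv Q ξ).im * (Q ξ).im + (Q ξ).im * (deriv Q ξ).im)) ξ :=
      ((hure ξ).mul (hure ξ)).add ((huim ξ).mul (huim ξ))
    have hfe : u = fun t => (Q t).re * (Q t).re + (Q t).im * (Q t).im := by
      funext t; simp [hu_def, Complex.normSq_apply]
    rw [hfe]
    exact this.congr_deriv (by simp [hR_def, Complex.mul_re]; ring)
  have hv_deriv : ∀ ξ, HasDerivAt v ((deriv (deriv Q) ξ * (starRingEnd ℂ) (Q ξ)).im) ξ := by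
    intro ξ
    have : HasDerivAt (fun t => (deriv Q t).im * (Q t).re - (deriv Q t).re * (Q t).im)
        ((deriv (deriv Q) ξ).im * (Q ξ).re + (deriv Q ξ).im * (deriv Q ξ).re
         - ((deriv (deriv Q) ξ).re * (Q ξ).im + (deriv Q ξ).re * (deriv Q ξ).im)) ξ :=
      ((hu'im ξ).mul (hure ξ)).sub ((hu're ξ).mul (huim ξ))
    have hfe : v = fun t => (deriv Q t).im * (Q t).re - (deriv Q t).re * (Q t).im := by
      funext t; simp [hv_def, Complex.mul_im]; ring
    rw [hfe]
    exact this.congr_deriv (by simp [Complex.mul_im]; ring)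
  have hw_deriv : ∀ ξ, HasDerivAt (fun t => (u t) ^ (σ + 1))
      ((σ + 1) * (u ξ) ^ σ * (2 * R ξ)) ξ := by
    intro ξ
    have hpow := Real.hasDerivAt_rpow_const (x := u ξ) (p := σ + 1) (Or.inr (by linarith))
    have := hpow.comp ξ (hu_deriv ξ)
    rw [show σ + 1 - 1 = σ by ring] at this
    exact this
  have hg_deriv : ∀ ξ, HasDerivAt g (c * u ξ) ξ := by
    intro ξ
    have hd : HasDerivAt g
        ((deriv (deriv Q) ξ * (starRingEnd ℂ) (Q ξ)).im
          + a / 2 * (1 * u ξ + ξ * (2 * R ξ))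
          - b / 2 * (2 * R ξ)
          + 1 / (2 * σ + 2) * ((σ + 1) * (u ξ) ^ σ * (2 * R ξ))) ξ := by
      rw [hg_def, hh_def]
      have h1 : HasDerivAt (fun t : ℝ => a / 2 * t * u t)
          (a / 2 * (1 * u ξ + ξ * (2 * R ξ))) ξ := by
        have h1' := ((hasDerivAt_id ξ).mul (hu_deriv ξ)).const_mul (a / 2)
        have hfe : (fun y : ℝ => a / 2 * ((id : ℝ → ℝ) * u) y) = fun t : ℝ => a / 2 * t * u t := by
          funext t; simp only [Pi.mul_apply, id]; ring
        rw [hfe] at h1'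
        exact h1'.congr_deriv (by simp)
      have h2 : HasDerivAt (fun t : ℝ => b / 2 * u t) (b / 2 * (2 * R ξ)) ξ :=
        (hu_deriv ξ).const_mul (b / 2)
      have h3 : HasDerivAt (fun t : ℝ => 1 / (2 * σ + 2) * (u t) ^ (σ + 1))
          (1 / (2 * σ + 2) * ((σ + 1) * (u ξ) ^ σ * (2 * R ξ))) ξ :=
        (hw_deriv ξ).const_mul (1 / (2 * σ + 2))
      exact (((hv_deriv ξ).sub h2).add h3).add h1 |>.congr_deriv (by ring)
    convert hd using 1
    exact (blowup_keyB σ a b ξ hσ (Q ξ) (deriv Q ξ) (deriv (deriv Q) ξ) (heq ξ)).symm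
  -- continuity
  have hucont : Continuous u := Complex.continuous_normSq.comp hQcont
  have hvcont : Continuous v :=
    Complex.continuous_im.comp (hQ'cont.mul (continuous_star.comp hQcont))
  have hwcont : Continuous (fun ξ => (u ξ) ^ (σ + 1)) :=
    hucont.rpow_const (fun x => Or.inr (by linarith))
  have hhcont : Continuous h := by
    rw [hh_def]
    exact (hvcont.sub (continuous_const.mul hucont)).add (continuous_const.mul hwcont)
  -- integrability
  have hsq : ∀ f : ℝ → ℂ, MemLp f 2 volume → Integrable (fun x => ‖f x‖ ^ (2:ℕ)) := by
    intro f hf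
    have hint := hf.integrable_norm_rpow two_ne_zero ENNReal.ofNat_ne_top
    refine hint.congr (Filter.Eventually.of_forall fun x => ?_)
    show ‖f x‖ ^ ((2:ℝ≥0∞).toReal) = ‖f x‖ ^ (2:ℕ)
    rw [show ((2:ℝ≥0∞).toReal) = ((2:ℕ):ℝ) by norm_num, Real.rpow_natCast]
  have huint : Integrable u := by
    refine (hsq Q hQL2).congr (Filter.Eventually.of_forall fun x => ?_)
    simp [hu_def, Complex.sq_norm]
  have hvint : Integrable v := by
    have hb : Integrable (fun x => (‖deriv Q x‖ ^ (2:ℕ) + ‖Q x‖ ^ (2:ℕ)) / 2) :=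
      ((hsq _ hQ'L2).add (hsq _ hQL2)).div_const 2
    refine hb.mono' hvcont.aestronglyMeasurable (Filter.Eventually.of_forall fun x => ?_)
    have h1 : |v x| ≤ ‖deriv Q x * (starRingEnd ℂ) (Q x)‖ :=
      Complex.abs_im_le_norm _
    have h2 : ‖deriv Q x * (starRingEnd ℂ) (Q x)‖
        = ‖deriv Q x‖ * ‖Q x‖ := by
      simp [map_mul]
    have h3 : ‖deriv Q x‖ * ‖Q x‖ ≤ (‖deriv Q x‖ ^ (2:ℕ) + ‖Q x‖ ^ (2:ℕ)) / 2 := by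
      nlinarith [sq_nonneg (‖deriv Q x‖ - ‖Q x‖)]
    rw [Real.norm_eq_abs]
    calc |v x| ≤ ‖deriv Q x‖ * ‖Q x‖ := h2 ▸ h1
      _ ≤ _ := h3
  have hwint : Integrable (fun x => (u x) ^ (σ + 1)) := by
    have hp0 : ENNReal.ofReal (2 * σ + 2) ≠ 0 :=
      ne_of_gt (ENNReal.ofReal_pos.mpr (by linarith))
    have hint := hQLp.integrable_norm_rpow hp0 ENNReal.ofReal_ne_top
    refine hint.congr (Filter.Eventually.of_forall fun x => ?_)
    show ‖Q x‖ ^ ((ENNReal.ofReal (2 * σ + 2)).toReal) = u x ^ (σ + 1)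
    rw [ENNReal.toReal_ofReal (by linarith)]
    have hux : u x = ‖Q x‖ ^ (2:ℝ) := by
      rw [show (2:ℝ) = ((2:ℕ):ℝ) by norm_num, Real.rpow_natCast]
      simp [hu_def, Complex.sq_norm]
    rw [hux, ← Real.rpow_mul (norm_nonneg _)]
    congr 1
    ring
  have hhint : Integrable h := by
    rw [hh_def]
    exact (hvint.sub (huint.const_mul (b / 2))).add (hwint.const_mul (1 / (2 * σ + 2)))
  -- monotone
  have hmono : Monotone g :=
    monotone_of_deriv_nonneg (fun ξ => (hg_deriv ξ).differentiableAt)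
      (fun ξ => by
        rw [(hg_deriv ξ).deriv]
        exact mul_nonneg hcpos.le (Complex.normSq_nonneg _))
  have hu0 : ∀ ξ, 0 ≤ u ξ := fun ξ => Complex.normSq_nonneg _
  have hgle : ∀ ξ, g ξ ≤ 0 :=
    blowup_keyA a ha g h u hmono (fun ξ => rfl) hu0 hhcont huint hhint
  -- reflection
  have hneg : ∀ f : ℝ → ℝ, Integrable f → Integrable (fun x => f (-x)) := by
    intro f hf
    exact ((Measure.measurePreserving_neg (volume : Measure ℝ)).integrable_comp_emb
      (MeasurableEquiv.neg ℝ).measurableEmbedding).mpr hf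
  have hgge : ∀ ξ, 0 ≤ g ξ := by
    intro ξ
    have hmono' : Monotone (fun t => -g (-t)) := by
      intro x y hxy
      simp only [neg_le_neg_iff]
      exact hmono (by linarith)
    have key := blowup_keyA a ha (fun t => -g (-t)) (fun t => -h (-t)) (fun t => u (-t))
      hmono'
      (fun t => by
        show -g (-t) = -h (-t) + a / 2 * t * u (-t)
        rw [hg_def]
        ring)
      (fun t => hu0 (-t))
      ((hhcont.comp continuous_neg).neg)
      (hneg u huint) ((hneg h hhint).neg) (-ξ)
    simpa using key
  -- conclusion
  intro ξ
  have hg0 : g = fun _ => (0:ℝ) := funext fun t => le_antisymm (hgle t) (hgge t)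
  have hd0 : HasDerivAt g 0 ξ := by
    rw [hg0]; exact hasDerivAt_const ξ 0
  have hcu : c * u ξ = 0 := (hg_deriv ξ).unique hd0
  have huξ : u ξ = 0 := (mul_eq_zero.mp hcu).resolve_left (ne_of_gt hcpos)
  exact Complex.normSq_eq_zero.mp huξ
end

section
/- Let σ > 0 and let b ∈ ℝ with |b| < 2. Then the bright soliton B_σ(ξ) = ( (σ+1)(4 − b²) / ( 2 ( cosh( σ √(4 − b²) ξ ) − b/2 ) ) )^{1/(2σ)} is a positive, smooth, exponentially decaying solution of the soliton profile equation R''(ξ) − (1 − b²/4) R(ξ) − (b/2) R(ξ)^{2σ+1} + ((2σ+1)/(2σ+2)²) R(ξ)^{4σ+1} = 0 on ℝ. -/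
open Real

set_option maxHeartbeats 1000000


/-- **The bright soliton.**
For `σ > 0` and `|b| < 2`, the bright soliton
`B_σ(ξ) = ((σ+1)(4−b²) / (2(cosh(σ√(4−b²)ξ) − b/2)))^{1/(2σ)}`
is positive, smooth, exponentially decaying, and solves the soliton profile equation
`R'' − (1 − b²/4) R − (b/2) R^{2σ+1} + ((2σ+1)/(2σ+2)²) R^{4σ+1} = 0`. -/
theorem bright_soliton (σ b : ℝ) (hσ : 0 < σ) (hb : |b| < 2)
    (B : ℝ → ℝ)
    (hB : ∀ ξ : ℝ, B ξ =
      ((σ + 1) * (4 - b ^ 2) /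
        (2 * (Real.cosh (σ * Real.sqrt (4 - b ^ 2) * ξ) - b / 2))) ^ (1 / (2 * σ))) :
    (∀ ξ : ℝ, 0 < B ξ) ∧
    ContDiff ℝ (⊤ : ℕ∞) B ∧
    (∃ C δ : ℝ, 0 < C ∧ 0 < δ ∧ ∀ ξ : ℝ, B ξ ≤ C * Real.exp (-δ * |ξ|)) ∧
    (∀ ξ : ℝ,
      deriv (deriv B) ξ - (1 - b ^ 2 / 4) * B ξ - (b / 2) * B ξ ^ (2 * σ + 1)
        + ((2 * σ + 1) / (2 * σ + 2) ^ 2) * B ξ ^ (4 * σ + 1) = 0) := by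
  obtain ⟨hb1, hb2⟩ := abs_lt.mp hb
  have hm : (0:ℝ) < 4 - b ^ 2 := by nlinarith
  set m : ℝ := 4 - b ^ 2 with hm_def
  set k : ℝ := σ * Real.sqrt m with hk_def
  have hsq : Real.sqrt m ^ 2 = m := Real.sq_sqrt hm.le
  have hk : 0 < k := mul_pos hσ (Real.sqrt_pos.mpr hm)
  have hks : k ^ 2 = σ ^ 2 * m := by rw [hk_def, mul_pow, hsq]
  set u : ℝ → ℝ := fun ξ => Real.cosh (k * ξ) - b / 2 with hu_def
  have hupos : ∀ ξ, 0 < u ξ := fun ξ => by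
    have := Real.one_le_cosh (k * ξ); simp only [hu_def]; linarith
  set A2 : ℝ := (σ + 1) * m / 2 with hA2_def
  have hA2 : 0 < A2 := by positivity
  set p : ℝ := 1 / (2 * σ) with hp_def
  have hp : 0 < p := by positivity
  have hBeq : ∀ ξ, B ξ = A2 ^ p * u ξ ^ (-p) := by
    intro ξ
    rw [hB ξ]
    have h1 : (σ + 1) * m / (2 * u ξ) = A2 / u ξ := by
      rw [hA2_def]; field_simp
    rw [show (σ + 1) * m / (2 * (Real.cosh (k * ξ) - b / 2)) = A2 / u ξ from h1,
      Real.div_rpow hA2.le (hupos ξ).le, Real.rpow_neg (hupos ξ).le, div_eq_mul_inv]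
  have hBpos : ∀ ξ, 0 < B ξ := fun ξ => by
    rw [hBeq ξ]
    exact mul_pos (Real.rpow_pos_of_pos hA2 _) (Real.rpow_pos_of_pos (hupos ξ) _)
  -- smoothness
  have hBfun : B = fun ξ => A2 ^ p * u ξ ^ (-p) := funext hBeq
  have hcu : ContDiff ℝ (⊤ : ℕ∞) u := by
    rw [hu_def]
    have h1 : ContDiff ℝ (⊤ : ℕ∞) fun ξ : ℝ => k * ξ := contDiff_const.mul contDiff_id
    exact (Real.contDiff_cosh.comp h1).sub contDiff_const
  have hsmooth : ContDiff ℝ (⊤ : ℕ∞) B := by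
    rw [hBfun]
    exact contDiff_const.mul (contDiff_iff_contDiffAt.mpr fun ξ =>
      hcu.contDiffAt.rpow_const_of_ne (hupos ξ).ne')
  -- derivatives
  have hu' : ∀ ξ, HasDerivAt u (k * Real.sinh (k * ξ)) ξ := by
    intro ξ
    have h1 : HasDerivAt (fun ξ : ℝ => k * ξ) k ξ := by
      simpa using (hasDerivAt_id ξ).const_mul k
    have h2 := (Real.hasDerivAt_cosh (k * ξ)).comp ξ h1
    simpa [hu_def, mul_comm] using h2.sub_const (b / 2)
  set B1 : ℝ → ℝ := fun ξ =>
    A2 ^ p * (-p) * (u ξ ^ (-p - 1) * (k * Real.sinh (k * ξ))) with hB1_def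
  have hd1 : ∀ ξ, HasDerivAt B (B1 ξ) ξ := by
    intro ξ
    rw [hBfun]
    have h := HasDerivAt.const_mul (A2 ^ p) ((hu' ξ).rpow_const (p := -p) (Or.inl (hupos ξ).ne'))
    convert h using 1
    · rfl
    · rfl
    rw [hB1_def]; ring
  have hdB : deriv B = B1 := funext fun ξ => (hd1 ξ).deriv
  set B2 : ℝ → ℝ := fun ξ =>
    A2 ^ p * (-p) * ((k * Real.sinh (k * ξ) * (-p - 1) * u ξ ^ (-p - 2)) * (k * Real.sinh (k * ξ))
      + u ξ ^ (-p - 1) * (k * (Real.cosh (k * ξ) * k))) with hB2_def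
  have hd2 : ∀ ξ, HasDerivAt (deriv B) (B2 ξ) ξ := by
    intro ξ
    rw [hdB, hB1_def]
    have hf : HasDerivAt (fun ξ => u ξ ^ (-p - 1))
        (k * Real.sinh (k * ξ) * (-p - 1) * u ξ ^ (-p - 1 - 1)) ξ :=
      (hu' ξ).rpow_const (Or.inl (hupos ξ).ne')
    have hg : HasDerivAt (fun ξ : ℝ => k * Real.sinh (k * ξ)) (k * (Real.cosh (k * ξ) * k)) ξ := by
      have h1 : HasDerivAt (fun ξ : ℝ => k * ξ) k ξ := by
        simpa using (hasDerivAt_id ξ).const_mul k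
      exact ((Real.hasDerivAt_sinh (k * ξ)).comp ξ h1).const_mul k
    have h := HasDerivAt.const_mul (A2 ^ p * (-p)) (hf.mul hg)
    convert h using 1
    · rfl
    · rfl
    · rfl
    rw [hB2_def]
    have : (-p - 1 - 1 : ℝ) = -p - 2 := by ring
    rw [this]; try ring
  have hddB : ∀ ξ, deriv (deriv B) ξ = B2 ξ := fun ξ => (hd2 ξ).deriv
  -- decay
  have hdecay : ∃ C δ : ℝ, 0 < C ∧ 0 < δ ∧ ∀ ξ : ℝ, B ξ ≤ C * Real.exp (-δ * |ξ|) := by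
    set ε : ℝ := (2 - |b|) / 4 with hε_def
    have hε : 0 < ε := by have := abs_nonneg b; simp only [hε_def]; linarith
    refine ⟨A2 ^ p * ε ^ (-p), p * k, by positivity, by positivity, fun ξ => ?_⟩
    have hlb : ε * Real.exp (k * |ξ|) ≤ u ξ := by
      have h1 : Real.exp (k * |ξ|) ≤ 2 * Real.cosh (k * ξ) := by
        rw [Real.cosh_eq]
        rcases abs_cases ξ with ⟨h, _⟩ | ⟨h, _⟩
        · rw [h]; have := Real.exp_nonneg (-(k * ξ)); nlinarith [Real.exp_nonneg (k * ξ)]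
        · rw [h, mul_neg]; have := Real.exp_nonneg (k * ξ); nlinarith
      have h2 : 1 ≤ Real.cosh (k * ξ) := Real.one_le_cosh _
      have h3 : b / 2 ≤ |b| / 2 := by have := le_abs_self b; linarith
      have h4 : |b| < 2 := hb
      simp only [hu_def, hε_def]
      nlinarith [mul_le_mul_of_nonneg_left h1 (show (0:ℝ) ≤ (2 - |b|)/4 by linarith),
        mul_nonneg (abs_nonneg b) (show (0:ℝ) ≤ Real.cosh (k*ξ) - 1 by linarith)]
    have hmono : u ξ ^ (-p) ≤ (ε * Real.exp (k * |ξ|)) ^ (-p) :=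
      Real.rpow_le_rpow_of_nonpos (by positivity) hlb (by linarith)
    have heq : (ε * Real.exp (k * |ξ|)) ^ (-p) = ε ^ (-p) * Real.exp (-(p * k) * |ξ|) := by
      rw [Real.mul_rpow hε.le (Real.exp_nonneg _), ← Real.exp_mul]
      try ring_nf
    rw [hBeq ξ]
    calc A2 ^ p * u ξ ^ (-p) ≤ A2 ^ p * (ε * Real.exp (k * |ξ|)) ^ (-p) := by
          exact mul_le_mul_of_nonneg_left hmono (Real.rpow_pos_of_pos hA2 p).le
      _ = A2 ^ p * ε ^ (-p) * Real.exp (-(p * k) * |ξ|) := by rw [heq]; ring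
  refine ⟨hBpos, hsmooth, hdecay, fun ξ => ?_⟩
  -- the ODE
  have hv := hupos ξ
  have hc : Real.cosh (k * ξ) = u ξ + b / 2 := by simp [hu_def]
  have hs2 : Real.sinh (k * ξ) ^ 2 = (u ξ + b / 2) ^ 2 - 1 := by
    have := Real.cosh_sq (k * ξ); rw [hc] at this; linarith
  have e1 : u ξ ^ (-p - 1) = u ξ ^ (-p - 2) * u ξ := by
    rw [show (-p - 1 : ℝ) = (-p - 2) + 1 by ring, Real.rpow_add hv, Real.rpow_one]
  have e2 : u ξ ^ (-p) = u ξ ^ (-p - 2) * u ξ ^ 2 := by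
    nth_rewrite 1 [show (-p : ℝ) = (-p - 2) + 2 by ring]
    rw [Real.rpow_add hv, Real.rpow_two]
  have hσ' : (2 * σ) ≠ 0 := by positivity
  have e3 : B ξ ^ (2 * σ + 1) = A2 * A2 ^ p * (u ξ ^ (-p - 2) * u ξ) := by
    rw [hBeq ξ, Real.mul_rpow (Real.rpow_pos_of_pos hA2 p).le (Real.rpow_pos_of_pos hv _).le,
      ← Real.rpow_mul hA2.le, ← Real.rpow_mul hv.le,
      show p * (2 * σ + 1) = 1 + p by rw [hp_def]; field_simp,
      show -p * (2 * σ + 1) = (-p - 2) + 1 by rw [hp_def]; field_simp; ring_nf,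
      Real.rpow_add hA2, Real.rpow_one, Real.rpow_add hv, Real.rpow_one]
    try ring
  have e4 : B ξ ^ (4 * σ + 1) = A2 ^ 2 * A2 ^ p * u ξ ^ (-p - 2) := by
    rw [hBeq ξ, Real.mul_rpow (Real.rpow_pos_of_pos hA2 p).le (Real.rpow_pos_of_pos hv _).le,
      ← Real.rpow_mul hA2.le, ← Real.rpow_mul hv.le,
      show p * (4 * σ + 1) = 2 + p by rw [hp_def]; field_simp; ring,
      show -p * (4 * σ + 1) = -p - 2 by rw [hp_def]; field_simp; ring_nf,
      Real.rpow_add hA2, Real.rpow_two]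
    try ring
  rw [hddB ξ, e3, e4, hBeq ξ]
  simp only [hB2_def]
  rw [e1, e2, hc]
  -- now a polynomial identity in atoms A2^p, u ξ^(-p-2), u ξ, sinh(kξ), given hs2, hks
  rw [hm_def] at hks hA2_def
  set X := A2 ^ p with hX
  set W := u ξ ^ (-p - 2) with hW
  set s := Real.sinh (k * ξ) with hs
  set v := u ξ with hv'
  clear_value X W s v
  clear hB hBeq hBfun hd1 hdB hd2 hddB hsmooth hdecay hcu hu' hBpos hB1_def hB2_def
  clear_value k p A2
  have h2σ2 : (2 * σ + 2) ≠ 0 := by positivity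
  rw [hp_def, hA2_def]
  linear_combination (norm := (field_simp; ring))
    (X * W * (1 / (2 * σ)) * ((1 / (2 * σ)) + 1) * k ^ 2) * hs2 +
    (X * W * ((1 / (2 * σ)) * ((1 / (2 * σ)) + 1) * ((v + b / 2) ^ 2 - 1)
      - (1 / (2 * σ)) * v * (v + b / 2))) * hks
end

section
/- Let σ > 0. Then the algebraic lump soliton L_σ(ξ) = ( 4(σ+1) / (1 + 4σ²ξ²) )^{1/(2σ)} is a positive, smooth, algebraically decaying solution of the soliton profile equation with b = 2, that is, it solves R''(ξ) − R(ξ)^{2σ+1} + ((2σ+1)/(2σ+2)²) R(ξ)^{4σ+1} = 0 on ℝ. In particular, for σ = 1, the function L₁(ξ) = √(8/(1 + 4ξ²)) solves L'' − L³ + (3/16) L⁵ = 0. -/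
open Real

private lemma lump_denom_pos (σ ξ : ℝ) : (0:ℝ) < 1 + 4 * σ ^ 2 * ξ ^ 2 := by positivity

private lemma lump_base_pos (σ : ℝ) (hσ : 0 < σ) (ξ : ℝ) :
    (0:ℝ) < 4 * (σ + 1) / (1 + 4 * σ ^ 2 * ξ ^ 2) := by
  apply div_pos (by linarith) (lump_denom_pos σ ξ)

private lemma lump_hasDerivAt_denom (σ ξ : ℝ) :
    HasDerivAt (fun ξ : ℝ => 1 + 4 * σ ^ 2 * ξ ^ 2) (8 * σ ^ 2 * ξ) ξ := by
  have h : HasDerivAt (fun ξ : ℝ => ξ ^ 2) (2 * ξ) ξ := by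
    simpa using hasDerivAt_pow 2 ξ
  have := (h.const_mul (4 * σ ^ 2)).const_add 1
  exact this.congr_deriv (by ring)

private lemma lump_hasDerivAt_inner (σ : ℝ) (hσ : 0 < σ) (ξ : ℝ) :
    HasDerivAt (fun ξ : ℝ => 4 * (σ + 1) / (1 + 4 * σ ^ 2 * ξ ^ 2))
      (-(4 * (σ + 1) * (8 * σ ^ 2 * ξ)) / (1 + 4 * σ ^ 2 * ξ ^ 2) ^ 2) ξ := by
  have := (hasDerivAt_const ξ (4 * (σ + 1))).div (lump_hasDerivAt_denom σ ξ)
    (ne_of_gt (lump_denom_pos σ ξ))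
  exact this.congr_deriv (by ring)

private lemma lump_hasDerivAt (σ : ℝ) (hσ : 0 < σ) (ξ : ℝ) :
    HasDerivAt (fun ξ : ℝ => (4 * (σ + 1) / (1 + 4 * σ ^ 2 * ξ ^ 2)) ^ (1 / (2 * σ)))
      (-(4 * (σ + 1) * (8 * σ ^ 2 * ξ)) / (1 + 4 * σ ^ 2 * ξ ^ 2) ^ 2 * (1 / (2 * σ)) *
        (4 * (σ + 1) / (1 + 4 * σ ^ 2 * ξ ^ 2)) ^ (1 / (2 * σ) - 1)) ξ :=
  (lump_hasDerivAt_inner σ hσ ξ).rpow_const (Or.inl (ne_of_gt (lump_base_pos σ hσ ξ)))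

private lemma lump_ode (σ : ℝ) (hσ : 0 < σ) (ξ : ℝ) :
    deriv (deriv (fun ξ : ℝ => (4 * (σ + 1) / (1 + 4 * σ ^ 2 * ξ ^ 2)) ^ (1 / (2 * σ)))) ξ
      - ((4 * (σ + 1) / (1 + 4 * σ ^ 2 * ξ ^ 2)) ^ (1 / (2 * σ))) ^ (2 * σ + 1)
      + ((2 * σ + 1) / (2 * σ + 2) ^ 2) *
          ((4 * (σ + 1) / (1 + 4 * σ ^ 2 * ξ ^ 2)) ^ (1 / (2 * σ))) ^ (4 * σ + 1) = 0 := by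
  have hD : (0:ℝ) < 1 + 4 * σ ^ 2 * ξ ^ 2 := lump_denom_pos σ ξ
  have hu : (0:ℝ) < 4 * (σ + 1) / (1 + 4 * σ ^ 2 * ξ ^ 2) := lump_base_pos σ hσ ξ
  -- first derivative as a function
  have hdL : deriv (fun ξ : ℝ => (4 * (σ + 1) / (1 + 4 * σ ^ 2 * ξ ^ 2)) ^ (1 / (2 * σ)))
      = fun x : ℝ => -(4 * (σ + 1) * (8 * σ ^ 2 * x)) / (1 + 4 * σ ^ 2 * x ^ 2) ^ 2 *
          (1 / (2 * σ)) * (4 * (σ + 1) / (1 + 4 * σ ^ 2 * x ^ 2)) ^ (1 / (2 * σ) - 1) :=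
    funext fun x => (lump_hasDerivAt σ hσ x).deriv
  -- derivative of the numerator-part n
  have hNum : HasDerivAt (fun x : ℝ => -(4 * (σ + 1) * (8 * σ ^ 2 * x)))
      (-(4 * (σ + 1) * (8 * σ ^ 2))) ξ := by
    have h0 : HasDerivAt (fun x : ℝ => x) 1 ξ := hasDerivAt_id ξ
    have := ((h0.const_mul (8 * σ ^ 2)).const_mul (4 * (σ + 1))).neg
    exact this.congr_deriv (by ring)
  have hDen : HasDerivAt (fun x : ℝ => (1 + 4 * σ ^ 2 * x ^ 2) ^ 2)
      (2 * (1 + 4 * σ ^ 2 * ξ ^ 2) * (8 * σ ^ 2 * ξ)) ξ := by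
    have := (lump_hasDerivAt_denom σ ξ).pow 2
    exact this.congr_deriv (by push_cast; ring)
  have hn : HasDerivAt (fun x : ℝ => -(4 * (σ + 1) * (8 * σ ^ 2 * x)) /
      (1 + 4 * σ ^ 2 * x ^ 2) ^ 2)
      ((-(4 * (σ + 1) * (8 * σ ^ 2)) * (1 + 4 * σ ^ 2 * ξ ^ 2) ^ 2 -
          -(4 * (σ + 1) * (8 * σ ^ 2 * ξ)) * (2 * (1 + 4 * σ ^ 2 * ξ ^ 2) * (8 * σ ^ 2 * ξ))) /
        ((1 + 4 * σ ^ 2 * ξ ^ 2) ^ 2) ^ 2) ξ :=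
    hNum.div hDen (pow_ne_zero 2 (ne_of_gt hD))
  have hr : HasDerivAt
      (fun x : ℝ => (4 * (σ + 1) / (1 + 4 * σ ^ 2 * x ^ 2)) ^ (1 / (2 * σ) - 1))
      (-(4 * (σ + 1) * (8 * σ ^ 2 * ξ)) / (1 + 4 * σ ^ 2 * ξ ^ 2) ^ 2 * (1 / (2 * σ) - 1) *
        (4 * (σ + 1) / (1 + 4 * σ ^ 2 * ξ ^ 2)) ^ (1 / (2 * σ) - 1 - 1)) ξ :=
    (lump_hasDerivAt_inner σ hσ ξ).rpow_const (Or.inl (ne_of_gt hu))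
  have hG := (hn.mul_const (1 / (2 * σ))).mul hr
  have h2 : deriv (deriv (fun ξ : ℝ =>
      (4 * (σ + 1) / (1 + 4 * σ ^ 2 * ξ ^ 2)) ^ (1 / (2 * σ)))) ξ =
      ((-(4 * (σ + 1) * (8 * σ ^ 2)) * (1 + 4 * σ ^ 2 * ξ ^ 2) ^ 2 -
          -(4 * (σ + 1) * (8 * σ ^ 2 * ξ)) * (2 * (1 + 4 * σ ^ 2 * ξ ^ 2) * (8 * σ ^ 2 * ξ))) /
        ((1 + 4 * σ ^ 2 * ξ ^ 2) ^ 2) ^ 2 * (1 / (2 * σ)) *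
          (4 * (σ + 1) / (1 + 4 * σ ^ 2 * ξ ^ 2)) ^ (1 / (2 * σ) - 1) +
        -(4 * (σ + 1) * (8 * σ ^ 2 * ξ)) / (1 + 4 * σ ^ 2 * ξ ^ 2) ^ 2 * (1 / (2 * σ)) *
          (-(4 * (σ + 1) * (8 * σ ^ 2 * ξ)) / (1 + 4 * σ ^ 2 * ξ ^ 2) ^ 2 * (1 / (2 * σ) - 1) *
            (4 * (σ + 1) / (1 + 4 * σ ^ 2 * ξ ^ 2)) ^ (1 / (2 * σ) - 1 - 1))) := by
    rw [hdL]
    exact hG.deriv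
  rw [h2]
  -- rewrite all rpow expressions in terms of P = u ^ (1/(2σ))
  have h2r : (4 * (σ + 1) / (1 + 4 * σ ^ 2 * ξ ^ 2)) ^ (2:ℝ)
      = (4 * (σ + 1) / (1 + 4 * σ ^ 2 * ξ ^ 2)) ^ (2:ℕ) := by
    rw [show ((2:ℝ)) = ((2:ℕ):ℝ) by norm_num, Real.rpow_natCast]
  have e1 : (4 * (σ + 1) / (1 + 4 * σ ^ 2 * ξ ^ 2)) ^ (1 / (2 * σ) - 1)
      = (4 * (σ + 1) / (1 + 4 * σ ^ 2 * ξ ^ 2)) ^ (1 / (2 * σ)) /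
        (4 * (σ + 1) / (1 + 4 * σ ^ 2 * ξ ^ 2)) := by
    rw [Real.rpow_sub hu, Real.rpow_one]
  have e2 : (4 * (σ + 1) / (1 + 4 * σ ^ 2 * ξ ^ 2)) ^ (1 / (2 * σ) - 1 - 1)
      = (4 * (σ + 1) / (1 + 4 * σ ^ 2 * ξ ^ 2)) ^ (1 / (2 * σ)) /
        (4 * (σ + 1) / (1 + 4 * σ ^ 2 * ξ ^ 2)) ^ (2:ℕ) := by
    rw [show 1 / (2 * σ) - 1 - 1 = 1 / (2 * σ) - (2:ℝ) by ring, Real.rpow_sub hu, h2r]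
  have e3 : ((4 * (σ + 1) / (1 + 4 * σ ^ 2 * ξ ^ 2)) ^ (1 / (2 * σ))) ^ (2 * σ + 1)
      = (4 * (σ + 1) / (1 + 4 * σ ^ 2 * ξ ^ 2)) ^ (1 / (2 * σ)) *
        (4 * (σ + 1) / (1 + 4 * σ ^ 2 * ξ ^ 2)) := by
    rw [← Real.rpow_mul hu.le,
      show (1 / (2 * σ)) * (2 * σ + 1) = 1 / (2 * σ) + 1 by field_simp; ring,
      Real.rpow_add hu, Real.rpow_one]
  have e4 : ((4 * (σ + 1) / (1 + 4 * σ ^ 2 * ξ ^ 2)) ^ (1 / (2 * σ))) ^ (4 * σ + 1)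
      = (4 * (σ + 1) / (1 + 4 * σ ^ 2 * ξ ^ 2)) ^ (1 / (2 * σ)) *
        (4 * (σ + 1) / (1 + 4 * σ ^ 2 * ξ ^ 2)) ^ (2:ℕ) := by
    rw [← Real.rpow_mul hu.le,
      show (1 / (2 * σ)) * (4 * σ + 1) = 1 / (2 * σ) + (2:ℝ) by field_simp; ring,
      Real.rpow_add hu, h2r]
  rw [e1, e2, e3, e4]
  generalize (4 * (σ + 1) / (1 + 4 * σ ^ 2 * ξ ^ 2)) ^ (1 / (2 * σ)) = P
  have hσ' : σ ≠ 0 := ne_of_gt hσ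
  have hD' : (1 + 4 * σ ^ 2 * ξ ^ 2) ≠ 0 := ne_of_gt hD
  have hs1 : σ + 1 ≠ 0 := by positivity
  have hs2 : 2 * σ + 2 ≠ 0 := by positivity
  field_simp
  ring

private lemma lump_ode_one (ξ : ℝ) :
    deriv (deriv (fun y : ℝ => Real.sqrt (8 / (1 + 4 * y ^ 2)))) ξ
      - (Real.sqrt (8 / (1 + 4 * ξ ^ 2))) ^ 3
      + (3 / 16) * (Real.sqrt (8 / (1 + 4 * ξ ^ 2))) ^ 5 = 0 := by
  have h := lump_ode 1 one_pos ξ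
  rw [show (2 * (1:ℝ) + 1) = ((3:ℕ):ℝ) by norm_num,
    show (4 * (1:ℝ) + 1) = ((5:ℕ):ℝ) by norm_num,
    Real.rpow_natCast, Real.rpow_natCast,
    show (((3:ℕ):ℝ) / (2 * (1:ℝ) + 2) ^ 2) = 3 / 16 by norm_num] at h
  have hfun : (fun y : ℝ => Real.sqrt (8 / (1 + 4 * y ^ 2)))
      = fun y : ℝ => (4 * ((1:ℝ) + 1) / (1 + 4 * (1:ℝ) ^ 2 * y ^ 2)) ^ (1 / (2 * (1:ℝ))) := by
    funext y
    rw [Real.sqrt_eq_rpow]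
    norm_num
  have hpt : Real.sqrt (8 / (1 + 4 * ξ ^ 2))
      = (4 * ((1:ℝ) + 1) / (1 + 4 * (1:ℝ) ^ 2 * ξ ^ 2)) ^ (1 / (2 * (1:ℝ))) := by
    rw [Real.sqrt_eq_rpow]
    norm_num
  rw [hfun, hpt]
  exact h

/-- **The algebraic lump soliton.**
For `σ > 0`, the lump `L_σ(ξ) = (4(σ+1)/(1+4σ²ξ²))^{1/(2σ)}` is positive, smooth,
algebraically decaying, and solves the `b = 2` soliton profile equation
`R'' − R^{2σ+1} + ((2σ+1)/(2σ+2)²) R^{4σ+1} = 0`. In particular for `σ = 1`,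
`L₁(ξ) = √(8/(1+4ξ²))` solves `L'' − L³ + (3/16) L⁵ = 0`. -/
theorem lump_soliton (σ : ℝ) (hσ : 0 < σ)
    (L : ℝ → ℝ)
    (hL : ∀ ξ : ℝ, L ξ = (4 * (σ + 1) / (1 + 4 * σ ^ 2 * ξ ^ 2)) ^ (1 / (2 * σ))) :
    (∀ ξ : ℝ, 0 < L ξ) ∧
    ContDiff ℝ (⊤ : ℕ∞) L ∧
    (∃ C : ℝ, 0 < C ∧ ∀ ξ : ℝ, L ξ ≤ C * (1 + ξ ^ 2) ^ (-(1 / (2 * σ)))) ∧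
    (∀ ξ : ℝ,
      deriv (deriv L) ξ - L ξ ^ (2 * σ + 1)
        + ((2 * σ + 1) / (2 * σ + 2) ^ 2) * L ξ ^ (4 * σ + 1) = 0) ∧
    (∀ ξ : ℝ,
      deriv (deriv (fun y : ℝ => Real.sqrt (8 / (1 + 4 * y ^ 2)))) ξ
        - (Real.sqrt (8 / (1 + 4 * ξ ^ 2))) ^ 3
        + (3 / 16) * (Real.sqrt (8 / (1 + 4 * ξ ^ 2))) ^ 5 = 0) := by
  obtain rfl : L = fun ξ : ℝ => (4 * (σ + 1) / (1 + 4 * σ ^ 2 * ξ ^ 2)) ^ (1 / (2 * σ)) :=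
    funext hL
  refine ⟨fun ξ => Real.rpow_pos_of_pos (lump_base_pos σ hσ ξ) _, ?_, ?_, ?_,
    fun ξ => lump_ode_one ξ⟩
  · -- smoothness
    have hden : ContDiff ℝ (⊤ : ℕ∞) (fun ξ : ℝ => 1 + 4 * σ ^ 2 * ξ ^ 2) := by fun_prop
    have hinner : ContDiff ℝ (⊤ : ℕ∞) (fun ξ : ℝ => 4 * (σ + 1) / (1 + 4 * σ ^ 2 * ξ ^ 2)) :=
      contDiff_const.div hden fun x => ne_of_gt (lump_denom_pos σ x)
    rw [contDiff_iff_contDiffAt]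
    intro x
    exact (hinner.contDiffAt).rpow_const_of_ne (ne_of_gt (lump_base_pos σ hσ x))
  · -- decay
    refine ⟨(4 * (σ + 1) * max 1 (1 / (4 * σ ^ 2))) ^ (1 / (2 * σ)), ?_, ?_⟩
    · apply Real.rpow_pos_of_pos
      have : (0:ℝ) < max 1 (1 / (4 * σ ^ 2)) := lt_max_of_lt_left one_pos
      nlinarith
    · intro ξ
      have hD : (0:ℝ) < 1 + 4 * σ ^ 2 * ξ ^ 2 := lump_denom_pos σ ξ
      have h1 : (0:ℝ) < 1 + ξ ^ 2 := by positivity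
      have hM1 : (1:ℝ) ≤ max 1 (1 / (4 * σ ^ 2)) := le_max_left _ _
      have hM2 : (1:ℝ) ≤ 4 * σ ^ 2 * max 1 (1 / (4 * σ ^ 2)) := by
        have h := le_max_right 1 (1 / (4 * σ ^ 2))
        have hσ2 : (0:ℝ) < 4 * σ ^ 2 := by positivity
        calc (1:ℝ) = 4 * σ ^ 2 * (1 / (4 * σ ^ 2)) := by field_simp
        _ ≤ 4 * σ ^ 2 * max 1 (1 / (4 * σ ^ 2)) := by
            exact mul_le_mul_of_nonneg_left h hσ2.le
      have key : 4 * (σ + 1) / (1 + 4 * σ ^ 2 * ξ ^ 2)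
          ≤ 4 * (σ + 1) * max 1 (1 / (4 * σ ^ 2)) / (1 + ξ ^ 2) := by
        rw [div_le_div_iff₀ hD h1]
        have t1 : (0:ℝ) ≤ (σ + 1) * (max 1 (1 / (4 * σ ^ 2)) - 1) :=
          mul_nonneg (by linarith) (by linarith)
        have t2 : (0:ℝ) ≤ (σ + 1) * ((4 * σ ^ 2 * max 1 (1 / (4 * σ ^ 2)) - 1) * ξ ^ 2) :=
          mul_nonneg (by linarith) (mul_nonneg (by linarith) (sq_nonneg ξ))
        nlinarith [t1, t2]
      calc (4 * (σ + 1) / (1 + 4 * σ ^ 2 * ξ ^ 2)) ^ (1 / (2 * σ))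
          ≤ (4 * (σ + 1) * max 1 (1 / (4 * σ ^ 2)) / (1 + ξ ^ 2)) ^ (1 / (2 * σ)) := by
            apply Real.rpow_le_rpow (lump_base_pos σ hσ ξ).le key (by positivity)
        _ = (4 * (σ + 1) * max 1 (1 / (4 * σ ^ 2))) ^ (1 / (2 * σ)) *
              (1 + ξ ^ 2) ^ (-(1 / (2 * σ))) := by
            rw [Real.div_rpow (by positivity) h1.le, Real.rpow_neg h1.le, div_eq_mul_inv]
  · -- the ODE
    exact fun ξ => lump_ode σ hσ ξ
end

section
/- Let b ∈ ℝ with |b| < 2 and let B₁ be the σ = 1 bright soliton, B₁(ξ) = ( (4 − b²) / ( cosh( √(4 − b²) ξ ) − b/2 ) )^{1/2}. Then ∫_0^∞ B₁(ξ)² dξ = 2 arccos(−b/2); in particular, ∫_0^∞ B₁(ξ)² dξ → 2π as b → 2⁻. -/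
open MeasureTheory Filter

lemma tendsto_sinh_div_cosh : Tendsto (fun u : ℝ => Real.sinh u / Real.cosh u) atTop (nhds 1) := by
  have heq : ∀ u : ℝ, Real.sinh u / Real.cosh u
      = (1 - Real.exp (-(2 * u))) / (1 + Real.exp (-(2 * u))) := by
    intro u
    rw [Real.sinh_eq, Real.cosh_eq]
    have h1 : Real.exp (-(2 * u)) = Real.exp (-u) * Real.exp (-u) := by
      rw [← Real.exp_add]; ring_nf
    have h2 : Real.exp u * Real.exp (-u) = 1 := by rw [← Real.exp_add]; simp
    have h3 : 0 < Real.exp u + Real.exp (-u) := by positivity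
    have h4 : 0 < 1 + Real.exp (-(2 * u)) := by positivity
    field_simp
    linear_combination (norm := ring_nf) 2 * Real.exp u * h1 + 2 * Real.exp (-u) * h2
  simp only [heq]
  have h2u : Tendsto (fun u : ℝ => 2 * u) atTop atTop :=
    (tendsto_const_mul_atTop_of_pos (by norm_num : (0:ℝ) < 2)).mpr tendsto_id
  have hexp : Tendsto (fun u : ℝ => Real.exp (-(2 * u))) atTop (nhds 0) := by
    exact Real.tendsto_exp_atBot.comp (tendsto_neg_atTop_atBot.comp h2u)
  have hnum : Tendsto (fun u : ℝ => 1 - Real.exp (-(2 * u))) atTop (nhds (1 - 0)) :=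
    tendsto_const_nhds.sub hexp
  have hden : Tendsto (fun u : ℝ => 1 + Real.exp (-(2 * u))) atTop (nhds (1 + 0)) :=
    tendsto_const_nhds.add hexp
  have := hnum.div hden (by norm_num)
  simpa [Pi.div_def] using this

lemma key_integral (b : ℝ) (hb : |b| < 2) :
    (∫ ξ in Set.Ioi (0 : ℝ),
        (Real.sqrt ((4 - b ^ 2) / (Real.cosh (Real.sqrt (4 - b ^ 2) * ξ) - b / 2))) ^ 2)
      = 2 * Real.arccos (-b / 2) := by
  obtain ⟨hb1, hb2⟩ := abs_lt.mp hb
  have hpos : 0 < 4 - b ^ 2 := by nlinarith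
  set a : ℝ := Real.sqrt (4 - b ^ 2) with ha_def
  have ha : 0 < a := Real.sqrt_pos.mpr hpos
  have ha2 : a ^ 2 = 4 - b ^ 2 := Real.sq_sqrt hpos.le
  have hKarg : 0 ≤ (2 + b) / (2 - b) := by
    apply div_nonneg <;> linarith
  set K : ℝ := Real.sqrt ((2 + b) / (2 - b)) with hK_def
  have hK0 : 0 ≤ K := Real.sqrt_nonneg _
  have hK2 : K ^ 2 = (2 + b) / (2 - b) := Real.sq_sqrt hKarg
  have haK : a * K = 2 + b := by
    rw [ha_def, hK_def, ← Real.sqrt_mul hpos.le]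
    rw [show (4 - b ^ 2) * ((2 + b) / (2 - b)) = (2 + b) ^ 2 by
      rw [mul_div_assoc', div_eq_iff (by intro h; linarith [sub_eq_zero.mp h] : (2:ℝ) - b ≠ 0)]
      ring]
    exact Real.sqrt_sq (by linarith)
  have hden : ∀ ξ : ℝ, 0 < Real.cosh (a * ξ) - b / 2 := by
    intro ξ
    have := Real.one_le_cosh (a * ξ)
    linarith
  -- rewrite the integrand
  have hEq : ∀ ξ : ℝ, (Real.sqrt ((4 - b ^ 2) / (Real.cosh (a * ξ) - b / 2))) ^ 2
      = (4 - b ^ 2) / (Real.cosh (a * ξ) - b / 2) := fun ξ =>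
    Real.sq_sqrt (div_nonneg hpos.le (hden ξ).le)
  simp only [hEq]
  -- antiderivative
  set F : ℝ → ℝ := fun ξ => 4 * Real.arctan (K * (Real.sinh (a * ξ / 2) / Real.cosh (a * ξ / 2)))
    with hF_def
  have hFderiv : ∀ ξ : ℝ, HasDerivAt F ((4 - b ^ 2) / (Real.cosh (a * ξ) - b / 2)) ξ := by
    intro ξ
    set u : ℝ := a * ξ / 2 with hu_def
    have hc : 0 < Real.cosh u := Real.cosh_pos u
    have h1 : HasDerivAt (fun ξ : ℝ => a * ξ / 2) (a / 2) ξ := by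
      simpa using ((hasDerivAt_id ξ).const_mul a).div_const 2
    have ht : HasDerivAt (fun v : ℝ => Real.sinh v / Real.cosh v)
        ((Real.cosh u * Real.cosh u - Real.sinh u * Real.sinh u) / Real.cosh u ^ 2) u :=
      (Real.hasDerivAt_sinh u).div (Real.hasDerivAt_cosh u) hc.ne'
    have h2 := (ht.comp ξ h1).const_mul K
    have h3 := ((Real.hasDerivAt_arctan
        (K * (Real.sinh u / Real.cosh u))).comp ξ h2).const_mul 4
    refine h3.congr_deriv ?_
    symm
    set c : ℝ := Real.cosh u
    set s : ℝ := Real.sinh u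
    have hcs : c ^ 2 - s ^ 2 = 1 := Real.cosh_sq_sub_sinh_sq u
    have hcosh2 : Real.cosh (a * ξ) = c ^ 2 + s ^ 2 := by
      rw [show a * ξ = 2 * u by rw [hu_def]; ring, Real.cosh_two_mul]
    rw [hcosh2]
    have hd2 : 0 < c ^ 2 + s ^ 2 - b / 2 := by
      rw [← hcosh2]; exact hden ξ
    have hP : 0 < c ^ 2 + K ^ 2 * s ^ 2 := by
      have h1 := pow_pos hc 2
      nlinarith [mul_nonneg (sq_nonneg K) (sq_nonneg s)]
    have hA : 1 + (K * (s / c)) ^ 2 = (c ^ 2 + K ^ 2 * s ^ 2) / c ^ 2 := by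
      field_simp
    have hcs' : c * c - s * s = 1 := by linear_combination hcs
    rw [hA, one_div_div, hcs']
    have h2b : (2:ℝ) - b ≠ 0 := by intro h; linarith [sub_eq_zero.mp h]
    have hP2 : (2 - b) * K ^ 2 = 2 + b := by
      rw [hK2, mul_div_cancel₀ _ h2b]
    have hRHS : 4 * (c ^ 2 / (c ^ 2 + K ^ 2 * s ^ 2) * (K * (1 / c ^ 2 * (a / 2))))
        = 2 * (2 + b) / (c ^ 2 + K ^ 2 * s ^ 2) := by
      rw [← haK]; field_simp [hc.ne']; ring
    rw [hRHS, div_eq_div_iff hd2.ne' hP.ne']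
    linear_combination (-b * (2 + b)) * hcs + (2 + b) * s ^ 2 * hP2
  have hFcont : ContinuousWithinAt F (Set.Ici 0) 0 :=
    (hFderiv 0).continuousAt.continuousWithinAt
  have hF0 : F 0 = 0 := by simp [hF_def]
  have hFtop : Tendsto F atTop (nhds (4 * Real.arctan K)) := by
    have hu : Tendsto (fun ξ : ℝ => a * ξ / 2) atTop atTop := by
      apply Tendsto.atTop_div_const (by norm_num : (0:ℝ) < 2)
      exact (tendsto_const_mul_atTop_of_pos ha).mpr tendsto_id
    have := (Real.continuous_arctan.tendsto K).comp
      ((tendsto_sinh_div_cosh.comp hu).const_mul K |>.congr' (by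
        filter_upwards with ξ; rfl) |>.mono_right (by simp))
    simpa [hF_def, Function.comp] using this.const_mul 4
  have hnonneg : ∀ ξ ∈ Set.Ioi (0:ℝ), 0 ≤ (4 - b ^ 2) / (Real.cosh (a * ξ) - b / 2) :=
    fun ξ _ => div_nonneg hpos.le (hden ξ).le
  have hint := integral_Ioi_of_hasDerivAt_of_nonneg hFcont
    (fun x _ => hFderiv x) hnonneg hFtop
  rw [hint, hF0, sub_zero]
  -- 4 arctan K = 2 arccos (-b/2)
  have harctan : Real.arccos (-b / 2) = 2 * Real.arctan K := by
    have h1K : (0:ℝ) < 1 + K ^ 2 := by positivity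
    have hsum : 1 + K ^ 2 = 4 / (2 - b) := by
      rw [hK2]
      have h2b : (2:ℝ) - b ≠ 0 := by intro h; linarith [sub_eq_zero.mp h]
      field_simp
      ring
    have hcos : Real.cos (2 * Real.arctan K) = -b / 2 := by
      rw [Real.cos_two_mul, Real.cos_arctan]
      rw [div_pow, one_pow, Real.sq_sqrt (by positivity : (0:ℝ) ≤ 1 + K ^ 2)]
      rw [hsum, one_div_div]
      ring
    rw [← hcos, Real.arccos_cos]
    · have h0 : (0:ℝ) ≤ Real.arctan K := by
        rw [← Real.arctan_zero]; exact Real.arctan_strictMono.monotone hK0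
      nlinarith [h0]
    · nlinarith [Real.arctan_lt_pi_div_two K, Real.pi_pos]
  rw [harctan]; ring

/-- **Half-line mass of the `σ = 1` bright soliton.**
For `|b| < 2` and `B₁(ξ) = ((4−b²)/(cosh(√(4−b²)ξ) − b/2))^{1/2}`, one has
`∫_0^∞ B₁² = 2 arccos(−b/2)`; in particular this tends to `2π` as `b → 2⁻`. -/
theorem bright_soliton_halfline_mass :
    (∀ b : ℝ, |b| < 2 →
      (∫ ξ in Set.Ioi (0 : ℝ),
        (Real.sqrt ((4 - b ^ 2) / (Real.cosh (Real.sqrt (4 - b ^ 2) * ξ) - b / 2))) ^ 2)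
        = 2 * Real.arccos (-b / 2)) ∧
    Tendsto (fun b : ℝ =>
      ∫ ξ in Set.Ioi (0 : ℝ),
        (Real.sqrt ((4 - b ^ 2) / (Real.cosh (Real.sqrt (4 - b ^ 2) * ξ) - b / 2))) ^ 2)
      (nhdsWithin 2 (Set.Iio 2)) (nhds (2 * Real.pi)) := by
  constructor
  · exact key_integral
  · have hcont : Tendsto (fun b : ℝ => 2 * Real.arccos (-b / 2)) (nhdsWithin 2 (Set.Iio 2))
        (nhds (2 * Real.pi)) := by
      have : Continuous (fun b : ℝ => 2 * Real.arccos (-b / 2)) := by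
        exact continuous_const.mul (Real.continuous_arccos.comp (by continuity))
      have h2 : Tendsto (fun b : ℝ => 2 * Real.arccos (-b / 2)) (nhdsWithin 2 (Set.Iio 2))
          (nhds (2 * Real.arccos (-2 / 2))) := (this.tendsto 2).mono_left nhdsWithin_le_nhds
      simpa [show (-2:ℝ) / 2 = -1 by norm_num, Real.arccos_neg_one] using h2
    apply Tendsto.congr' _ hcont
    filter_upwards [Ioo_mem_nhdsLT_of_mem (show (2:ℝ) ∈ Set.Ioc 0 2 by norm_num)] with b hb
    exact (key_integral b (abs_lt.mpr ⟨by linarith [hb.1], hb.2⟩)).symm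
end

section
/- Let b ∈ ℝ with |b| < 2, let B₁(ξ) = ( (4 − b²) / ( cosh( √(4 − b²) ξ ) − b/2 ) )^{1/2} be the σ = 1 bright soliton, and define θ_b(ξ) = (b/2) ξ − (1/4) ∫_0^ξ B₁(η)² dη and ψ_b(ξ) = B₁(ξ) e^{i θ_b(ξ)}. Then the energy of ψ_b satisfies ∫_ℝ ( |ψ_b'(ξ)|² + (1/2) |ψ_b(ξ)|² Im( conj(ψ_b(ξ)) ψ_b'(ξ) ) ) dξ = −b √(4 − b²). -/
open MeasureTheory Filter Set Topology

noncomputable def solA (b : ℝ) : ℝ := Real.sqrt (4 - b ^ 2)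

noncomputable def solX (b ξ : ℝ) : ℝ := Real.cosh (solA b * ξ) - b / 2

noncomputable def solU (b ξ : ℝ) : ℝ := (4 - b ^ 2) / solX b ξ

noncomputable def solF (b ξ : ℝ) : ℝ :=
  solU b ξ + b / 4 * solU b ξ ^ 2 - solU b ξ ^ 3 / 8

noncomputable def solG (b ξ : ℝ) : ℝ :=
  -(solA b * b / 2) * Real.sinh (solA b * ξ) / solX b ξ
    - solA b ^ 3 / 4 * Real.sinh (solA b * ξ) / solX b ξ ^ 2

section

variable {b : ℝ}

lemma hq_pos (hb : |b| < 2) : 0 < 4 - b ^ 2 := by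
  rcases abs_lt.1 hb with ⟨h1, h2⟩; nlinarith

lemma solA_pos (hb : |b| < 2) : 0 < solA b := Real.sqrt_pos.2 (hq_pos hb)

lemma solA_sq (hb : |b| < 2) : solA b ^ 2 = 4 - b ^ 2 := Real.sq_sqrt (hq_pos hb).le

lemma solX_pos (hb : |b| < 2) (ξ : ℝ) : 0 < solX b ξ := by
  have h1 := Real.one_le_cosh (solA b * ξ)
  have h2 := (abs_lt.1 hb).2
  simp only [solX]; linarith

lemma solU_pos (hb : |b| < 2) (ξ : ℝ) : 0 < solU b ξ :=
  div_pos (hq_pos hb) (solX_pos hb ξ)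

lemma hasDerivAt_sinhA (ξ : ℝ) :
    HasDerivAt (fun x => Real.sinh (solA b * x)) (Real.cosh (solA b * ξ) * solA b) ξ := by
  have h := (Real.hasDerivAt_sinh (solA b * ξ)).comp ξ ((hasDerivAt_id ξ).const_mul (solA b))
  simpa [Function.comp_def] using h

lemma hasDerivAt_solX (hb : |b| < 2) (ξ : ℝ) :
    HasDerivAt (solX b) (Real.sinh (solA b * ξ) * solA b) ξ := by
  have h := (Real.hasDerivAt_cosh (solA b * ξ)).comp ξ ((hasDerivAt_id ξ).const_mul (solA b))
  have h2 : HasDerivAt (fun x => Real.cosh (solA b * x)) (Real.sinh (solA b * ξ) * solA b) ξ := by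
    simpa [Function.comp_def] using h
  exact h2.sub_const (b / 2)

lemma hasDerivAt_solU (hb : |b| < 2) (ξ : ℝ) :
    HasDerivAt (solU b)
      (-((4 - b ^ 2) * (Real.sinh (solA b * ξ) * solA b)) / solX b ξ ^ 2) ξ := by
  have h := (hasDerivAt_const ξ ((4 : ℝ) - b ^ 2)).div (hasDerivAt_solX hb ξ) (solX_pos hb ξ).ne'
  rw [zero_mul, zero_sub] at h
  exact h

lemma solG_alg (b k s X A : ℝ) (hX0 : X ≠ 0) (hk : k = X + b / 2) (hA : A ^ 2 = 4 - b ^ 2)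
    (hs : s ^ 2 = k ^ 2 - 1) :
    (-(A * b / 2) * (k * A) * X - -(A * b / 2) * s * (s * A)) / X ^ 2 -
      (A ^ 3 / 4 * (k * A) * X ^ 2 - A ^ 3 / 4 * s * (((2 : ℕ) : ℝ) * X ^ 1 * (s * A))) /
        (X ^ 2) ^ 2
      = (4 - b ^ 2) / X + b / 4 * ((4 - b ^ 2) / X) ^ 2 - ((4 - b ^ 2) / X) ^ 3 / 8 := by
  have e1 : -(A * b / 2) * (k * A) * X - -(A * b / 2) * s * (s * A)
      = -((4 - b ^ 2) * b / 2) * (k * X - s ^ 2) := by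
    linear_combination (-(b / 2) * (k * X - s ^ 2)) * hA
  have e2 : A ^ 3 / 4 * (k * A) * X ^ 2 - A ^ 3 / 4 * s * (((2 : ℕ) : ℝ) * X ^ 1 * (s * A))
      = (4 - b ^ 2) ^ 2 / 4 * (k * X ^ 2 - 2 * X * s ^ 2) := by
    push_cast
    linear_combination ((A ^ 2 + (4 - b ^ 2)) / 4 * (k * X ^ 2 - 2 * X * s ^ 2)) * hA
  rw [e1, e2, hs, hk]
  field_simp
  ring

lemma hasDerivAt_solG (hb : |b| < 2) (ξ : ℝ) :
    HasDerivAt (solG b) (solF b ξ) ξ := by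
  have hXne : solX b ξ ≠ 0 := (solX_pos hb ξ).ne'
  have h1 := ((hasDerivAt_sinhA (b := b) ξ).const_mul (-(solA b * b / 2))).div
    (hasDerivAt_solX hb ξ) hXne
  have h2 := ((hasDerivAt_sinhA (b := b) ξ).const_mul (solA b ^ 3 / 4)).div
    ((hasDerivAt_solX hb ξ).pow 2) (pow_ne_zero 2 hXne)
  have h := h1.sub h2
  have hval := solG_alg b (Real.cosh (solA b * ξ)) (Real.sinh (solA b * ξ)) (solX b ξ) (solA b)
    hXne (by simp only [solX]; ring) (solA_sq hb)
    (by nlinarith [Real.cosh_sq (solA b * ξ)])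
  have hF : solF b ξ = (4 - b ^ 2) / solX b ξ + b / 4 * ((4 - b ^ 2) / solX b ξ) ^ 2
      - ((4 - b ^ 2) / solX b ξ) ^ 3 / 8 := rfl
  rw [hF, ← hval]
  exact h

lemma energy_alg (b k s X A R T : ℝ) (hX0 : X ≠ 0) (hR0 : R ≠ 0) (hq0 : 4 - b ^ 2 ≠ 0)
    (hk : k = X + b / 2) (hA : A ^ 2 = 4 - b ^ 2) (hs : s ^ 2 = k ^ 2 - 1)
    (hR : R ^ 2 = (4 - b ^ 2) / X) (hT : T = b / 2 - 1 / 4 * R ^ 2) :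
    (-((4 - b ^ 2) * (s * A)) / X ^ 2 / (2 * R)) ^ 2 + (R * T) ^ 2
        + 1 / 2 * R ^ 2 * (R ^ 2 * T)
      = (4 - b ^ 2) / X + b / 4 * ((4 - b ^ 2) / X) ^ 2 - ((4 - b ^ 2) / X) ^ 3 / 8 := by
  have t1 : (-((4 - b ^ 2) * (s * A)) / X ^ 2 / (2 * R)) ^ 2
      = (4 - b ^ 2) ^ 2 * (A ^ 2 * s ^ 2) / (X ^ 4 * (4 * R ^ 2)) := by
    field_simp; ring
  have t2 : (R * T) ^ 2 = R ^ 2 * T ^ 2 := by ring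
  rw [t1, t2, hA, hs, hT, hR, hk]
  field_simp
  ring

lemma tendsto_solG_atTop (hb : |b| < 2) :
    Tendsto (solG b) atTop (𝓝 (-(solA b * b / 2))) := by
  have ha := solA_pos hb
  have hmul : Tendsto (fun ξ : ℝ => solA b * ξ) atTop atTop :=
    Tendsto.const_mul_atTop ha tendsto_id
  have hcosh : Tendsto Real.cosh atTop atTop := by
    apply tendsto_atTop_mono (fun x => ?_) (Real.tendsto_exp_atTop.atTop_div_const two_pos)
    rw [Real.cosh_eq]
    have := Real.exp_pos (-x)
    linarith
  have hXtop : Tendsto (fun ξ => solX b ξ) atTop atTop := by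
    apply tendsto_atTop_add_const_right
    exact hcosh.comp hmul
  have hexp0 : Tendsto (fun ξ : ℝ => Real.exp (-(solA b * ξ))) atTop (𝓝 0) :=
    Real.tendsto_exp_atBot.comp (tendsto_neg_atTop_atBot.comp hmul)
  have hL1 : Tendsto (fun ξ => Real.sinh (solA b * ξ) / solX b ξ) atTop (𝓝 1) := by
    have key : ∀ ξ : ℝ, 1 + (b / 2 - Real.exp (-(solA b * ξ))) / solX b ξ
        = Real.sinh (solA b * ξ) / solX b ξ := by
      intro ξ
      have hXne : solX b ξ ≠ 0 := (solX_pos hb ξ).ne'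
      have hsinh : Real.sinh (solA b * ξ)
          = solX b ξ + (b / 2 - Real.exp (-(solA b * ξ))) := by
        simp only [solX]
        rw [Real.sinh_eq, Real.cosh_eq]
        ring
      rw [hsinh, add_div, div_self hXne]
    have h0 : Tendsto (fun ξ => (b / 2 - Real.exp (-(solA b * ξ))) / solX b ξ) atTop (𝓝 0) :=
      (tendsto_const_nhds.sub hexp0).div_atTop hXtop
    have := (tendsto_const_nhds (α := ℝ) (x := (1:ℝ))).add h0
    rw [add_zero] at this
    exact this.congr key
  have hL2 : Tendsto (fun ξ => Real.sinh (solA b * ξ) / solX b ξ ^ 2) atTop (𝓝 0) := by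
    have hinv : Tendsto (fun ξ => (solX b ξ)⁻¹) atTop (𝓝 0) := hXtop.inv_tendsto_atTop
    have := hL1.mul hinv
    rw [one_mul] at this
    apply this.congr
    intro ξ
    ring
  have hfin := (hL1.const_mul (-(solA b * b / 2))).sub (hL2.const_mul (solA b ^ 3 / 4))
  rw [mul_one, mul_zero, sub_zero] at hfin
  apply hfin.congr
  intro ξ
  simp only [solG]
  ring

lemma solG_odd (ξ : ℝ) : solG b (-ξ) = -solG b ξ := by
  simp only [solG, solX, mul_neg, Real.sinh_neg, Real.cosh_neg]
  ring

lemma tendsto_solG_atBot (hb : |b| < 2) :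
    Tendsto (solG b) atBot (𝓝 (solA b * b / 2)) := by
  have h := (tendsto_solG_atTop hb).comp tendsto_neg_atBot_atTop
  have h2 : Tendsto (fun ξ => -solG b ξ) atBot (𝓝 (-(solA b * b / 2))) :=
    h.congr fun ξ => solG_odd (b := b) ξ
  simpa using h2.neg

lemma solX_cont : Continuous (solX b) := by
  unfold solX
  fun_prop

lemma solF_even (ξ : ℝ) : solF b (-ξ) = solF b ξ := by
  simp only [solF, solU, solX, mul_neg, Real.cosh_neg]

lemma solF_cont (hb : |b| < 2) : Continuous (solF b) := by
  have hU : Continuous (solU b) :=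
    continuous_const.div solX_cont fun ξ => (solX_pos hb ξ).ne'
  unfold solF
  fun_prop

lemma solF_bound (hb : |b| < 2) :
    ∃ M : ℝ, ∀ ξ : ℝ, |solF b ξ| ≤ M * Real.exp (-(solA b * |ξ|)) := by
  have ha := solA_pos hb
  have hq := hq_pos hb
  have hb2 : |b| / 2 < 1 := by linarith [hb]
  set δ : ℝ := (1 - |b| / 2) / 2 with hδ
  have hδpos : 0 < δ := by simp only [hδ]; linarith
  have hXge : ∀ ξ : ℝ, δ * Real.exp (solA b * |ξ|) ≤ solX b ξ := by
    intro ξ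
    have h1 : Real.exp (solA b * |ξ|) ≤ 2 * Real.cosh (solA b * ξ) := by
      have e1 : Real.cosh (solA b * ξ) = Real.cosh (solA b * |ξ|) := by
        rw [← Real.cosh_abs, abs_mul, abs_of_pos ha]
      rw [e1, Real.cosh_eq]
      have := (Real.exp_pos (-(solA b * |ξ|))).le
      linarith
    have h2 : b / 2 ≤ |b| / 2 * Real.cosh (solA b * ξ) := by
      have h3 := Real.one_le_cosh (solA b * ξ)
      have h4 : b ≤ |b| := le_abs_self b
      nlinarith [abs_nonneg b]
    have h5 : 0 < Real.cosh (solA b * ξ) := Real.cosh_pos _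
    simp only [solX]
    nlinarith
  set K : ℝ := (4 - b ^ 2) / δ with hK
  have hKpos : 0 < K := div_pos hq hδpos
  have hu_le : ∀ ξ : ℝ, solU b ξ ≤ K * Real.exp (-(solA b * |ξ|)) := by
    intro ξ
    have hE := Real.exp_pos (solA b * |ξ|)
    have h1 : solU b ξ ≤ (4 - b ^ 2) / (δ * Real.exp (solA b * |ξ|)) := by
      apply div_le_div_of_nonneg_left hq.le (mul_pos hδpos hE) (hXge ξ)
    calc solU b ξ ≤ (4 - b ^ 2) / (δ * Real.exp (solA b * |ξ|)) := h1
      _ = K * Real.exp (-(solA b * |ξ|)) := by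
        rw [Real.exp_neg, hK]; field_simp
  have hu_le_K : ∀ ξ : ℝ, solU b ξ ≤ K := by
    intro ξ
    calc solU b ξ ≤ K * Real.exp (-(solA b * |ξ|)) := hu_le ξ
      _ ≤ K * 1 := by
          apply mul_le_mul_of_nonneg_left _ hKpos.le
          rw [Real.exp_le_one_iff]
          have : 0 ≤ solA b * |ξ| := mul_nonneg ha.le (abs_nonneg ξ)
          linarith
      _ = K := mul_one K
  refine ⟨K * (1 + |b| / 4 * K + K ^ 2 / 8), fun ξ => ?_⟩
  have hu := solU_pos hb ξ
  have h1 := hu_le ξ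
  have h2 := hu_le_K ξ
  have hE := Real.exp_pos (-(solA b * |ξ|))
  have hbb : b ≤ |b| := le_abs_self b
  have hbb' : -|b| ≤ b := neg_abs_le b
  set E : ℝ := Real.exp (-(solA b * |ξ|)) with hEdef
  set u : ℝ := solU b ξ with hudef
  have e2 : u ^ 2 ≤ K * (K * E) := by nlinarith
  have e3 : u ^ 3 ≤ K ^ 2 * (K * E) := by nlinarith
  have hu3 : 0 < u ^ 3 := by positivity
  have hb4 : b / 4 * u ^ 2 ≤ |b| / 4 * (K * (K * E)) := by nlinarith
  have hb4' : -(|b| / 4 * (K * (K * E))) ≤ b / 4 * u ^ 2 := by nlinarith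
  have hKE : 0 < K * E := by positivity
  have hM : K * (1 + |b| / 4 * K + K ^ 2 / 8) * E
      = K * E + |b| / 4 * (K * (K * E)) + K ^ 2 * (K * E) / 8 := by ring
  rw [abs_le]
  constructor <;> simp only [solF, ← hudef]
  · nlinarith
  · nlinarith

lemma solF_integrable (hb : |b| < 2) : Integrable (solF b) := by
  have ha := solA_pos hb
  obtain ⟨M, hM⟩ := solF_bound hb
  have hMnn : 0 ≤ M := by
    have := (abs_nonneg (solF b 0)).trans (hM 0)
    nlinarith [Real.exp_pos (-(solA b * |(0 : ℝ)|))]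
  have hIoi : IntegrableOn (solF b) (Ioi 0) := by
    apply Integrable.mono ((exp_neg_integrableOn_Ioi 0 ha).const_mul M)
      ((solF_cont hb).aestronglyMeasurable.restrict)
    filter_upwards [ae_restrict_mem measurableSet_Ioi] with ξ hξ
    have hξ0 : (0 : ℝ) < ξ := hξ
    rw [Real.norm_eq_abs, Real.norm_eq_abs]
    have h1 := hM ξ
    rw [abs_of_pos hξ0] at h1
    have h2 : M * Real.exp (-(solA b * ξ)) = M * Real.exp (-solA b * ξ) := by ring_nf
    rw [abs_of_nonneg (by positivity : (0:ℝ) ≤ M * Real.exp (-solA b * ξ))]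
    calc |solF b ξ| ≤ M * Real.exp (-(solA b * ξ)) := h1
      _ = M * Real.exp (-solA b * ξ) := h2
  have hIio : IntegrableOn (solF b) (Iio 0) := by
    rw [← (Measure.measurePreserving_neg (volume : Measure ℝ)).integrableOn_comp_preimage
      (Homeomorph.neg ℝ).measurableEmbedding]
    simp only [Function.comp_def, neg_preimage, neg_Iio, neg_neg, neg_zero]
    apply hIoi.congr_fun _ measurableSet_Ioi
    intro ξ _
    exact (solF_even (b := b) ξ).symm
  rw [← integrableOn_univ, ← Iio_union_Ici (a := (0 : ℝ)), integrableOn_union,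
    integrableOn_Ici_iff_integrableOn_Ioi]
  exact ⟨hIio, hIoi⟩

end

/-- **Energy of the `σ = 1` bright soliton wave.**
For `|b| < 2`, let `B₁` be the `σ = 1` bright soliton,
`θ_b(ξ) = (b/2)ξ − (1/4)∫_0^ξ B₁²` and `ψ_b = B₁ e^{iθ_b}`. Then
`∫ (|ψ_b'|² + (1/2)|ψ_b|² Im(conj(ψ_b) ψ_b')) = −b √(4−b²)`. -/
theorem bright_soliton_energy (b : ℝ) (hb : |b| < 2)
    (B θ : ℝ → ℝ) (ψ : ℝ → ℂ)
    (hB : ∀ ξ : ℝ, B ξ =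
      Real.sqrt ((4 - b ^ 2) / (Real.cosh (Real.sqrt (4 - b ^ 2) * ξ) - b / 2)))
    (hθ : ∀ ξ : ℝ, θ ξ = (b / 2) * ξ - (1 / 4) * ∫ η in (0:ℝ)..ξ, (B η) ^ 2)
    (hψ : ∀ ξ : ℝ, ψ ξ = (B ξ : ℂ) * Complex.exp (Complex.I * (θ ξ : ℂ))) :
    ∫ ξ : ℝ, (‖deriv ψ ξ‖ ^ 2
      + (1 / 2) * ‖ψ ξ‖ ^ 2 * ((starRingEnd ℂ) (ψ ξ) * deriv ψ ξ).im)
      = -b * Real.sqrt (4 - b ^ 2) := by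
  have hBfun : B = fun ξ => Real.sqrt (solU b ξ) := by
    funext ξ; rw [hB]; rfl
  have hBsq : ∀ ξ : ℝ, B ξ ^ 2 = (4 - b ^ 2) / solX b ξ := by
    intro ξ
    rw [hBfun]
    exact Real.sq_sqrt (solU_pos hb ξ).le
  have hBpos : ∀ ξ : ℝ, 0 < B ξ := by
    intro ξ; rw [hBfun]; exact Real.sqrt_pos.2 (solU_pos hb ξ)
  set Bp : ℝ → ℝ := fun ξ =>
    -((4 - b ^ 2) * (Real.sinh (solA b * ξ) * solA b)) / solX b ξ ^ 2 / (2 * B ξ) with hBp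
  set Tp : ℝ → ℝ := fun ξ => b / 2 - 1 / 4 * B ξ ^ 2 with hTp
  have hBd : ∀ ξ : ℝ, HasDerivAt B (Bp ξ) ξ := by
    intro ξ
    have h := (hasDerivAt_solU hb ξ).sqrt (solU_pos hb ξ).ne'
    rw [hBfun, hBp]
    simp only [hBfun]
    simpa using h
  have hBcont : Continuous B := by
    rw [hBfun]
    have hU : Continuous (solU b) :=
      continuous_const.div solX_cont fun ξ => (solX_pos hb ξ).ne'
    exact hU.sqrt
  have hθfun : θ = fun ξ => (b / 2) * ξ - (1 / 4) * ∫ η in (0:ℝ)..ξ, (B η) ^ 2 := funext hθ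
  have hθd : ∀ ξ : ℝ, HasDerivAt θ (Tp ξ) ξ := by
    intro ξ
    rw [hθfun]
    have hI : HasDerivAt (fun x => ∫ η in (0:ℝ)..x, (B η) ^ 2) (B ξ ^ 2) ξ :=
      ((hBcont.pow 2).integral_hasStrictDerivAt 0 ξ).hasDerivAt
    have h := ((hasDerivAt_id ξ).const_mul (b / 2)).sub (hI.const_mul (1 / 4))
    rw [show Tp ξ = b / 2 * 1 - 1 / 4 * B ξ ^ 2 by simp [hTp]]
    exact h
  have hψfun : ψ = fun ξ => (B ξ : ℂ) * Complex.exp (Complex.I * (θ ξ : ℂ)) := funext hψ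
  have hψd : ∀ ξ : ℝ, HasDerivAt ψ
      ((Bp ξ : ℂ) * Complex.exp (Complex.I * (θ ξ : ℂ))
        + (B ξ : ℂ) * (Complex.exp (Complex.I * (θ ξ : ℂ)) * (Complex.I * (Tp ξ : ℂ)))) ξ := by
    intro ξ
    rw [hψfun]
    have h1 : HasDerivAt (fun x => ((B x : ℝ) : ℂ)) ((Bp ξ : ℝ) : ℂ) ξ := (hBd ξ).ofReal_comp
    have h2 : HasDerivAt (fun x => Complex.I * ((θ x : ℝ) : ℂ))
        (Complex.I * ((Tp ξ : ℝ) : ℂ)) ξ := ((hθd ξ).ofReal_comp).const_mul Complex.I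
    exact h1.mul h2.cexp
  have key : ∀ ξ : ℝ, ‖deriv ψ ξ‖ ^ 2
      + (1 / 2) * ‖ψ ξ‖ ^ 2 * ((starRingEnd ℂ) (ψ ξ) * deriv ψ ξ).im
      = solF b ξ := by
    intro ξ
    have hE : ‖Complex.exp (Complex.I * (θ ξ : ℂ))‖ = 1 := by
      simp [Complex.norm_exp]
    have hEE : (starRingEnd ℂ) (Complex.exp (Complex.I * (θ ξ : ℂ)))
        * Complex.exp (Complex.I * (θ ξ : ℂ)) = 1 := by
      rw [← Complex.normSq_eq_conj_mul_self, Complex.normSq_eq_norm_sq, hE]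
      norm_num
    have hd := (hψd ξ).deriv
    have h1 : ‖deriv ψ ξ‖ ^ 2 = Bp ξ ^ 2 + (B ξ * Tp ξ) ^ 2 := by
      rw [hd]
      have e : (Bp ξ : ℂ) * Complex.exp (Complex.I * (θ ξ : ℂ))
          + (B ξ : ℂ) * (Complex.exp (Complex.I * (θ ξ : ℂ)) * (Complex.I * (Tp ξ : ℂ)))
          = ((Bp ξ : ℂ) + (B ξ : ℂ) * (Tp ξ : ℂ) * Complex.I)
              * Complex.exp (Complex.I * (θ ξ : ℂ)) := by ring
      rw [e, norm_mul, hE, mul_one, Complex.sq_norm, Complex.normSq_apply]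
      simp [Complex.add_re, Complex.add_im, Complex.mul_re, Complex.mul_im]
      ring
    have h2 : ‖ψ ξ‖ ^ 2 = B ξ ^ 2 := by
      rw [hψ ξ, norm_mul, hE, mul_one, Complex.norm_real, Real.norm_eq_abs, sq_abs]
    have h3 : ((starRingEnd ℂ) (ψ ξ) * deriv ψ ξ).im = B ξ ^ 2 * Tp ξ := by
      rw [hψ ξ, hd, map_mul, Complex.conj_ofReal]
      have e : (B ξ : ℂ) * (starRingEnd ℂ) (Complex.exp (Complex.I * (θ ξ : ℂ)))
          * ((Bp ξ : ℂ) * Complex.exp (Complex.I * (θ ξ : ℂ))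
            + (B ξ : ℂ) * (Complex.exp (Complex.I * (θ ξ : ℂ)) * (Complex.I * (Tp ξ : ℂ))))
          = (B ξ : ℂ) * ((Bp ξ : ℂ) + (B ξ : ℂ) * (Tp ξ : ℂ) * Complex.I)
              * ((starRingEnd ℂ) (Complex.exp (Complex.I * (θ ξ : ℂ)))
                * Complex.exp (Complex.I * (θ ξ : ℂ))) := by ring
      rw [e, hEE, mul_one]
      simp [Complex.add_im, Complex.mul_im]
      ring
    rw [h1, h2, h3]
    have halg := energy_alg b (Real.cosh (solA b * ξ)) (Real.sinh (solA b * ξ)) (solX b ξ)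
      (solA b) (B ξ) (Tp ξ) (solX_pos hb ξ).ne' (hBpos ξ).ne' (hq_pos hb).ne'
      (by simp only [solX]; ring) (solA_sq hb)
      (by nlinarith [Real.cosh_sq (solA b * ξ)]) (hBsq ξ) (by simp [hTp])
    have hF : solF b ξ = (4 - b ^ 2) / solX b ξ + b / 4 * ((4 - b ^ 2) / solX b ξ) ^ 2
        - ((4 - b ^ 2) / solX b ξ) ^ 3 / 8 := rfl
    rw [hF, ← halg, hBp]
  have hfun : (fun ξ : ℝ => ‖deriv ψ ξ‖ ^ 2
      + (1 / 2) * ‖ψ ξ‖ ^ 2 * ((starRingEnd ℂ) (ψ ξ) * deriv ψ ξ).im)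
      = solF b := funext key
  rw [hfun]
  rw [integral_of_hasDerivAt_of_tendsto (fun ξ => hasDerivAt_solG hb ξ)
    (solF_integrable hb) (tendsto_solG_atBot hb) (tendsto_solG_atTop hb)]
  simp only [solA]
  ring
end

section
/- Let b ∈ ℝ with |b| < 2, let B₁(ξ) = ( (4 − b²) / ( cosh( √(4 − b²) ξ ) − b/2 ) )^{1/2} be the σ = 1 bright soliton, and define θ_b(ξ) = (b/2) ξ − (1/4) ∫_0^ξ B₁(η)² dη and ψ_b(ξ) = B₁(ξ) e^{i θ_b(ξ)}. Then the momentum of ψ_b satisfies Im ∫_ℝ conj(ψ_b(ξ)) ψ_b'(ξ) dξ = ∫_ℝ ( (b/2) B₁(ξ)² − (1/4) B₁(ξ)⁴ ) dξ = −2 √(4 − b²). -/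
open MeasureTheory Real Filter Set Topology

namespace BrightSolitonAux

/-- Derivative of the antiderivative of `sech (c x)`. -/
lemma arctanExp_hasDerivAt {c : ℝ} (hc : 0 < c) (x : ℝ) :
    HasDerivAt (fun x : ℝ => (2 / c) * Real.arctan (Real.exp (c * x)))
      ((Real.cosh (c * x))⁻¹) x := by
  have h1 : HasDerivAt (fun x : ℝ => c * x) c x := by
    simpa using (hasDerivAt_id x).const_mul c
  have h2 : HasDerivAt (fun x : ℝ => Real.exp (c * x)) (Real.exp (c * x) * c) x :=
    (Real.hasDerivAt_exp (c * x)).comp x h1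
  have h3 := ((Real.hasDerivAt_arctan (Real.exp (c * x))).comp x h2).const_mul (2 / c)
  refine h3.congr_deriv (Eq.symm ?_)
  have he : Real.exp (c * x) ≠ 0 := (Real.exp_pos _).ne'
  have hne : (1 : ℝ) + Real.exp (c * x) ^ 2 ≠ 0 := by positivity
  rw [Real.cosh_eq, Real.exp_neg]
  field_simp
  ring

lemma integrable_sech {c : ℝ} (hc : 0 < c) :
    Integrable (fun x : ℝ => (Real.cosh (c * x))⁻¹) := by
  have hcont : Continuous fun x : ℝ => (Real.cosh (c * x))⁻¹ :=
    (Real.continuous_cosh.comp (continuous_const.mul continuous_id)).inv₀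
      fun x => (Real.cosh_pos _).ne'
  apply integrable_of_intervalIntegral_norm_bounded (l := atTop)
    (a := fun i : ℝ => -i) (b := fun i : ℝ => i) (2 * π / c)
    (fun i => hcont.integrableOn_Ioc) tendsto_neg_atTop_atBot tendsto_id
  filter_upwards with i
  have hnorm : (∫ x in (-i)..i, ‖(Real.cosh (c * x))⁻¹‖)
      = ∫ x in (-i)..i, (Real.cosh (c * x))⁻¹ := by
    apply intervalIntegral.integral_congr
    intro x _
    exact Real.norm_of_nonneg (inv_nonneg.2 (Real.cosh_pos _).le)
  rw [hnorm]
  have heval : (∫ x in (-i)..i, (Real.cosh (c * x))⁻¹)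
      = (2 / c) * Real.arctan (Real.exp (c * i))
        - (2 / c) * Real.arctan (Real.exp (c * (-i))) := by
    apply intervalIntegral.integral_eq_sub_of_hasDerivAt
    · exact fun x _ => arctanExp_hasDerivAt hc x
    · exact hcont.intervalIntegrable _ _
  rw [heval]
  have h1 : Real.arctan (Real.exp (c * i)) < π / 2 := Real.arctan_lt_pi_div_two _
  have h2 : 0 < Real.arctan (Real.exp (c * (-i))) := by
    have := Real.arctan_strictMono (Real.exp_pos (c * (-i)))
    simpa [Real.arctan_zero] using this
  have h3 : (0:ℝ) < 2 / c := by positivity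
  have hπ : 0 < π := Real.pi_pos
  have h5 : (2 / c) * Real.arctan (Real.exp (c * i)) ≤ (2 / c) * (π / 2) :=
    mul_le_mul_of_nonneg_left h1.le h3.le
  have h6 : (2 / c) * (π / 2) = π / c := by ring
  have h7 : π / c ≤ 2 * π / c := by
    gcongr
    linarith
  linarith [mul_pos h3 h2]

end BrightSolitonAux

open BrightSolitonAux

/-- **Momentum of the `σ = 1` bright soliton wave.**
For `|b| < 2`, let `B₁` be the `σ = 1` bright soliton,
`θ_b(ξ) = (b/2)ξ − (1/4)∫_0^ξ B₁²` and `ψ_b = B₁ e^{iθ_b}`. Then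
`Im ∫ conj(ψ_b) ψ_b' = ∫ ((b/2)B₁² − (1/4)B₁⁴) = −2√(4−b²)`. -/
theorem bright_soliton_momentum (b : ℝ) (hb : |b| < 2)
    (B θ : ℝ → ℝ) (ψ : ℝ → ℂ)
    (hB : ∀ ξ : ℝ, B ξ =
      Real.sqrt ((4 - b ^ 2) / (Real.cosh (Real.sqrt (4 - b ^ 2) * ξ) - b / 2)))
    (hθ : ∀ ξ : ℝ, θ ξ = (b / 2) * ξ - (1 / 4) * ∫ η in (0:ℝ)..ξ, (B η) ^ 2)
    (hψ : ∀ ξ : ℝ, ψ ξ = (B ξ : ℂ) * Complex.exp (Complex.I * (θ ξ : ℂ))) :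
    (∫ ξ : ℝ, (starRingEnd ℂ) (ψ ξ) * deriv ψ ξ).im
      = ∫ ξ : ℝ, ((b / 2) * (B ξ) ^ 2 - (1 / 4) * (B ξ) ^ 4) ∧
    (∫ ξ : ℝ, ((b / 2) * (B ξ) ^ 2 - (1 / 4) * (B ξ) ^ 4))
      = -2 * Real.sqrt (4 - b ^ 2) := by
  have hb2 : (0:ℝ) < 4 - b ^ 2 := by nlinarith [sq_abs b, abs_nonneg b]
  set c : ℝ := Real.sqrt (4 - b ^ 2) with hcdef
  have hc : 0 < c := Real.sqrt_pos.mpr hb2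
  have hc2 : c ^ 2 = 4 - b ^ 2 := Real.sq_sqrt hb2.le
  set d : ℝ → ℝ := fun ξ => Real.cosh (c * ξ) - b / 2 with hddef
  have hbabs : b < 2 := (le_abs_self b).trans_lt hb
  have hd : ∀ ξ, 0 < d ξ := by
    intro ξ
    have := Real.one_le_cosh (c * ξ)
    simp only [hddef]
    linarith
  set ε : ℝ := (2 - |b|) / 2 with hεdef
  have hε : 0 < ε := by simp only [hεdef]; linarith
  have hdε : ∀ ξ, ε * Real.cosh (c * ξ) ≤ d ξ := by
    intro ξ
    have h1 := Real.one_le_cosh (c * ξ)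
    have h2 := le_abs_self b
    have h3 := abs_nonneg b
    simp only [hddef, hεdef]
    nlinarith
  -- basic facts about B
  have hBval : ∀ ξ, B ξ = Real.sqrt (c ^ 2 / d ξ) := by
    intro ξ; rw [hB ξ, hc2]
  have hBsq : ∀ ξ, B ξ ^ 2 = c ^ 2 / d ξ := by
    intro ξ
    rw [hBval ξ]
    exact Real.sq_sqrt (div_nonneg (sq_nonneg c) (hd ξ).le)
  have hBpos : ∀ ξ, 0 < B ξ := by
    intro ξ
    rw [hBval ξ]
    exact Real.sqrt_pos.mpr (div_pos (pow_pos hc 2) (hd ξ))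
  -- derivatives
  have hmul : ∀ ξ : ℝ, HasDerivAt (fun ξ : ℝ => c * ξ) c ξ := by
    intro ξ
    simpa using (hasDerivAt_id ξ).const_mul c
  have hd' : ∀ ξ, HasDerivAt d (c * Real.sinh (c * ξ)) ξ := by
    intro ξ
    have := ((Real.hasDerivAt_cosh (c * ξ)).comp ξ (hmul ξ)).sub_const (b / 2)
    simpa [hddef, mul_comm] using this
  have hQ : ∀ ξ, HasDerivAt (fun ξ => c ^ 2 / d ξ)
      (-(c ^ 3 * Real.sinh (c * ξ)) / d ξ ^ 2) ξ := by
    intro ξ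
    have := (hasDerivAt_const ξ (c ^ 2)).div (hd' ξ) (hd ξ).ne'
    refine this.congr_deriv (Eq.symm ?_)
    field_simp
    ring
  have hB' : ∀ ξ, HasDerivAt B (-(c ^ 3 * Real.sinh (c * ξ)) / d ξ ^ 2 / (2 * B ξ)) ξ := by
    intro ξ
    have hBfun : B = fun ξ => Real.sqrt (c ^ 2 / d ξ) := funext hBval
    have hne : c ^ 2 / d ξ ≠ 0 := (div_pos (pow_pos hc 2) (hd ξ)).ne'
    have h := (hQ ξ).sqrt hne
    rw [← hBval ξ] at h
    rw [show (fun ξ => Real.sqrt (c ^ 2 / d ξ)) = B from hBfun.symm] at h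
    exact h
  set B' : ℝ → ℝ := fun ξ => -(c ^ 3 * Real.sinh (c * ξ)) / d ξ ^ 2 / (2 * B ξ) with hB'def
  have hBB' : ∀ ξ, B ξ * B' ξ = -(c ^ 3 * Real.sinh (c * ξ)) / (2 * d ξ ^ 2) := by
    intro ξ
    have hBne := (hBpos ξ).ne'
    have hdne := (hd ξ).ne'
    simp only [hB'def]
    field_simp
  have hdcont : Continuous d := by
    simp only [hddef]
    fun_prop
  have hBcont : Continuous B := by
    have hBfun : B = fun ξ => Real.sqrt (c ^ 2 / d ξ) := funext hBval
    rw [hBfun]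
    exact Real.continuous_sqrt.comp (continuous_const.div hdcont fun ξ => (hd ξ).ne')
  have hθ' : ∀ ξ, HasDerivAt θ (b / 2 - B ξ ^ 2 / 4) ξ := by
    intro ξ
    have hθfun : θ = fun ξ => (b / 2) * ξ - (1 / 4) * ∫ η in (0:ℝ)..ξ, (B η) ^ 2 :=
      funext hθ
    rw [hθfun]
    have h1 : HasDerivAt (fun ξ : ℝ => (b / 2) * ξ) (b / 2) ξ := by
      simpa using (hasDerivAt_id ξ).const_mul (b / 2)
    have h2 : HasDerivAt (fun u : ℝ => ∫ η in (0:ℝ)..u, (B η) ^ 2) (B ξ ^ 2) ξ :=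
      ((hBcont.pow 2).integral_hasStrictDerivAt 0 ξ).hasDerivAt
    have h3 := h1.sub (h2.const_mul (1 / 4))
    refine h3.congr_deriv (Eq.symm ?_)
    ring
  -- derivative of ψ
  have hψ' : ∀ ξ, HasDerivAt ψ
      (((B' ξ : ℂ) + Complex.I * ((b / 2 - B ξ ^ 2 / 4 : ℝ) : ℂ) * (B ξ : ℂ)) *
        Complex.exp (Complex.I * (θ ξ : ℂ))) ξ := by
    intro ξ
    have hψfun : ψ = fun ξ => (B ξ : ℂ) * Complex.exp (Complex.I * (θ ξ : ℂ)) := funext hψ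
    rw [hψfun]
    have hBC : HasDerivAt (fun ξ : ℝ => (B ξ : ℂ)) ((B' ξ : ℂ)) ξ := (hB' ξ).ofReal_comp
    have hθC : HasDerivAt (fun ξ : ℝ => ((θ ξ : ℝ) : ℂ)) ((b / 2 - B ξ ^ 2 / 4 : ℝ) : ℂ) ξ :=
      (hθ' ξ).ofReal_comp
    have hIθ : HasDerivAt (fun ξ : ℝ => Complex.I * (θ ξ : ℂ))
        (Complex.I * ((b / 2 - B ξ ^ 2 / 4 : ℝ) : ℂ)) ξ := hθC.const_mul Complex.I
    have hexp : HasDerivAt (fun ξ : ℝ => Complex.exp (Complex.I * (θ ξ : ℂ)))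
        (Complex.exp (Complex.I * (θ ξ : ℂ)) * (Complex.I * ((b / 2 - B ξ ^ 2 / 4 : ℝ) : ℂ))) ξ :=
      (Complex.hasDerivAt_exp _).comp ξ hIθ
    have := hBC.mul hexp
    refine this.congr_deriv (Eq.symm ?_)
    ring
  -- pointwise formula for the momentum integrand
  set g : ℝ → ℝ := fun ξ => (b / 2) * (B ξ) ^ 2 - (1 / 4) * (B ξ) ^ 4 with hgdef
  set r : ℝ → ℝ := fun ξ => -(c ^ 3 * Real.sinh (c * ξ)) / (2 * d ξ ^ 2) with hrdef
  have hconj : ∀ ξ, (starRingEnd ℂ) (ψ ξ) * deriv ψ ξ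
      = ((r ξ : ℂ) + (g ξ : ℂ) * Complex.I) := by
    intro ξ
    rw [(hψ' ξ).deriv, hψ ξ]
    have hconjexp : (starRingEnd ℂ) (Complex.exp (Complex.I * (θ ξ : ℂ)))
        = Complex.exp (-(Complex.I * (θ ξ : ℂ))) := by
      rw [← Complex.exp_conj]
      congr 1
      simp [map_mul, Complex.conj_ofReal]
    rw [map_mul, hconjexp, Complex.conj_ofReal]
    have hprod : Complex.exp (-(Complex.I * (θ ξ : ℂ))) * Complex.exp (Complex.I * (θ ξ : ℂ))
        = 1 := by
      rw [← Complex.exp_add]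
      simp
    calc (B ξ : ℂ) * Complex.exp (-(Complex.I * (θ ξ : ℂ))) *
          (((B' ξ : ℂ) + Complex.I * ((b / 2 - B ξ ^ 2 / 4 : ℝ) : ℂ) * (B ξ : ℂ)) *
            Complex.exp (Complex.I * (θ ξ : ℂ)))
        = (B ξ : ℂ) * (((B' ξ : ℂ) + Complex.I * ((b / 2 - B ξ ^ 2 / 4 : ℝ) : ℂ) * (B ξ : ℂ))) *
            (Complex.exp (-(Complex.I * (θ ξ : ℂ))) * Complex.exp (Complex.I * (θ ξ : ℂ))) := by
          ring
      _ = (B ξ : ℂ) * (((B' ξ : ℂ) + Complex.I * ((b / 2 - B ξ ^ 2 / 4 : ℝ) : ℂ) * (B ξ : ℂ))) := by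
          rw [hprod, mul_one]
      _ = ((B ξ * B' ξ : ℝ) : ℂ)
            + (((b / 2) * B ξ ^ 2 - (1 / 4) * B ξ ^ 4 : ℝ) : ℂ) * Complex.I := by
          push_cast
          ring
      _ = ((r ξ : ℂ) + (g ξ : ℂ) * Complex.I) := by
          rw [hBB' ξ]
  -- integrability
  have hsech := integrable_sech hc
  have hchpos : ∀ ξ : ℝ, 0 < Real.cosh (c * ξ) := fun ξ => Real.cosh_pos _
  have hch1 : ∀ ξ : ℝ, 1 ≤ Real.cosh (c * ξ) := fun ξ => Real.one_le_cosh _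
  have hB2le : ∀ ξ, B ξ ^ 2 ≤ (c ^ 2 / ε) * (Real.cosh (c * ξ))⁻¹ := by
    intro ξ
    rw [hBsq ξ]
    have hdle := hdε ξ
    have h1 : c ^ 2 / d ξ ≤ c ^ 2 / (ε * Real.cosh (c * ξ)) := by
      gcongr
    calc c ^ 2 / d ξ ≤ c ^ 2 / (ε * Real.cosh (c * ξ)) := h1
      _ = (c ^ 2 / ε) * (Real.cosh (c * ξ))⁻¹ := by
          rw [← div_div, div_eq_mul_inv]
  have hdsq : ∀ ξ, ε ^ 2 * Real.cosh (c * ξ) ≤ d ξ ^ 2 := by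
    intro ξ
    have hA : (ε * Real.cosh (c * ξ)) ^ 2 ≤ d ξ ^ 2 :=
      pow_le_pow_left₀ (by positivity) (hdε ξ) 2
    nlinarith [mul_nonneg (mul_nonneg (sq_nonneg ε) (hchpos ξ).le)
      (sub_nonneg.mpr (hch1 ξ))]
  have hB4le : ∀ ξ, B ξ ^ 4 ≤ (c ^ 4 / ε ^ 2) * (Real.cosh (c * ξ))⁻¹ := by
    intro ξ
    have hB4 : B ξ ^ 4 = (c ^ 2 / d ξ) ^ 2 := by
      rw [← hBsq ξ]; ring
    rw [hB4, div_pow]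
    have hc4 : (c ^ 2) ^ 2 = c ^ 4 := by ring
    rw [hc4]
    have hds := hdsq ξ
    calc c ^ 4 / d ξ ^ 2 ≤ c ^ 4 / (ε ^ 2 * Real.cosh (c * ξ)) := by
          gcongr
      _ = (c ^ 4 / ε ^ 2) * (Real.cosh (c * ξ))⁻¹ := by
          rw [← div_div, div_eq_mul_inv]
  have hgcont : Continuous g := by
    simp only [hgdef]
    fun_prop
  have hg_int : Integrable g := by
    apply ((hsech.const_mul (|b| / 2 * (c ^ 2 / ε) + 1 / 4 * (c ^ 4 / ε ^ 2))).mono'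
      hgcont.aestronglyMeasurable)
    filter_upwards with ξ
    have h1 := hB2le ξ
    have h2 := hB4le ξ
    have hB2n : 0 ≤ B ξ ^ 2 := sq_nonneg _
    have hB4n : 0 ≤ B ξ ^ 4 := by positivity
    have habs : ‖g ξ‖ ≤ |b| / 2 * B ξ ^ 2 + 1 / 4 * B ξ ^ 4 := by
      simp only [hgdef, Real.norm_eq_abs]
      have e1 : |(b / 2) * B ξ ^ 2| = |b| / 2 * B ξ ^ 2 := by
        rw [abs_mul, abs_of_nonneg hB2n, abs_div]
        simp
      have e2 : |(1 / 4 : ℝ) * B ξ ^ 4| = 1 / 4 * B ξ ^ 4 := by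
        rw [abs_mul, abs_of_nonneg hB4n]
        norm_num
      calc |(b / 2) * B ξ ^ 2 - 1 / 4 * B ξ ^ 4|
          ≤ |(b / 2) * B ξ ^ 2| + |(1 / 4 : ℝ) * B ξ ^ 4| := abs_sub _ _
        _ = |b| / 2 * B ξ ^ 2 + 1 / 4 * B ξ ^ 4 := by rw [e1, e2]
    calc ‖g ξ‖ ≤ |b| / 2 * B ξ ^ 2 + 1 / 4 * B ξ ^ 4 := habs
      _ ≤ |b| / 2 * ((c ^ 2 / ε) * (Real.cosh (c * ξ))⁻¹)
            + 1 / 4 * ((c ^ 4 / ε ^ 2) * (Real.cosh (c * ξ))⁻¹) := by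
          have hb0 : (0:ℝ) ≤ |b| / 2 := by positivity
          gcongr
      _ = (|b| / 2 * (c ^ 2 / ε) + 1 / 4 * (c ^ 4 / ε ^ 2)) * (Real.cosh (c * ξ))⁻¹ := by
          ring
  have hrcont : Continuous r := by
    simp only [hrdef]
    refine Continuous.div (by fun_prop) (by fun_prop) fun ξ => ?_
    exact (mul_pos two_pos (pow_pos (hd ξ) 2)).ne'
  have hr_int : Integrable r := by
    apply ((hsech.const_mul (c ^ 3 / (2 * ε ^ 2))).mono' hrcont.aestronglyMeasurable)
    filter_upwards with ξ
    have hs : |Real.sinh (c * ξ)| ≤ Real.cosh (c * ξ) := by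
      rw [Real.abs_sinh, ← Real.cosh_abs (c * ξ)]
      exact le_of_lt (Real.sinh_lt_cosh _)
    have hnr : ‖r ξ‖ = c ^ 3 * |Real.sinh (c * ξ)| / (2 * d ξ ^ 2) := by
      simp only [hrdef, Real.norm_eq_abs]
      rw [abs_div, abs_neg, abs_mul,
        abs_of_nonneg (by positivity : (0:ℝ) ≤ c ^ 3),
        abs_of_nonneg (mul_pos two_pos (pow_pos (hd ξ) 2)).le]
    rw [hnr]
    have hA : (ε * Real.cosh (c * ξ)) ^ 2 ≤ d ξ ^ 2 :=
      pow_le_pow_left₀ (by positivity) (hdε ξ) 2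
    calc c ^ 3 * |Real.sinh (c * ξ)| / (2 * d ξ ^ 2)
        ≤ c ^ 3 * Real.cosh (c * ξ) / (2 * (ε * Real.cosh (c * ξ)) ^ 2) := by
          gcongr
      _ = c ^ 3 * Real.cosh (c * ξ) / ((2 * ε ^ 2 * Real.cosh (c * ξ)) * Real.cosh (c * ξ)) := by
          ring_nf
      _ = c ^ 3 / (2 * ε ^ 2 * Real.cosh (c * ξ)) := by
          rw [mul_div_mul_right _ _ (hchpos ξ).ne']
      _ = c ^ 3 / (2 * ε ^ 2) * (Real.cosh (c * ξ))⁻¹ := by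
          rw [← div_div, div_eq_mul_inv]
  have hF_int : Integrable (fun ξ : ℝ => ((r ξ : ℂ) + (g ξ : ℂ) * Complex.I)) :=
    hr_int.ofReal.add (hg_int.ofReal.mul_const Complex.I)
  -- the antiderivative G of g
  set G : ℝ → ℝ := fun ξ => -(c * Real.sinh (c * ξ)) / d ξ with hGdef
  have hG : ∀ ξ, HasDerivAt G (g ξ) ξ := by
    intro ξ
    have hnum : HasDerivAt (fun ξ : ℝ => -(c * Real.sinh (c * ξ)))
        (-(c * (Real.cosh (c * ξ) * c))) ξ := by
      have h0 : HasDerivAt (fun ξ : ℝ => Real.sinh (c * ξ)) (Real.cosh (c * ξ) * c) ξ :=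
        (Real.hasDerivAt_sinh (c * ξ)).comp ξ (hmul ξ)
      exact (h0.const_mul c).neg
    have hdiv := hnum.div (hd' ξ) (hd ξ).ne'
    have hdne := (hd ξ).ne'
    refine hdiv.congr_deriv (Eq.symm ?_)
    have key : -(c * (Real.cosh (c * ξ) * c)) * d ξ
        - -(c * Real.sinh (c * ξ)) * (c * Real.sinh (c * ξ))
        = c ^ 2 * ((b / 2) * Real.cosh (c * ξ) - 1) := by
      have hsinh : Real.sinh (c * ξ) ^ 2 = Real.cosh (c * ξ) ^ 2 - 1 := Real.sinh_sq _
      simp only [hddef]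
      linear_combination c ^ 2 * hsinh
    rw [key]
    simp only [hgdef]
    have hB4 : B ξ ^ 4 = (c ^ 2 / d ξ) ^ 2 := by rw [← hBsq ξ]; ring
    rw [hB4, hBsq ξ]
    have e3 : (b / 2) * (c ^ 2 / d ξ) - 1 / 4 * (c ^ 2 / d ξ) ^ 2
        = ((b / 2) * c ^ 2 * d ξ - c ^ 4 / 4) / d ξ ^ 2 := by
      field_simp
    rw [e3]
    congr 1
    simp only [hddef]
    linear_combination (-(c ^ 2) / 4) * hc2
  -- limits of G at ±∞
  have hGtop : Tendsto G atTop (𝓝 (-c)) := by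
    have hGeq : ∀ ξ : ℝ, G ξ = -c * (1 - Real.exp (-(c * ξ)) ^ 2)
        / (1 + Real.exp (-(c * ξ)) ^ 2 - b * Real.exp (-(c * ξ))) := by
      intro ξ
      have hden : 1 + Real.exp (-(c * ξ)) ^ 2 - b * Real.exp (-(c * ξ))
          = 2 * Real.exp (-(c * ξ)) * d ξ := by
        simp only [hddef]
        rw [Real.cosh_eq, Real.exp_neg]
        have he := Real.exp_ne_zero (c * ξ)
        field_simp
      have hdenpos : 0 < 1 + Real.exp (-(c * ξ)) ^ 2 - b * Real.exp (-(c * ξ)) := by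
        rw [hden]
        exact mul_pos (mul_pos two_pos (Real.exp_pos _)) (hd ξ)
      simp only [hGdef]
      rw [div_eq_div_iff (hd ξ).ne' hdenpos.ne', hden]
      simp only [hddef]
      rw [Real.sinh_eq, Real.cosh_eq, Real.exp_neg]
      have he := Real.exp_ne_zero (c * ξ)
      field_simp
    have hE0 : Tendsto (fun ξ : ℝ => Real.exp (-(c * ξ))) atTop (𝓝 0) := by
      apply Real.tendsto_exp_atBot.comp
      have h1 : Tendsto (fun ξ : ℝ => c * ξ) atTop atTop :=
        Tendsto.const_mul_atTop hc tendsto_id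
      exact tendsto_neg_atTop_atBot.comp h1
    have hnum : Tendsto (fun ξ : ℝ => -c * (1 - Real.exp (-(c * ξ)) ^ 2)) atTop
        (𝓝 (-c * (1 - 0 ^ 2))) :=
      tendsto_const_nhds.mul (tendsto_const_nhds.sub (hE0.pow 2))
    have hdent : Tendsto (fun ξ : ℝ => 1 + Real.exp (-(c * ξ)) ^ 2 - b * Real.exp (-(c * ξ)))
        atTop (𝓝 (1 + 0 ^ 2 - b * 0)) :=
      (tendsto_const_nhds.add (hE0.pow 2)).sub (tendsto_const_nhds.mul hE0)
    have hlim := hnum.div hdent (by norm_num)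
    have hval : -c * (1 - (0:ℝ) ^ 2) / (1 + 0 ^ 2 - b * 0) = -c := by norm_num
    rw [hval] at hlim
    exact Tendsto.congr (fun ξ => (hGeq ξ).symm) hlim
  have hGbot : Tendsto G atBot (𝓝 c) := by
    have hGeq : ∀ ξ : ℝ, G ξ = -c * (Real.exp (c * ξ) ^ 2 - 1)
        / (Real.exp (c * ξ) ^ 2 + 1 - b * Real.exp (c * ξ)) := by
      intro ξ
      have hden : Real.exp (c * ξ) ^ 2 + 1 - b * Real.exp (c * ξ)
          = 2 * Real.exp (c * ξ) * d ξ := by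
        simp only [hddef]
        rw [Real.cosh_eq, Real.exp_neg]
        have he := Real.exp_ne_zero (c * ξ)
        field_simp
      have hdenpos : 0 < Real.exp (c * ξ) ^ 2 + 1 - b * Real.exp (c * ξ) := by
        rw [hden]
        exact mul_pos (mul_pos two_pos (Real.exp_pos _)) (hd ξ)
      simp only [hGdef]
      rw [div_eq_div_iff (hd ξ).ne' hdenpos.ne', hden]
      simp only [hddef]
      rw [Real.sinh_eq, Real.cosh_eq, Real.exp_neg]
      have he := Real.exp_ne_zero (c * ξ)
      field_simp
    have hE0 : Tendsto (fun ξ : ℝ => Real.exp (c * ξ)) atBot (𝓝 0) := by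
      apply Real.tendsto_exp_atBot.comp
      exact Tendsto.const_mul_atBot hc tendsto_id
    have hnum : Tendsto (fun ξ : ℝ => -c * (Real.exp (c * ξ) ^ 2 - 1)) atBot
        (𝓝 (-c * (0 ^ 2 - 1))) :=
      tendsto_const_nhds.mul ((hE0.pow 2).sub tendsto_const_nhds)
    have hdent : Tendsto (fun ξ : ℝ => Real.exp (c * ξ) ^ 2 + 1 - b * Real.exp (c * ξ))
        atBot (𝓝 (0 ^ 2 + 1 - b * 0)) :=
      ((hE0.pow 2).add tendsto_const_nhds).sub (tendsto_const_nhds.mul hE0)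
    have hlim := hnum.div hdent (by norm_num)
    have hval : -c * ((0:ℝ) ^ 2 - 1) / (0 ^ 2 + 1 - b * 0) = c := by norm_num
    rw [hval] at hlim
    exact Tendsto.congr (fun ξ => (hGeq ξ).symm) hlim
  have hint : ∫ ξ : ℝ, g ξ = -c - c :=
    integral_of_hasDerivAt_of_tendsto hG hg_int hGbot hGtop
  constructor
  · -- momentum identity
    have hrw : (fun ξ : ℝ => (starRingEnd ℂ) (ψ ξ) * deriv ψ ξ)
        = fun ξ : ℝ => ((r ξ : ℂ) + (g ξ : ℂ) * Complex.I) := funext hconj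
    rw [hrw]
    have him := integral_im (μ := (volume : Measure ℝ)) hF_int
    have him' : (∫ ξ : ℝ, ((r ξ : ℂ) + (g ξ : ℂ) * Complex.I)).im
        = ∫ ξ : ℝ, ((r ξ : ℂ) + (g ξ : ℂ) * Complex.I).im := by
      simpa using him.symm
    rw [him']
    apply integral_congr_ae
    filter_upwards with ξ
    simp [hgdef]
    simp [← Complex.ofReal_pow]
  · have hfold : (fun ξ : ℝ => (b / 2) * (B ξ) ^ 2 - (1 / 4) * (B ξ) ^ 4) = g := rfl
    have h2 : (∫ ξ : ℝ, ((b / 2) * (B ξ) ^ 2 - (1 / 4) * (B ξ) ^ 4)) = ∫ ξ : ℝ, g ξ := rfl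
    rw [h2, hint]
    ring
end

section
/- Let L₁(ξ) = √(8/(1 + 4ξ²)) be the σ = 1 algebraic lump soliton (the b = 2 limit of the bright soliton family), and define θ(ξ) = ξ − (1/4) ∫_0^ξ L₁(η)² dη and ψ_L(ξ) = L₁(ξ) e^{i θ(ξ)}. Then both the energy and the momentum of ψ_L vanish: ∫_ℝ ( |ψ_L'(ξ)|² + (1/2) |ψ_L(ξ)|² Im( conj(ψ_L(ξ)) ψ_L'(ξ) ) ) dξ = 0 and Im ∫_ℝ conj(ψ_L(ξ)) ψ_L'(ξ) dξ = 0. -/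
open MeasureTheory Filter Topology Complex

noncomputable def lump (x : ℝ) : ℝ := Real.sqrt (8 / (1 + 4 * x ^ 2))

lemma denom_pos (x : ℝ) : (0:ℝ) < 1 + 4 * x ^ 2 := by positivity

lemma lump_pos (x : ℝ) : 0 < lump x :=
  Real.sqrt_pos.mpr (by positivity)

lemma lump_sq (x : ℝ) : lump x ^ 2 = 8 / (1 + 4 * x ^ 2) :=
  Real.sq_sqrt (by positivity)

noncomputable def lder (x : ℝ) : ℝ := -64 * x / (1 + 4 * x ^ 2) ^ 2 / (2 * lump x)

lemma hasDerivAt_denom (x : ℝ) : HasDerivAt (fun y : ℝ => 1 + 4 * y ^ 2) (8 * x) x := by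
  have := ((hasDerivAt_pow 2 x).const_mul 4).const_add (1:ℝ)
  exact this.congr_deriv (by ring)

lemma hasDerivAt_lsq (x : ℝ) : HasDerivAt (fun y : ℝ => 8 / (1 + 4 * y ^ 2))
    (-64 * x / (1 + 4 * x ^ 2) ^ 2) x := by
  have := (hasDerivAt_const x (8:ℝ)).div (hasDerivAt_denom x) (ne_of_gt (denom_pos x))
  exact this.congr_deriv (by ring)

lemma hasDerivAt_lump (x : ℝ) : HasDerivAt lump (lder x) x := by
  have h := (hasDerivAt_lsq x).sqrt (ne_of_gt (by positivity))
  exact h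

lemma continuous_lump : Continuous lump :=
  Real.continuous_sqrt.comp (continuous_const.div
    (by continuity) (fun x => ne_of_gt (denom_pos x)))

noncomputable def td (x : ℝ) : ℝ := (4 * x ^ 2 - 1) / (1 + 4 * x ^ 2)

lemma hasDerivAt_theta (x : ℝ) :
    HasDerivAt (fun ξ : ℝ => ξ - (1 / 4) * ∫ η in (0:ℝ)..ξ, (lump η) ^ 2) (td x) x := by
  have hc : Continuous (fun η : ℝ => (lump η) ^ 2) := continuous_lump.pow 2
  have h1 : HasDerivAt (fun u : ℝ => ∫ η in (0:ℝ)..u, (lump η) ^ 2) (lump x ^ 2) x :=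
    intervalIntegral.integral_hasDerivAt_right (hc.intervalIntegrable _ _)
      (hc.stronglyMeasurableAtFilter _ _) hc.continuousAt
  have h2 := (hasDerivAt_id x).sub (h1.const_mul (1/4:ℝ))
  refine h2.congr_deriv ?_
  rw [lump_sq, td]
  field_simp
  ring

section psi
variable (θ : ℝ → ℝ)

lemma hasDerivAt_psi (hθ : ∀ ξ : ℝ, θ ξ = ξ - (1 / 4) * ∫ η in (0:ℝ)..ξ, (lump η) ^ 2)
    (x : ℝ) :
    HasDerivAt (fun ξ => (lump ξ : ℂ) * Complex.exp (Complex.I * (θ ξ : ℂ)))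
      (((lder x : ℂ) + Complex.I * (td x : ℂ) * (lump x : ℂ)) *
        Complex.exp (Complex.I * (θ x : ℂ))) x := by
  have hθf : θ = fun ξ : ℝ => ξ - (1 / 4) * ∫ η in (0:ℝ)..ξ, (lump η) ^ 2 := funext hθ
  have hθd : HasDerivAt θ (td x) x := by rw [hθf]; exact hasDerivAt_theta x
  have h1 : HasDerivAt (fun ξ : ℝ => ((lump ξ : ℂ))) ((lder x : ℂ)) x :=
    (hasDerivAt_lump x).ofReal_comp
  have h2 : HasDerivAt (fun ξ : ℝ => Complex.I * (θ ξ : ℂ)) (Complex.I * (td x : ℂ)) x :=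
    hθd.ofReal_comp.const_mul Complex.I
  have h3 := h2.cexp
  have h4 := h1.mul h3
  exact h4.congr_deriv (by ring)
end psi

lemma conj_exp_mul_exp (θ : ℝ) :
    (starRingEnd ℂ) (Complex.exp (Complex.I * θ)) * Complex.exp (Complex.I * θ) = 1 := by
  rw [← Complex.exp_conj, ← Complex.exp_add]
  simp

lemma key_conj_mul (l l' t θ : ℝ) :
    (starRingEnd ℂ) ((l:ℂ) * Complex.exp (Complex.I * θ)) *
      (((l':ℂ) + Complex.I * t * l) * Complex.exp (Complex.I * θ)) =
      ((l * l' : ℝ) : ℂ) + ((t * l ^ 2 : ℝ) : ℂ) * Complex.I := by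
  rw [map_mul, Complex.conj_ofReal,
    show ((l:ℂ) * (starRingEnd ℂ) (Complex.exp (Complex.I * θ))) *
      (((l':ℂ) + Complex.I * t * l) * Complex.exp (Complex.I * θ)) =
      (l:ℂ) * ((l':ℂ) + Complex.I * t * l) *
        ((starRingEnd ℂ) (Complex.exp (Complex.I * θ)) * Complex.exp (Complex.I * θ)) from by ring,
    conj_exp_mul_exp]
  push_cast
  ring

lemma key_abs_sq (l l' t θ : ℝ) :
    (‖(((l':ℂ) + Complex.I * t * l) * Complex.exp (Complex.I * θ))‖) ^ 2
      = l' ^ 2 + t ^ 2 * l ^ 2 := by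
  rw [norm_mul, Complex.norm_exp]
  simp only [Complex.mul_re, Complex.I_re, Complex.ofReal_re, Complex.I_im, Complex.ofReal_im]
  norm_num
  rw [Complex.sq_norm, Complex.normSq_apply]
  simp
  ring

lemma key_abs (l θ : ℝ) (hl : 0 ≤ l) :
    ‖(l:ℂ) * Complex.exp (Complex.I * θ)‖ = l := by
  rw [norm_mul, Complex.norm_exp]
  simp only [Complex.mul_re, Complex.I_re, Complex.ofReal_re, Complex.I_im, Complex.ofReal_im]
  norm_num
  exact hl

noncomputable def fen (x : ℝ) : ℝ := (128*x^4 + 192*x^2 - 24) / (1 + 4*x^2)^3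
noncomputable def Fen (x : ℝ) : ℝ := (-32*x^3 - 24*x) / (1 + 4*x^2)^2
noncomputable def gm (x : ℝ) : ℝ := (32*x^2 - 8) / (1 + 4*x^2)^2
noncomputable def Gm (x : ℝ) : ℝ := -8*x / (1 + 4*x^2)
noncomputable def rr (x : ℝ) : ℝ := -32*x / (1 + 4*x^2)^2

lemma energy_pointwise (x : ℝ) :
    (lder x)^2 + (td x)^2 * (lump x)^2 + (1/2) * (lump x)^2 * (td x * (lump x)^2) = fen x := by
  have hl0 : lump x ≠ 0 := ne_of_gt (lump_pos x)
  have hd : (1 + 4*x^2) ≠ 0 := ne_of_gt (denom_pos x)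
  rw [lder, td, fen, div_pow, mul_pow, lump_sq]
  field_simp
  ring

lemma momentum_pointwise (x : ℝ) : td x * (lump x)^2 = gm x := by
  have hd : (1 + 4*x^2) ≠ 0 := ne_of_gt (denom_pos x)
  rw [td, gm, lump_sq]
  field_simp
  ring

lemma re_pointwise (x : ℝ) : lump x * lder x = rr x := by
  have hl0 : lump x ≠ 0 := ne_of_gt (lump_pos x)
  rw [lder, rr]
  field_simp
  ring

lemma hasDerivAt_Fen (x : ℝ) : HasDerivAt Fen (fen x) x := by
  have hd : (1 + 4*x^2) ≠ 0 := ne_of_gt (denom_pos x)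
  have hnum : HasDerivAt (fun y : ℝ => -32*y^3 - 24*y) (-96*x^2 - 24) x := by
    have := ((hasDerivAt_pow 3 x).const_mul (-32:ℝ)).sub ((hasDerivAt_id x).const_mul 24)
    refine this.congr_deriv ?_
    norm_num
    ring
  have hden : HasDerivAt (fun y : ℝ => (1 + 4*y^2)^2) (2*(1+4*x^2)*(8*x)) x := by
    have := (hasDerivAt_denom x).pow 2
    refine HasDerivAt.congr_deriv this ?_
    norm_num
  have := hnum.div hden (pow_ne_zero 2 hd)
  refine this.congr_deriv ?_
  rw [fen]
  field_simp
  ring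

lemma hasDerivAt_Gm (x : ℝ) : HasDerivAt Gm (gm x) x := by
  have hd : (1 + 4*x^2) ≠ 0 := ne_of_gt (denom_pos x)
  have hnum : HasDerivAt (fun y : ℝ => -8*y) (-8:ℝ) x := by
    simpa using (hasDerivAt_id x).const_mul (-8:ℝ)
  have := hnum.div (hasDerivAt_denom x) hd
  refine this.congr_deriv ?_
  rw [gm]
  field_simp
  ring

lemma tendsto_Fen_atTop : Tendsto Fen atTop (𝓝 0) := by
  have h3 : Tendsto (fun x : ℝ => (3:ℝ)/x) atTop (𝓝 0) :=
    tendsto_const_nhds.div_atTop tendsto_id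
  have hneg : Tendsto (fun x : ℝ => (-3:ℝ)/x) atTop (𝓝 0) :=
    tendsto_const_nhds.div_atTop tendsto_id
  apply tendsto_of_tendsto_of_tendsto_of_le_of_le' hneg h3
  · filter_upwards [eventually_ge_atTop (1:ℝ)] with x hx
    rw [Fen, div_le_div_iff₀ (by positivity) (by positivity)]
    nlinarith [sq_nonneg x, sq_nonneg (x^2)]
  · filter_upwards [eventually_ge_atTop (1:ℝ)] with x hx
    rw [Fen, div_le_div_iff₀ (by positivity) (by positivity)]
    nlinarith [sq_nonneg x, sq_nonneg (x^2)]

lemma Fen_odd (x : ℝ) : Fen (-x) = -Fen x := by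
  rw [Fen, Fen]
  ring

lemma tendsto_Fen_atBot : Tendsto Fen atBot (𝓝 0) := by
  have := (tendsto_Fen_atTop.comp tendsto_neg_atBot_atTop).neg
  rw [neg_zero] at this
  refine this.congr fun x => ?_
  simp [Function.comp, Fen_odd]

lemma tendsto_Gm_atTop : Tendsto Gm atTop (𝓝 0) := by
  have h3 : Tendsto (fun x : ℝ => (3:ℝ)/x) atTop (𝓝 0) :=
    tendsto_const_nhds.div_atTop tendsto_id
  have hneg : Tendsto (fun x : ℝ => (-3:ℝ)/x) atTop (𝓝 0) :=
    tendsto_const_nhds.div_atTop tendsto_id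
  apply tendsto_of_tendsto_of_tendsto_of_le_of_le' hneg h3
  · filter_upwards [eventually_ge_atTop (1:ℝ)] with x hx
    rw [Gm, div_le_div_iff₀ (by positivity) (by positivity)]
    nlinarith [sq_nonneg x]
  · filter_upwards [eventually_ge_atTop (1:ℝ)] with x hx
    rw [Gm, div_le_div_iff₀ (by positivity) (by positivity)]
    nlinarith [sq_nonneg x]

lemma Gm_odd (x : ℝ) : Gm (-x) = -Gm x := by
  rw [Gm, Gm]
  ring

lemma tendsto_Gm_atBot : Tendsto Gm atBot (𝓝 0) := by
  have := (tendsto_Gm_atTop.comp tendsto_neg_atBot_atTop).neg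
  rw [neg_zero] at this
  refine this.congr fun x => ?_
  simp [Function.comp, Gm_odd]

lemma integrable_of_bound {f : ℝ → ℝ} (hf : Continuous f) (C : ℝ)
    (h : ∀ x, |f x| ≤ C / (1 + x ^ 2)) : Integrable f := by
  have hg : Integrable (fun x : ℝ => C * (1 + x ^ 2)⁻¹) := integrable_inv_one_add_sq.const_mul C
  apply hg.mono' hf.aestronglyMeasurable
  filter_upwards with x
  rw [Real.norm_eq_abs]
  simpa [div_eq_mul_inv] using h x

lemma integrable_fen : Integrable fen := by
  apply integrable_of_bound (f := fen) ?_ 24 ?_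
  · exact (by continuity : Continuous fun x : ℝ => 128*x^4 + 192*x^2 - 24).div
      (by continuity) (fun x => pow_ne_zero 3 (ne_of_gt (denom_pos x)))
  · intro x
    rw [abs_le]
    constructor
    · rw [fen, neg_div' , div_le_div_iff₀ (by positivity) (by positivity)]
      nlinarith [sq_nonneg x, sq_nonneg (x^2), sq_nonneg (x^3)]
    · rw [fen, div_le_div_iff₀ (by positivity) (by positivity)]
      nlinarith [sq_nonneg x, sq_nonneg (x^2), sq_nonneg (x^3)]

lemma integrable_gm : Integrable gm := by
  apply integrable_of_bound (f := gm) ?_ 8 ?_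
  · exact (by continuity : Continuous fun x : ℝ => 32*x^2 - 8).div
      (by continuity) (fun x => pow_ne_zero 2 (ne_of_gt (denom_pos x)))
  · intro x
    rw [abs_le]
    constructor
    · rw [gm, neg_div', div_le_div_iff₀ (by positivity) (by positivity)]
      nlinarith [sq_nonneg x, sq_nonneg (x^2)]
    · rw [gm, div_le_div_iff₀ (by positivity) (by positivity)]
      nlinarith [sq_nonneg x, sq_nonneg (x^2)]

lemma integrable_rr : Integrable rr := by
  apply integrable_of_bound (f := rr) ?_ 16 ?_
  · exact (by continuity : Continuous fun x : ℝ => -32*x).div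
      (by continuity) (fun x => pow_ne_zero 2 (ne_of_gt (denom_pos x)))
  · intro x
    rw [abs_le]
    constructor
    · rw [rr, neg_div', div_le_div_iff₀ (by positivity) (by positivity)]
      nlinarith [sq_nonneg x, sq_nonneg (x^2), sq_nonneg (x - 1), sq_nonneg (x + 1),
        sq_nonneg (4*x^2 - x), sq_nonneg (4*x^2 + x)]
    · rw [rr, div_le_div_iff₀ (by positivity) (by positivity)]
      nlinarith [sq_nonneg x, sq_nonneg (x^2), sq_nonneg (x - 1), sq_nonneg (x + 1),
        sq_nonneg (4*x^2 - x), sq_nonneg (4*x^2 + x)]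

lemma integral_fen : ∫ x : ℝ, fen x = 0 := by
  have := integral_of_hasDerivAt_of_tendsto hasDerivAt_Fen integrable_fen
    tendsto_Fen_atBot tendsto_Fen_atTop
  simpa using this

lemma integral_gm : ∫ x : ℝ, gm x = 0 := by
  have := integral_of_hasDerivAt_of_tendsto hasDerivAt_Gm integrable_gm
    tendsto_Gm_atBot tendsto_Gm_atTop
  simpa using this

/-- **Vanishing energy and momentum of the lump wave.**
Let `L₁(ξ) = √(8/(1+4ξ²))`, `θ(ξ) = ξ − (1/4)∫_0^ξ L₁²` and `ψ_L = L₁ e^{iθ}`. Then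
the energy `∫ (|ψ_L'|² + (1/2)|ψ_L|² Im(conj(ψ_L) ψ_L'))` and the momentum
`Im ∫ conj(ψ_L) ψ_L'` both vanish. -/
theorem lump_zero_energy_momentum
    (L θ : ℝ → ℝ) (ψ : ℝ → ℂ)
    (hL : ∀ ξ : ℝ, L ξ = Real.sqrt (8 / (1 + 4 * ξ ^ 2)))
    (hθ : ∀ ξ : ℝ, θ ξ = ξ - (1 / 4) * ∫ η in (0:ℝ)..ξ, (L η) ^ 2)
    (hψ : ∀ ξ : ℝ, ψ ξ = (L ξ : ℂ) * Complex.exp (Complex.I * (θ ξ : ℂ))) :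
    (∫ ξ : ℝ, ((‖deriv ψ ξ‖) ^ 2
      + (1 / 2) * (‖ψ ξ‖) ^ 2 * ((starRingEnd ℂ) (ψ ξ) * deriv ψ ξ).im)) = 0 ∧
    (∫ ξ : ℝ, (starRingEnd ℂ) (ψ ξ) * deriv ψ ξ).im = 0 := by
  have hLf : L = lump := funext hL
  subst hLf
  have hψf : ψ = fun ξ => (lump ξ : ℂ) * Complex.exp (Complex.I * (θ ξ : ℂ)) := funext hψ
  subst hψf
  have hderiv : ∀ x : ℝ, deriv (fun ξ => (lump ξ : ℂ) * Complex.exp (Complex.I * (θ ξ : ℂ))) x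
      = ((lder x : ℂ) + Complex.I * (td x : ℂ) * (lump x : ℂ)) *
        Complex.exp (Complex.I * (θ x : ℂ)) := fun x => (hasDerivAt_psi θ hθ x).deriv
  have hcm : ∀ x : ℝ, (starRingEnd ℂ) ((lump x : ℂ) * Complex.exp (Complex.I * (θ x : ℂ))) *
      deriv (fun ξ => (lump ξ : ℂ) * Complex.exp (Complex.I * (θ ξ : ℂ))) x
      = ((rr x : ℝ) : ℂ) + ((gm x : ℝ) : ℂ) * Complex.I := by
    intro x
    rw [hderiv x, key_conj_mul, re_pointwise, momentum_pointwise]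
  have habs2 : ∀ x : ℝ,
      (‖deriv (fun ξ => (lump ξ : ℂ) * Complex.exp (Complex.I * (θ ξ : ℂ))) x‖) ^ 2
      = (lder x) ^ 2 + (td x) ^ 2 * (lump x) ^ 2 := by
    intro x
    rw [hderiv x, key_abs_sq]
  have habs : ∀ x : ℝ, ‖(lump x : ℂ) * Complex.exp (Complex.I * (θ x : ℂ))‖
      = lump x := fun x => key_abs _ _ (lump_pos x).le
  constructor
  · have hE : ∀ ξ : ℝ,
        ((‖deriv (fun ξ => (lump ξ : ℂ) * Complex.exp (Complex.I * (θ ξ : ℂ))) ξ‖) ^ 2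
        + (1 / 2) * (‖(lump ξ : ℂ) * Complex.exp (Complex.I * (θ ξ : ℂ))‖) ^ 2 *
          ((starRingEnd ℂ) ((lump ξ : ℂ) * Complex.exp (Complex.I * (θ ξ : ℂ))) *
            deriv (fun ξ => (lump ξ : ℂ) * Complex.exp (Complex.I * (θ ξ : ℂ))) ξ).im)
        = fen ξ := by
      intro x
      rw [habs2 x, habs x, hcm x]
      have him : (((rr x : ℝ) : ℂ) + ((gm x : ℝ) : ℂ) * Complex.I).im = gm x := by simp
      rw [him, ← momentum_pointwise x]
      exact energy_pointwise x
    calc (∫ ξ : ℝ, _) = ∫ ξ : ℝ, fen ξ := by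
          exact integral_congr_ae (Filter.Eventually.of_forall hE)
      _ = 0 := integral_fen
  · have hInt : Integrable (fun ξ : ℝ =>
        (starRingEnd ℂ) ((lump ξ : ℂ) * Complex.exp (Complex.I * (θ ξ : ℂ))) *
          deriv (fun ξ => (lump ξ : ℂ) * Complex.exp (Complex.I * (θ ξ : ℂ))) ξ) := by
      rw [funext hcm]
      exact integrable_rr.ofReal.add (integrable_gm.ofReal.mul_const Complex.I)
    beta_reduce
    rw [funext hcm]
    have hra : Integrable (fun x : ℝ => ((rr x : ℝ) : ℂ)) := integrable_rr.ofReal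
    have hgb : Integrable (fun x : ℝ => ((gm x : ℝ) : ℂ) * Complex.I) :=
      integrable_gm.ofReal.mul_const Complex.I
    rw [integral_add hra hgb, integral_mul_const]
    rw [show (∫ x : ℝ, ((rr x : ℝ) : ℂ)) = ((∫ x : ℝ, rr x : ℝ) : ℂ) from integral_ofReal,
      show (∫ x : ℝ, ((gm x : ℝ) : ℂ)) = ((∫ x : ℝ, gm x : ℝ) : ℂ) from integral_ofReal,
      integral_gm]
    simp
end

section
/- Let σ ≥ 1 and a, b ∈ ℝ, let Q : ℝ → ℂ be C², and define S(ξ) = Q(ξ) · exp{ i ( a ξ²/4 − b ξ/2 ) }. Then Q solves the blow-up profile equation Q''(ξ) − Q(ξ) + i a ( Q(ξ)/(2σ) + ξ Q'(ξ) ) − i b Q'(ξ) + i |Q(ξ)|^{2σ} Q'(ξ) = 0 if and only if S solves S''(ξ) − ( 1 − (1/4)(a ξ − b)² ) S(ξ) − i ( a(σ−1)/(2σ) ) S(ξ) + (1/2)(a ξ − b) |S(ξ)|^{2σ} S(ξ) + i |S(ξ)|^{2σ} S'(ξ) = 0. -/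
/-- **Quadratic phase transformation of the blow-up profile equation.**
For `σ ≥ 1`, `a, b ∈ ℝ`, a `C²` function `Q` and `S(ξ) = Q(ξ) e^{i(aξ²/4 − bξ/2)}`,
`Q` solves `Q'' − Q + i a (Q/(2σ) + ξ Q') − i b Q' + i |Q|^{2σ} Q' = 0` if and only if `S`
solves `S'' − (1 − ¼(aξ−b)²) S − i (a(σ−1)/(2σ)) S + ½(aξ−b)|S|^{2σ} S + i |S|^{2σ} S' = 0`. -/
theorem blowup_profile_quadratic_phase (σ a b : ℝ) (hσ : 1 ≤ σ)
    (Q S : ℝ → ℂ) (hQ : ContDiff ℝ 2 Q)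
    (hS : ∀ ξ : ℝ, S ξ = Q ξ *
      Complex.exp (Complex.I * ((a * ξ ^ 2 / 4 - b * ξ / 2 : ℝ) : ℂ))) :
    (∀ ξ : ℝ,
      deriv (deriv Q) ξ - Q ξ
        + Complex.I * (a : ℂ) * (Q ξ / (2 * σ) + (ξ : ℂ) * deriv Q ξ)
        - Complex.I * (b : ℂ) * deriv Q ξ
        + Complex.I * ((‖Q ξ‖ ^ (2 * σ) : ℝ) : ℂ) * deriv Q ξ = 0) ↔
    (∀ ξ : ℝ,
      deriv (deriv S) ξ - (1 - (1 / 4) * ((a * ξ - b : ℝ) : ℂ) ^ 2) * S ξ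
        - Complex.I * ((a * (σ - 1) / (2 * σ) : ℝ) : ℂ) * S ξ
        + (1 / 2) * ((a * ξ - b : ℝ) : ℂ) * ((‖S ξ‖ ^ (2 * σ) : ℝ) : ℂ) * S ξ
        + Complex.I * ((‖S ξ‖ ^ (2 * σ) : ℝ) : ℂ) * deriv S ξ = 0) := by
  have hσ0 : (σ : ℂ) ≠ 0 := by
    exact_mod_cast (by linarith : σ ≠ 0)
  have hQd : Differentiable ℝ Q := hQ.differentiable (by norm_num)
  have hQ1 : ContDiff ℝ 1 (deriv Q) := by
    have h := (contDiff_succ_iff_deriv (n := 1)).mp (by exact_mod_cast hQ)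
    exact h.2.2
  have hQ'd : Differentiable ℝ (deriv Q) := hQ1.differentiable (by norm_num)
  set E : ℝ → ℂ := fun ξ => Complex.exp (Complex.I * ((a * ξ ^ 2 / 4 - b * ξ / 2 : ℝ) : ℂ)) with hE_def
  have hEne : ∀ ξ, E ξ ≠ 0 := fun ξ => Complex.exp_ne_zero _
  set c : ℝ → ℂ := fun ξ => (((a * ξ - b) / 2 : ℝ) : ℂ) with hc_def
  have hcD : ∀ ξ : ℝ, HasDerivAt c (((a / 2 : ℝ) : ℂ)) ξ := by
    intro ξ
    have h : HasDerivAt (fun x : ℝ => (a * x - b) / 2) (a / 2) ξ := by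
      have := (((hasDerivAt_id ξ).const_mul a).sub_const b).div_const 2
      simpa using this
    exact h.ofReal_comp
  have hED : ∀ ξ : ℝ, HasDerivAt E (Complex.I * c ξ * E ξ) ξ := by
    intro ξ
    have h : HasDerivAt (fun x : ℝ => (a * x ^ 2 / 4 - b * x / 2 : ℝ)) ((a * ξ - b) / 2) ξ := by
      have : HasDerivAt (fun x : ℝ => (a * x ^ 2 / 4 - b * x / 2 : ℝ)) _ ξ := (((hasDerivAt_pow 2 ξ).const_mul a).div_const 4).sub
        (((hasDerivAt_id ξ).const_mul b).div_const 2)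
      convert this using 1
      ring
    have h2 : HasDerivAt (fun x : ℝ => Complex.I * ((a * x ^ 2 / 4 - b * x / 2 : ℝ) : ℂ))
        (Complex.I * c ξ) ξ := h.ofReal_comp.const_mul Complex.I
    have := h2.cexp
    simpa [hE_def, mul_comm] using this
  have hSD : ∀ ξ : ℝ, HasDerivAt S ((deriv Q ξ + Complex.I * c ξ * Q ξ) * E ξ) ξ := by
    intro ξ
    have hfun : S = fun ξ => Q ξ * E ξ := funext fun ξ => hS ξ
    rw [hfun]
    have : HasDerivAt (fun ξ => Q ξ * E ξ) _ ξ := (hQd ξ).hasDerivAt.mul (hED ξ)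
    convert this using 1
    ring
  have hdS : deriv S = fun ξ => (deriv Q ξ + Complex.I * c ξ * Q ξ) * E ξ :=
    funext fun ξ => (hSD ξ).deriv
  have hdS2 : ∀ ξ : ℝ, deriv (deriv S) ξ =
      (deriv (deriv Q) ξ + Complex.I * ((a / 2 : ℝ) : ℂ) * Q ξ
        + Complex.I * c ξ * deriv Q ξ) * E ξ
      + (deriv Q ξ + Complex.I * c ξ * Q ξ) * (Complex.I * c ξ * E ξ) := by
    intro ξ
    rw [hdS]
    have h1 : HasDerivAt (fun ξ : ℝ => deriv Q ξ + Complex.I * c ξ * Q ξ)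
        (deriv (deriv Q) ξ + (Complex.I * ((a / 2 : ℝ) : ℂ) * Q ξ
          + Complex.I * c ξ * deriv Q ξ)) ξ := by
      exact (hQ'd ξ).hasDerivAt.add
        ((((hcD ξ).const_mul Complex.I).mul (hQd ξ).hasDerivAt).congr_deriv (by ring))
    have : HasDerivAt (fun ξ => (deriv Q ξ + Complex.I * c ξ * Q ξ) * E ξ) _ ξ := h1.mul (hED ξ)
    rw [this.deriv]
    ring
  -- key identity
  have key : ∀ ξ : ℝ,
      deriv (deriv S) ξ - (1 - (1 / 4) * ((a * ξ - b : ℝ) : ℂ) ^ 2) * S ξ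
        - Complex.I * ((a * (σ - 1) / (2 * σ) : ℝ) : ℂ) * S ξ
        + (1 / 2) * ((a * ξ - b : ℝ) : ℂ) * ((‖S ξ‖ ^ (2 * σ) : ℝ) : ℂ) * S ξ
        + Complex.I * ((‖S ξ‖ ^ (2 * σ) : ℝ) : ℂ) * deriv S ξ
      = E ξ * (deriv (deriv Q) ξ - Q ξ
        + Complex.I * (a : ℂ) * (Q ξ / (2 * σ) + (ξ : ℂ) * deriv Q ξ)
        - Complex.I * (b : ℂ) * deriv Q ξ
        + Complex.I * ((‖Q ξ‖ ^ (2 * σ) : ℝ) : ℂ) * deriv Q ξ) := by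
    intro ξ
    have habs : ‖S ξ‖ = ‖Q ξ‖ := by
      rw [hS ξ, norm_mul, mul_comm Complex.I, Complex.norm_exp_ofReal_mul_I, mul_one]
    have hdS' : ∀ ξ, deriv S ξ = (deriv Q ξ + Complex.I * c ξ * Q ξ) * E ξ := fun ξ => (hSD ξ).deriv
    have e1 : ((a * (σ - 1) / (2 * σ) : ℝ) : ℂ) = (a : ℂ) / 2 - (a : ℂ) / (2 * (σ : ℂ)) := by
      push_cast
      field_simp
    rw [hdS2 ξ, habs, hdS' ξ, hS ξ, e1]
    simp only [hc_def, hE_def]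
    push_cast
    ring_nf
    simp only [Complex.I_sq]
    ring
  constructor
  · intro h ξ
    rw [key ξ, h ξ, mul_zero]
  · intro h ξ
    have := h ξ
    rw [key ξ] at this
    rcases mul_eq_zero.mp this with h' | h'
    · exact absurd h' (hEne ξ)
    · exact h'
end

section
/- Let σ ≥ 1 and a, b ∈ ℝ, let P : ℝ → ℂ be C², and define Q(ξ) = P(ξ) · exp{ −i ( a ξ²/4 − b ξ/2 + (1/(2σ+2)) ∫_0^ξ |P(η)|^{2σ} dη ) } (note |Q| = |P|). Then Q solves the blow-up profile equation Q''(ξ) − Q(ξ) + i a ( Q(ξ)/(2σ) + ξ Q'(ξ) ) − i b Q'(ξ) + i |Q(ξ)|^{2σ} Q'(ξ) = 0 if and only if P solves P''(ξ) + ( (1/4)(a ξ − b)² − 1 ) P(ξ) − i ( a(σ−1)/(2σ) ) P(ξ) + (1/2)(a ξ − b) |P(ξ)|^{2σ} P(ξ) + ((2σ+1)/(2σ+2)²) |P(ξ)|^{4σ} P(ξ) − ( σ/(σ+1) ) |P(ξ)|^{2(σ−1)} Im( conj(P(ξ)) P'(ξ) ) P(ξ) = 0. -/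
namespace BlowupAux

noncomputable def rr (P : ℝ → ℂ) (t : ℝ) : ℝ := ((starRingEnd ℂ) (P t) * deriv P t).re
noncomputable def mm (P : ℝ → ℂ) (t : ℝ) : ℝ := ((starRingEnd ℂ) (P t) * deriv P t).im
noncomputable def nn (P : ℝ → ℂ) (t : ℝ) : ℝ := Complex.normSq (P t)
noncomputable def Mf (σ : ℝ) (P : ℝ → ℂ) (t : ℝ) : ℝ := ‖P t‖ ^ (2*σ)
noncomputable def θf (σ a b : ℝ) (P : ℝ → ℂ) (t : ℝ) : ℝ :=
  a * t ^ 2 / 4 - b * t / 2 + (1 / (2 * σ + 2)) * ∫ η in (0:ℝ)..t, ‖P η‖ ^ (2 * σ)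
noncomputable def φf (σ a b : ℝ) (P : ℝ → ℂ) (t : ℝ) : ℝ :=
  a * t / 2 - b / 2 + (1 / (2 * σ + 2)) * Mf σ P t
noncomputable def ψf (σ a : ℝ) (P : ℝ → ℂ) (t : ℝ) : ℝ :=
  a / 2 + (1 / (2 * σ + 2)) * (2 * σ * (nn P t ^ (σ - 1)) * rr P t)

lemma nn_nonneg (P : ℝ → ℂ) (t : ℝ) : 0 ≤ nn P t := Complex.normSq_nonneg _

lemma hasDeriv_nn (P : ℝ → ℂ) (t : ℝ) (h : DifferentiableAt ℝ P t) :
    HasDerivAt (nn P) (2 * rr P t) t := by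
  have hPd := h.hasDerivAt
  have hc : HasDerivAt (fun s => (starRingEnd ℂ) (P s)) ((starRingEnd ℂ) (deriv P t)) t := hPd.star
  have hm := hc.mul hPd
  have hre := Complex.reCLM.hasFDerivAt.comp_hasDerivAt t hm
  have hfun : (fun s => Complex.reCLM ((starRingEnd ℂ) (P s) * P s)) = nn P := by
    funext s
    simp [nn, Complex.normSq_apply, Complex.mul_re]
  simp only [Function.comp_def, Pi.mul_apply] at hre
  rw [hfun] at hre
  refine hre.congr_deriv ?_
  simp [rr, Complex.mul_re]
  ring

lemma MEq (σ : ℝ) (P : ℝ → ℂ) (t : ℝ) : Mf σ P t = nn P t ^ σ := by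
  unfold Mf nn
  rw [Real.rpow_mul (norm_nonneg _), show (2:ℝ) = ((2:ℕ):ℝ) by norm_num,
    Real.rpow_natCast, Complex.sq_norm]

lemma NEq (σ : ℝ) (P : ℝ → ℂ) (t : ℝ) :
    ‖P t‖ ^ (2*(σ-1)) = nn P t ^ (σ-1) := by
  unfold nn
  rw [Real.rpow_mul (norm_nonneg _), show (2:ℝ) = ((2:ℕ):ℝ) by norm_num,
    Real.rpow_natCast, Complex.sq_norm]

lemma M4Eq (σ : ℝ) (hσ : 1 ≤ σ) (P : ℝ → ℂ) (t : ℝ) :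
    ‖P t‖ ^ (4*σ) = Mf σ P t * Mf σ P t := by
  rw [show (4*σ) = 2*σ + 2*σ by ring,
    Real.rpow_add' (norm_nonneg _) (by nlinarith)]
  rfl

lemma hasDeriv_M (σ : ℝ) (hσ : 1 ≤ σ) (P : ℝ → ℂ) (t : ℝ) (h : DifferentiableAt ℝ P t) :
    HasDerivAt (Mf σ P) (σ * nn P t ^ (σ - 1) * (2 * rr P t)) t := by
  have h1 : HasDerivAt (fun x : ℝ => x ^ σ) (σ * nn P t ^ (σ - 1)) (nn P t) :=
    Real.hasDerivAt_rpow_const (Or.inr hσ)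
  have h2 := h1.comp t (hasDeriv_nn P t h)
  simp only [Function.comp_def] at h2
  have hfun : (fun s => nn P s ^ σ) = Mf σ P := by
    funext s; rw [MEq]
  rw [hfun] at h2
  exact h2

lemma contM (σ : ℝ) (hσ : 1 ≤ σ) (P : ℝ → ℂ) (hP1 : Differentiable ℝ P) :
    Continuous (fun t => ‖P t‖ ^ (2*σ)) := by
  have : Differentiable ℝ (Mf σ P) := fun t => (hasDeriv_M σ hσ P t (hP1 t)).differentiableAt
  exact this.continuous

lemma hasDeriv_θ (σ a b : ℝ) (hσ : 1 ≤ σ) (P : ℝ → ℂ) (hP1 : Differentiable ℝ P) (t : ℝ) :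
    HasDerivAt (θf σ a b P) (φf σ a b P t) t := by
  have hMc := contM σ hσ P hP1
  have hpoly : HasDerivAt (fun s : ℝ => a * s ^ 2 / 4 - b * s / 2) (a * t / 2 - b / 2) t := by
    have h1 : HasDerivAt (fun s : ℝ => s ^ 2) (2*t) t := by simpa using hasDerivAt_pow 2 t
    have := ((h1.const_mul a).div_const 4).sub (((hasDerivAt_id t).const_mul b).div_const 2)
    refine this.congr_deriv ?_
    ring
  have hint : HasDerivAt (fun s => ∫ η in (0:ℝ)..s, ‖P η‖ ^ (2*σ))
      (‖P t‖ ^ (2*σ)) t :=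
    intervalIntegral.integral_hasDerivAt_right (hMc.intervalIntegrable _ _)
      (hMc.stronglyMeasurableAtFilter _ _) hMc.continuousAt
  exact hpoly.add (hint.const_mul (1/(2*σ+2)))

lemma hasDeriv_φ (σ a b : ℝ) (hσ : 1 ≤ σ) (P : ℝ → ℂ) (hP1 : Differentiable ℝ P) (t : ℝ) :
    HasDerivAt (φf σ a b P) (ψf σ a P t) t := by
  have hpoly : HasDerivAt (fun s : ℝ => a * s / 2 - b / 2) (a / 2) t := by
    have := (((hasDerivAt_id t).const_mul a).div_const 2).sub_const (b/2)
    refine this.congr_deriv ?_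
    ring
  have h2 := (hasDeriv_M σ hσ P t (hP1 t)).const_mul (1/(2*σ+2))
  have := hpoly.add h2
  refine this.congr_deriv ?_
  unfold ψf
  ring

lemma keyMP (σ : ℝ) (hσ : 1 ≤ σ) (P : ℝ → ℂ) (t : ℝ) :
    ((Mf σ P t : ℝ) : ℂ) * deriv P t
      = ((‖P t‖ ^ (2*(σ-1)) : ℝ) : ℂ) * (((rr P t : ℝ):ℂ) + ((mm P t : ℝ):ℂ) * Complex.I) * P t := by
  rw [MEq, NEq]
  have hre : ((rr P t : ℝ):ℂ) + ((mm P t : ℝ):ℂ) * Complex.I = (starRingEnd ℂ) (P t) * deriv P t := by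
    unfold rr mm; exact Complex.re_add_im _
  rw [hre]
  have h1 : (starRingEnd ℂ) (P t) * P t = ((nn P t : ℝ) : ℂ) := by
    unfold nn
    rw [mul_comm, Complex.mul_conj]
  have h2 : nn P t ^ (σ-1) * nn P t = nn P t ^ σ := by
    nth_rewrite 2 [show σ = (σ-1) + 1 by ring]
    rw [Real.rpow_add' (nn_nonneg P t) (by simp; intro h; linarith), Real.rpow_one]
  have h2C : ((nn P t ^ (σ-1) : ℝ):ℂ) * ((nn P t : ℝ):ℂ) = ((nn P t ^ σ : ℝ):ℂ) := by
    exact_mod_cast congrArg (fun x : ℝ => (x:ℂ)) h2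
  linear_combination (-((nn P t ^ (σ-1) : ℝ):ℂ) * deriv P t) * h1 - (deriv P t) * h2C

lemma alg_key (σ a b ξ M N r m x4 φ φd : ℝ) (p p' p'' E d1 d2 q : ℂ)
    (hσ0 : σ ≠ 0) (hs1 : (2:ℝ)*σ+2 ≠ 0) (hs2 : σ+1 ≠ 0)
    (hx4 : x4 = M*M)
    (hφ : φ = a*ξ/2 - b/2 + (1/(2*σ+2))*M)
    (hφd : φd = a/2 + (1/(2*σ+2))*(2*σ*N*r))
    (hMP : (M:ℂ) * p' = (N:ℂ) * ((r:ℂ) + (m:ℂ)*Complex.I) * p)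
    (hq : q = p * E)
    (hd1 : d1 = (p' - Complex.I*(φ:ℂ)*p) * E)
    (hd2 : d2 = (p'' - (Complex.I*(φd:ℂ)*p + Complex.I*(φ:ℂ)*p'))*E
        + (p' - Complex.I*(φ:ℂ)*p) * (E * (-Complex.I*(φ:ℂ)))) :
    d2 - q
      + Complex.I*(a:ℂ)*(q / (2*(σ:ℂ)) + (ξ:ℂ)*d1)
      - Complex.I*(b:ℂ)*d1
      + Complex.I*((M : ℝ):ℂ)*d1
    = E * (p'' + ((1/4)*((a*ξ-b : ℝ):ℂ)^2 - 1)*p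
        - Complex.I*((a*(σ-1)/(2*σ) : ℝ):ℂ)*p
        + (1/2)*((a*ξ-b:ℝ):ℂ)*((M:ℝ):ℂ)*p
        + (((2*σ+1)/(2*σ+2)^2 : ℝ):ℂ)*((x4:ℝ):ℂ)*p
        - ((σ/(σ+1) : ℝ):ℂ)*((N:ℝ):ℂ)*((m:ℝ):ℂ)*p) := by
  have hσC : (σ:ℂ) ≠ 0 := by exact_mod_cast hσ0
  have hs1C : (2:ℂ)*(σ:ℂ)+2 ≠ 0 := by exact_mod_cast hs1
  have hs2C : (σ:ℂ)+1 ≠ 0 := by exact_mod_cast hs2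
  have hA : ((a:ℂ))*((σ:ℂ)-1)/(2*σ) = (a:ℂ)/2 - (a:ℂ)/(2*σ) := by
    field_simp
  have hB : (2*(σ:ℂ)+1)/(2*(σ:ℂ)+2)^2 = (1/(2*(σ:ℂ)+2))*(1 - 1/(2*(σ:ℂ)+2)) := by
    field_simp
    ring
  have hC : ((σ:ℂ))/((σ:ℂ)+1) = 1 - 2*(1/(2*(σ:ℂ)+2)) := by
    field_simp
    ring
  have h4 : 2*(σ:ℂ)*(1/(2*(σ:ℂ)+2)) = 1 - 2*(1/(2*(σ:ℂ)+2)) := by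
    field_simp
    ring
  subst hx4 hφ hφd hq hd1 hd2
  push_cast
  set c : ℂ := 1/(2*(σ:ℂ)+2) with hc
  set φC : ℂ := (a:ℂ)*ξ/2 - b/2 + c*M with hφC
  linear_combination
    (Complex.I*(1-2*c)*E) * hMP
    + (Complex.I*p*E) * hA
    - ((M:ℂ)*M*p*E) * hB
    + ((N:ℂ)*m*p*E) * hC
    - (Complex.I*(N:ℂ)*r*p*E) * h4
    + ((φC^2 - (a:ℂ)*ξ*φC + (b:ℂ)*φC - (M:ℂ)*φC)*p*E + (1-2*c)*(N:ℂ)*m*p*E) * Complex.I_sq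

end BlowupAux

open BlowupAux

/-- **Phase–amplitude transformation of the blow-up profile equation.**
For `σ ≥ 1`, `a, b ∈ ℝ`, a `C²` function `P` and
`Q(ξ) = P(ξ) exp(−i(aξ²/4 − bξ/2 + (1/(2σ+2))∫_0^ξ |P|^{2σ}))` (so `|Q| = |P|`),
`Q` solves the blow-up profile equation if and only if `P` solves
`P'' + (¼(aξ−b)² − 1)P − i(a(σ−1)/(2σ))P + ½(aξ−b)|P|^{2σ}P
  + ((2σ+1)/(2σ+2)²)|P|^{4σ}P − (σ/(σ+1))|P|^{2(σ−1)} Im(conj(P) P') P = 0`. -/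
theorem blowup_profile_P_equation (σ a b : ℝ) (hσ : 1 ≤ σ)
    (P Q : ℝ → ℂ) (hP : ContDiff ℝ 2 P)
    (hQ : ∀ ξ : ℝ, Q ξ = P ξ *
      Complex.exp (-Complex.I * ((a * ξ ^ 2 / 4 - b * ξ / 2
        + (1 / (2 * σ + 2)) * ∫ η in (0:ℝ)..ξ, (‖P η‖) ^ (2 * σ) : ℝ) : ℂ))) :
    (∀ ξ : ℝ,
      deriv (deriv Q) ξ - Q ξ
        + Complex.I * (a : ℂ) * (Q ξ / (2 * σ) + (ξ : ℂ) * deriv Q ξ)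
        - Complex.I * (b : ℂ) * deriv Q ξ
        + Complex.I * (((‖Q ξ‖) ^ (2 * σ) : ℝ) : ℂ) * deriv Q ξ = 0) ↔
    (∀ ξ : ℝ,
      deriv (deriv P) ξ + ((1 / 4) * ((a * ξ - b : ℝ) : ℂ) ^ 2 - 1) * P ξ
        - Complex.I * ((a * (σ - 1) / (2 * σ) : ℝ) : ℂ) * P ξ
        + (1 / 2) * ((a * ξ - b : ℝ) : ℂ) * (((‖P ξ‖) ^ (2 * σ) : ℝ) : ℂ) * P ξ
        + (((2 * σ + 1) / (2 * σ + 2) ^ 2 : ℝ) : ℂ) *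
            (((‖P ξ‖) ^ (4 * σ) : ℝ) : ℂ) * P ξ
        - ((σ / (σ + 1) : ℝ) : ℂ) * (((‖P ξ‖) ^ (2 * (σ - 1)) : ℝ) : ℂ) *
            ((((starRingEnd ℂ) (P ξ) * deriv P ξ).im : ℝ) : ℂ) * P ξ = 0) := by
  have hσ0 : σ ≠ 0 := by linarith
  have hs1 : (2:ℝ)*σ+2 ≠ 0 := by linarith
  have hs2 : σ+1 ≠ 0 := by linarith
  have hP1 : Differentiable ℝ P := hP.differentiable two_ne_zero
  have hP2 : Differentiable ℝ (deriv P) := by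
    have h := contDiff_succ_iff_deriv (n := 1) (𝕜 := ℝ) (f := P)
    rw [show ((1:WithTop ℕ∞)+1) = 2 by norm_num] at h
    exact (h.mp hP).2.2.differentiable one_ne_zero
  have hQfun : Q = fun t => P t * Complex.exp (-Complex.I * ((θf σ a b P t : ℝ) : ℂ)) := by
    funext t; rw [hQ t]; rfl
  have hE : ∀ t : ℝ, HasDerivAt (fun s => Complex.exp (-Complex.I * ((θf σ a b P s : ℝ):ℂ)))
      (Complex.exp (-Complex.I * ((θf σ a b P t : ℝ):ℂ)) * (-Complex.I * ((φf σ a b P t : ℝ):ℂ))) t := by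
    intro t
    have h0 : HasDerivAt (fun s => ((θf σ a b P s : ℝ):ℂ)) ((φf σ a b P t : ℝ):ℂ) t :=
      (hasDeriv_θ σ a b hσ P hP1 t).ofReal_comp
    exact (h0.const_mul (-Complex.I)).cexp
  have hQd : ∀ t : ℝ, HasDerivAt Q ((deriv P t - Complex.I*((φf σ a b P t : ℝ):ℂ)*P t)
      * Complex.exp (-Complex.I*((θf σ a b P t : ℝ):ℂ))) t := by
    intro t
    rw [hQfun]
    have := (hP1 t).hasDerivAt.mul (hE t)
    refine this.congr_deriv ?_
    ring
  have hQd1 : deriv Q = fun t => (deriv P t - Complex.I*((φf σ a b P t:ℝ):ℂ)*P t)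
      * Complex.exp (-Complex.I*((θf σ a b P t:ℝ):ℂ)) := funext fun t => (hQd t).deriv
  have hIφP : ∀ t : ℝ, HasDerivAt (fun s => Complex.I*((φf σ a b P s:ℝ):ℂ)*P s)
      (Complex.I*((ψf σ a P t:ℝ):ℂ)*P t + Complex.I*((φf σ a b P t:ℝ):ℂ)*deriv P t) t := by
    intro t
    have h0 : HasDerivAt (fun s => ((φf σ a b P s:ℝ):ℂ)) ((ψf σ a P t:ℝ):ℂ) t :=
      (hasDeriv_φ σ a b hσ P hP1 t).ofReal_comp
    exact (h0.const_mul Complex.I).mul (hP1 t).hasDerivAt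
  have hQd2 : ∀ t : ℝ, HasDerivAt (deriv Q)
      ((deriv (deriv P) t
          - (Complex.I*((ψf σ a P t:ℝ):ℂ)*P t + Complex.I*((φf σ a b P t:ℝ):ℂ)*deriv P t))
          * Complex.exp (-Complex.I*((θf σ a b P t:ℝ):ℂ))
        + (deriv P t - Complex.I*((φf σ a b P t:ℝ):ℂ)*P t)
          * (Complex.exp (-Complex.I*((θf σ a b P t:ℝ):ℂ)) * (-Complex.I*((φf σ a b P t:ℝ):ℂ)))) t := by
    intro t
    rw [hQd1]
    exact ((hP2 t).hasDerivAt.sub (hIφP t)).mul (hE t)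
  have habsQ : ∀ t : ℝ, ‖Q t‖ = ‖P t‖ := by
    intro t
    rw [hQfun]
    simp only
    rw [norm_mul]
    have h5 : -Complex.I * ((θf σ a b P t:ℝ):ℂ) = ((-θf σ a b P t : ℝ):ℂ) * Complex.I := by
      push_cast; ring
    rw [h5, Complex.norm_exp_ofReal_mul_I, mul_one]
  have key : ∀ ξ : ℝ,
      deriv (deriv Q) ξ - Q ξ
        + Complex.I * (a : ℂ) * (Q ξ / (2 * σ) + (ξ : ℂ) * deriv Q ξ)
        - Complex.I * (b : ℂ) * deriv Q ξ
        + Complex.I * (((‖Q ξ‖) ^ (2 * σ) : ℝ) : ℂ) * deriv Q ξ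
      = Complex.exp (-Complex.I*((θf σ a b P ξ:ℝ):ℂ)) *
        (deriv (deriv P) ξ + ((1 / 4) * ((a * ξ - b : ℝ) : ℂ) ^ 2 - 1) * P ξ
        - Complex.I * ((a * (σ - 1) / (2 * σ) : ℝ) : ℂ) * P ξ
        + (1 / 2) * ((a * ξ - b : ℝ) : ℂ) * (((‖P ξ‖) ^ (2 * σ) : ℝ) : ℂ) * P ξ
        + (((2 * σ + 1) / (2 * σ + 2) ^ 2 : ℝ) : ℂ) *
            (((‖P ξ‖) ^ (4 * σ) : ℝ) : ℂ) * P ξ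
        - ((σ / (σ + 1) : ℝ) : ℂ) * (((‖P ξ‖) ^ (2 * (σ - 1)) : ℝ) : ℂ) *
            ((((starRingEnd ℂ) (P ξ) * deriv P ξ).im : ℝ) : ℂ) * P ξ) := by
    intro ξ
    rw [show ‖Q ξ‖ = ‖P ξ‖ from habsQ ξ]
    exact alg_key σ a b ξ (‖P ξ‖^(2*σ)) (‖P ξ‖^(2*(σ-1)))
      (rr P ξ) (mm P ξ) (‖P ξ‖^(4*σ)) (φf σ a b P ξ) (ψf σ a P ξ)
      (P ξ) (deriv P ξ) (deriv (deriv P) ξ)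
      (Complex.exp (-Complex.I*((θf σ a b P ξ:ℝ):ℂ)))
      (deriv Q ξ) (deriv (deriv Q) ξ) (Q ξ)
      hσ0 hs1 hs2 (M4Eq σ hσ P ξ) rfl
      (by unfold ψf; rw [NEq])
      (keyMP σ hσ P ξ) (hQ ξ) ((hQd ξ).deriv) ((hQd2 ξ).deriv)
  constructor
  · intro h ξ
    have h2 := h ξ
    rw [key ξ] at h2
    rcases mul_eq_zero.mp h2 with h3 | h3
    · exact absurd h3 (Complex.exp_ne_zero _)
    · exact h3
  · intro h ξ
    rw [key ξ, h ξ, mul_zero]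
end
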